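/- arXiv:2403.11654 — 6 statements merged into one kernel-verified Lean document; each statement's English description precedes it below -/
import Mathlib

section
/- For every subset E ⊆ ℕ, all integers M, N with 1 ≤ M ≤ N, and every integer n ≥ 1, one has d_n(E(M) \ E⟨N⟩) ≤ M/n + M/N, where E⟨N⟩ := {k ∈ ℕ : there exist l, m ∈ E with l ≤ k < m and m − l ≤ N}. -/
open MeasureTheory Filter Topology
open scoped ENNReal

noncomputable section

namespace SRB

/-- `d_n(E) = #(E ∩ [1,n]) / n`. -/
def densN (E : Set ℕ) (n : ℕ) : ℝ := (Nat.card ↥(E ∩ Set.Icc 1 n) : ℝ) / n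

/-- upper asymptotic density -/
def upperDens (E : Set ℕ) : ℝ := Filter.atTop.limsup fun n => densN E n

/-- lower asymptotic density -/
def lowerDens (E : Set ℕ) : ℝ := Filter.atTop.liminf fun n => densN E n

/-- `E(M) = {k | k + m ∈ E for some 1 ≤ m ≤ M}`. -/
def EM (E : Set ℕ) (M : ℕ) : Set ℕ := {k | ∃ m, 1 ≤ m ∧ m ≤ M ∧ k + m ∈ E}

/-- the set of `δ`-hyperbolic times of the sequence `a`. -/
def Ehyp (a : ℕ → ℝ) (δ : ℝ) : Set ℕ :=
  {p | 1 ≤ p ∧ ∀ k < p, ((p : ℝ) - k) * δ ≤ ∑ l ∈ Finset.Ico k p, a l}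

/-- the set of `(δ,M)`-weakly hyperbolic times of the sequence `a`. -/
def Fweak (a : ℕ → ℝ) (δ : ℝ) (M : ℕ) : Set ℕ :=
  {p | 1 ≤ p ∧ ∀ k, p - M ≤ k → k < p → ((p : ℝ) - k) * δ ≤ ∑ l ∈ Finset.Ico k p, a l}

/-- the connected component (maximal interval of integers) of `p` in `S`. -/
def component (S : Set ℕ) (p : ℕ) : Set ℕ :=
  {q | q ∈ S ∧ ∀ r, min p q ≤ r → r ≤ max p q → r ∈ S}

/-- the set of `(δ,M)`-mildly hyperbolic times of the sequence `a`. -/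
def Gmild (a : ℕ → ℝ) (δ : ℝ) (M : ℕ) : Set ℕ :=
  {p | p ∈ EM (Fweak a δ M) M ∧
    ∀ k ∈ component (EM (Fweak a δ M) M) p, k < p →
      ((p : ℝ) - k) * (δ / 2) ≤ ∑ l ∈ Finset.Ico k p, a l}

variable {X : Type*} [MetricSpace X] [CompactSpace X] [MeasurableSpace X] [BorelSpace X]

/-- the sequence `Φ_x = (φ(Tⁿ x))ₙ`. -/
def Phi (T : X ≃ₜ X) (φ : X → ℝ) (x : X) : ℕ → ℝ := fun n => φ ((⇑T)^[n] x)

/-- the Birkhoff sum `φ_n(x)`. -/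
def birk (T : X ≃ₜ X) (φ : X → ℝ) (x : X) (n : ℕ) : ℝ := ∑ k ∈ Finset.range n, φ ((⇑T)^[k] x)

/-- `φ̄_*(x) = limsup_n φ_n(x)/n`. -/
def phiStar (T : X ≃ₜ X) (φ : X → ℝ) (x : X) : ℝ :=
  Filter.atTop.limsup fun n => birk T φ x n / n

/-- the empirical measure `μ_x^n`. -/
def emp (T : X ≃ₜ X) (x : X) (n : ℕ) : Measure X :=
  (n : ℝ≥0∞)⁻¹ • ∑ k ∈ Finset.range n, Measure.dirac ((⇑T)^[k] x)

open scoped Classical in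
/-- the empirical measure on a set of times, `μ_x^n[E]`. -/
def empOn (T : X ≃ₜ X) (x : X) (n : ℕ) (E : Set ℕ) : Measure X :=
  (n : ℝ≥0∞)⁻¹ • ∑ k ∈ Finset.range n, if k ∈ E then Measure.dirac ((⇑T)^[k] x) else 0

/-- weak-* convergence of a family of finite measures along a filter. -/
def WeakLim (L : Filter ℕ) (μs : ℕ → Measure X) (μ : Measure X) : Prop :=
  ∀ f : C(X, ℝ), Tendsto (fun n => ∫ y, f y ∂(μs n)) L (𝓝 (∫ y, f y ∂μ))

/-- `pw(x)`: the set of weak-* limit points of the empirical measures `(μ_x^n)_{n ≥ 1}`. -/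
def pw (T : X ≃ₜ X) (x : X) : Set (Measure X) :=
  {μ | IsProbabilityMeasure μ ∧ ∃ s : ℕ → ℕ, StrictMono s ∧ (∀ j, 1 ≤ s j) ∧
    ∀ f : C(X, ℝ), Tendsto (fun j => ∫ y, f y ∂(emp T x (s j))) atTop (𝓝 (∫ y, f y ∂μ))}

/-- `underline-d_φ(x) = lim_{δ→0⁺} lim_{M→∞} d̲(E^δ_{Φ_x}(M))`; both limits being monotone
they equal the supremum. -/
def lowerDphi (T : X ≃ₜ X) (φ : X → ℝ) (x : X) : ℝ :=
  ⨆ δ : Set.Ioi (0 : ℝ), ⨆ M : ℕ, lowerDens (EM (Ehyp (Phi T φ x) δ.1) M)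

/-- `d̄⁺ = lim_{δ→0⁺} limsup_M d̄(F_a^{δ,M}(M))`. -/
def upDplus (a : ℕ → ℝ) : ℝ :=
  ⨆ δ : Set.Ioi (0 : ℝ), Filter.atTop.limsup fun M => upperDens (EM (Fweak a δ.1 M) M)

/-- `d̄⁻ = lim_{δ→0⁺} liminf_M d̄(F_a^{δ,M}(M))`. -/
def upDminus (a : ℕ → ℝ) : ℝ :=
  ⨆ δ : Set.Ioi (0 : ℝ), Filter.atTop.liminf fun M => upperDens (EM (Fweak a δ.1 M) M)

/-- static entropy of a measure w.r.t. the finite partition given by the fibers of `q`. -/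
def Hstat {ι : Type*} [Fintype ι] (μ : Measure X) (q : X → ι) : ℝ :=
  -∑ i : ι, (μ (q ⁻¹' {i})).toReal * Real.log (μ (q ⁻¹' {i})).toReal

/-- the iterated partition `P^F` as a coding map. -/
def codeIter (T : X ≃ₜ X) {ι : Type*} (p : X → ι) (F : Finset ℕ) : X → (F → ι) :=
  fun x k => p ((⇑T)^[(k : ℕ)] x)

end SRB

namespace SRB

/-- If every two distinct elements of a nonempty finset differ by at least `d+1`,
then `max - min ≥ (card - 1) * (d+1)`. -/
lemma gap_lemma (W : Finset ℕ) (hW : W.Nonempty) (d : ℕ)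
    (hgap : ∀ a ∈ W, ∀ b ∈ W, a < b → a + (d + 1) ≤ b) :
    W.min' hW + (W.card - 1) * (d + 1) ≤ W.max' hW := by
  have hkey : ∀ a ∈ W, ∀ b ∈ W, a < b →
      (a - W.min' hW) / (d + 1) + 1 ≤ (b - W.min' hW) / (d + 1) := by
    intro a ha b hb hab
    have h1 : a - W.min' hW + (d + 1) ≤ b - W.min' hW := by
      have h2 := W.min'_le a ha
      have h3 := hgap a ha b hb hab
      omega
    calc (a - W.min' hW) / (d + 1) + 1
        = (a - W.min' hW + (d + 1)) / (d + 1) :=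
          (Nat.add_div_right _ (Nat.succ_pos d)).symm
      _ ≤ _ := Nat.div_le_div_right h1
  have hcard : W.card ≤ (W.max' hW - W.min' hW) / (d + 1) + 1 := by
    have h := Finset.card_le_card_of_injOn (fun x => (x - W.min' hW) / (d + 1))
      (t := Finset.Iic ((W.max' hW - W.min' hW) / (d + 1)))
      (fun x hx => by
        simp only [Finset.mem_coe, Finset.mem_Iic]
        exact Nat.div_le_div_right (Nat.sub_le_sub_right (W.le_max' x hx) _))
      (fun a ha b hb hfab => by
        rcases lt_trichotomy a b with h | h | h
        · exact absurd hfab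
            (Nat.ne_of_lt (Nat.lt_of_lt_of_le (Nat.lt_succ_self _) (hkey a ha b hb h)))
        · exact h
        · exact absurd hfab.symm
            (Nat.ne_of_lt (Nat.lt_of_lt_of_le (Nat.lt_succ_self _) (hkey b hb a ha h))))
    simpa using h
  have h3 : (W.card - 1) * (d + 1) ≤ W.max' hW - W.min' hW := by
    have h4 : W.card - 1 ≤ (W.max' hW - W.min' hW) / (d + 1) := Nat.sub_le_of_le_add hcard
    exact (Nat.le_div_iff_mul_le (Nat.succ_pos d)).mp h4
  have h5 : W.min' hW ≤ W.max' hW := W.min'_le _ (W.max'_mem hW)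
  have := Nat.add_le_add_left h3 (W.min' hW)
  rwa [Nat.add_sub_cancel' h5] at this

/-- for every `E ⊆ ℕ`, `1 ≤ M ≤ N` and `n ≥ 1`,
`d_n(E(M) \ E⟨N⟩) ≤ M/n + M/N` where
`E⟨N⟩ = {k | ∃ l, m ∈ E, l ≤ k < m and m − l ≤ N}`. -/
theorem statement0 (E : Set ℕ) (M N n : ℕ) (hM : 1 ≤ M) (hMN : M ≤ N) (hn : 1 ≤ n) :
    densN (EM E M \ {k | ∃ l ∈ E, ∃ m ∈ E, l ≤ k ∧ k < m ∧ m - l ≤ N}) n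
      ≤ (M : ℝ) / n + (M : ℝ) / N := by
  classical
  have hN : 1 ≤ N := hM.trans hMN
  set S : Set ℕ := EM E M \ {k | ∃ l ∈ E, ∃ m ∈ E, l ≤ k ∧ k < m ∧ m - l ≤ N} with hSdef
  set T : Finset ℕ := (Finset.Icc 1 n).filter (· ∈ S) with hTdef
  have hcard : Nat.card ↥(S ∩ Set.Icc 1 n) = T.card := by
    have hset : S ∩ Set.Icc 1 n = ↑T := by
      ext k
      simp only [hTdef, Finset.coe_filter, Finset.mem_Icc, Set.mem_inter_iff,
        Set.mem_setOf_eq, Set.mem_Icc]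
      tauto
    rw [hset, Nat.card_coe_set_eq, Set.ncard_coe_finset]
  -- the minimal element of `E` beyond `k`
  set w : ℕ → ℕ := fun k => sInf (E ∩ Set.Ioi k) with hwdef
  have hw : ∀ k ∈ T, w k ∈ E ∧ k < w k ∧ w k ≤ k + M ∧ ∀ j ∈ E, k < j → w k ≤ j := by
    intro k hk
    have hkS : k ∈ S := (Finset.mem_filter.mp hk).2
    obtain ⟨m, hm1, hmM, hmE⟩ := hkS.1
    have hmemIoi : k + m ∈ Set.Ioi k := Set.mem_Ioi.mpr (by omega)
    have hne : (E ∩ Set.Ioi k).Nonempty := ⟨k + m, hmE, hmemIoi⟩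
    have hmem := Nat.sInf_mem hne
    refine ⟨hmem.1, Set.mem_Ioi.mp hmem.2, ?_, fun j hj hkj => Nat.sInf_le ⟨hj, hkj⟩⟩
    exact le_trans (Nat.sInf_le ⟨hmE, hmemIoi⟩) (by omega)
  -- distinct witnesses differ by more than N
  have hgapT : ∀ k ∈ T, ∀ k' ∈ T, w k < w k' → w k + (N + 1) ≤ w k' := by
    intro k hk k' hk' hlt
    obtain ⟨hwE, hkw, hwM, hwmin⟩ := hw k hk
    obtain ⟨hwE', hkw', hwM', hwmin'⟩ := hw k' hk'
    have hkk' : w k ≤ k' := by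
      by_contra hc
      exact absurd (hwmin' (w k) hwE (by omega)) (by omega)
    have hk'S : k' ∈ S := (Finset.mem_filter.mp hk').2
    have hnot := hk'S.2
    by_contra hc
    exact hnot ⟨w k, hwE, w k', hwE', hkk', hkw', by omega⟩
  set W : Finset ℕ := T.image w with hWdef
  have hfiber : T.card = ∑ e ∈ W, (T.filter (fun k => w k = e)).card :=
    Finset.card_eq_sum_card_fiberwise (fun k hk => Finset.mem_image_of_mem w hk)
  have hfib_card : ∀ e ∈ W, (T.filter (fun k => w k = e)).card ≤ min M (e - 1) := by
    intro e he
    have hsub : T.filter (fun k => w k = e) ⊆ Finset.Icc (max 1 (e - M)) (e - 1) := by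
      intro k hk
      obtain ⟨hkT, hke⟩ := Finset.mem_filter.mp hk
      obtain ⟨_, hkw, hwM, _⟩ := hw k hkT
      have hk1 : 1 ≤ k := (Finset.mem_Icc.mp (Finset.mem_filter.mp hkT).1).1
      rw [Finset.mem_Icc]
      omega
    have h := Finset.card_le_card hsub
    rw [Nat.card_Icc] at h
    obtain ⟨k, hkT, hke⟩ := Finset.mem_image.mp he
    have hk1 : 1 ≤ k := (Finset.mem_Icc.mp (Finset.mem_filter.mp hkT).1).1
    have hkw := (hw k hkT).2.1
    omega
  have hWrange : ∀ e ∈ W, 2 ≤ e ∧ e ≤ n + M := by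
    intro e he
    obtain ⟨k, hkT, hke⟩ := Finset.mem_image.mp he
    obtain ⟨hk1, hkn⟩ := Finset.mem_Icc.mp (Finset.mem_filter.mp hkT).1
    obtain ⟨_, hkw, hwM, _⟩ := hw k hkT
    omega
  -- key counting inequality
  have key : (T.card : ℝ) * N ≤ M * N + M * n := by
    rcases T.eq_empty_or_nonempty with hTe | hTne
    · rw [hTe]
      simp
      positivity
    · have hWne : W.Nonempty := hTne.image w
      set e1 := W.min' hWne with he1def
      set s := W.card - 1 with hsdef
      have hr1 : 1 ≤ W.card := Finset.card_pos.mpr hWne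
      have hgapW : ∀ a ∈ W, ∀ b ∈ W, a < b → a + (N + 1) ≤ b := by
        intro a ha b hb hab
        obtain ⟨k, hkT, hka⟩ := Finset.mem_image.mp ha
        obtain ⟨k', hk'T, hkb⟩ := Finset.mem_image.mp hb
        subst hka; subst hkb
        exact hgapT k hkT k' hk'T hab
      have hgap := gap_lemma W hWne N hgapW
      have hmaxle : W.max' hWne ≤ n + M := (hWrange _ (W.max'_mem hWne)).2
      have he12 : 2 ≤ e1 := (hWrange _ (W.min'_mem hWne)).1
      have F3 : e1 + (s * N + s) ≤ n + M := by
        have h := le_trans hgap hmaxle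
        have hss : W.card - 1 = s := rfl
        rw [hss, Nat.mul_succ] at h
        exact h
      -- counting
      have hcount : T.card ≤ min M (e1 - 1) + s * M := by
        rw [hfiber, ← Finset.add_sum_erase W _ (W.min'_mem hWne)]
        have h1 := hfib_card e1 (W.min'_mem hWne)
        have h2 : ∑ e ∈ W.erase e1, (T.filter (fun k => w k = e)).card ≤ s * M := by
          calc ∑ e ∈ W.erase e1, (T.filter (fun k => w k = e)).card
              ≤ ∑ _e ∈ W.erase e1, M :=
                Finset.sum_le_sum (fun e he =>
                  le_trans (hfib_card e (Finset.mem_of_mem_erase he)) (min_le_left _ _))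
            _ = s * M := by
                rw [Finset.sum_const, Finset.card_erase_of_mem (W.min'_mem hWne), smul_eq_mul]
        exact add_le_add h1 h2
      have F1 : T.card ≤ M + s * M := le_trans hcount (by omega)
      have F2 : T.card + 1 ≤ e1 + s * M := by
        have : min M (e1 - 1) ≤ e1 - 1 := min_le_right _ _
        omega
      rcases le_or_gt (s * N) n with hsn | hsn
      · -- few witnesses
        have h1 : T.card * N ≤ (M + s * M) * N := Nat.mul_le_mul_right _ F1
        have h2 : (M + s * M) * N = M * N + M * (s * N) := by ring
        have h3 : M * (s * N) ≤ M * n := Nat.mul_le_mul le_rfl hsn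
        have h4 : T.card * N ≤ M * N + M * n := by
          calc T.card * N ≤ M * N + M * (s * N) := by rw [← h2]; exact h1
            _ ≤ M * N + M * n := Nat.add_le_add_left h3 _
        exact_mod_cast h4
      · -- many witnesses: gap argument
        have f2 : (T.card : ℝ) + 1 ≤ e1 + s * M := by exact_mod_cast F2
        have f3 : (e1 : ℝ) + (s * N + s) ≤ n + M := by exact_mod_cast F3
        have f5 : (n : ℝ) + 1 ≤ s * N := by exact_mod_cast hsn
        have f6 : (M : ℝ) ≤ N := by exact_mod_cast hMN
        have f7 : (1 : ℝ) ≤ M := by exact_mod_cast hM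
        have f8 : (1 : ℝ) ≤ n := by exact_mod_cast hn
        have f9 : (1 : ℝ) ≤ N := by exact_mod_cast hN
        have f4 : (2 : ℝ) ≤ e1 := by exact_mod_cast he12
        have hcn : (T.card : ℝ) ≤ n + M - 1 - (s : ℝ) * N - s + s * M := by linarith
        have t1 : (0 : ℝ) ≤ ((s : ℝ) * N - (n + 1)) * ((N : ℝ) + 1 - M) :=
          mul_nonneg (by linarith) (by linarith)
        have t2 : (T.card : ℝ) * N ≤ (n + M - 1 - (s : ℝ) * N - s + s * M) * N :=
          mul_le_mul_of_nonneg_right hcn (by linarith)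
        nlinarith [t1, t2]
  have hn0 : (0 : ℝ) < n := by exact_mod_cast hn
  have hN0 : (0 : ℝ) < N := by exact_mod_cast hN
  rw [densN, hcard, div_add_div _ _ (ne_of_gt hn0) (ne_of_gt hN0),
    div_le_div_iff₀ hn0 (by positivity)]
  nlinarith [mul_le_mul_of_nonneg_right key hn0.le]

end SRB
end
end

section
/- (Pliss lemma.) Let N ≥ 1 be an integer, let a_0, …, a_{N−1} be real numbers, and let A, δ, δ' be real numbers with a_k ≤ A for all k, 0 < δ' < δ ≤ A, and Σ_{0≤k<N} a_k ≥ δN. Then the number of integers p with 1 ≤ p ≤ N such that Σ_{k≤l<p} a_l ≥ (p−k)δ' for every integer k with 0 ≤ k ≤ p−1 is at least N·(δ−δ')/(A−δ'). -/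
open MeasureTheory Filter Topology
open scoped ENNReal

noncomputable section

/-!
Put `S n = ∑_{l<n} (a_l - δ')`. A time `p ∈ [1, N]` is good exactly when `S k ≤ S p` for all
`k < p`, i.e. when `p` is a leader of `S`. Each step raises `S` by at most `A - δ'`, so the
running maximum of `S` grows only at leaders and by at most `A - δ'` there; hence
`N (δ - δ') ≤ S N ≤ (A - δ') · #leaders`.
-/

namespace SRB

open Finset

theorem le_mul_card_leaders {S : ℕ → ℝ} {c : ℝ} (hc : 0 ≤ c) (h0 : S 0 = 0) (N : ℕ)
    (hstep : ∀ n < N, S (n + 1) ≤ S n + c) :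
    ∀ j ≤ N, S j ≤ c * #{p ∈ Icc 1 N | ∀ k < p, S k ≤ S p} := by
  classical
  induction N with
  | zero => intro j hj; simp [Nat.le_zero.mp hj, h0]
  | succ N ih =>
    intro j hj
    have ih' := ih fun n hn => hstep n (by omega)
    set L := {p ∈ Icc 1 N | ∀ k < p, S k ≤ S p}
    have hmono : c * #L ≤ c * #{p ∈ Icc 1 (N + 1) | ∀ k < p, S k ≤ S p} := by
      gcongr
      exact filter_subset_filter _ (Icc_subset_Icc_right N.le_succ)
    rcases Nat.lt_succ_iff_lt_or_eq.mp (Nat.lt_succ_of_le hj) with hj | rfl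
    · exact (ih' j (by omega)).trans hmono
    by_cases hlead : ∀ k < N + 1, S k ≤ S (N + 1)
    · have hcard : #{p ∈ Icc 1 (N + 1) | ∀ k < p, S k ≤ S p} = #L + 1 := by
        rw [← insert_Icc_right_eq_Icc_add_one (by omega), filter_insert, if_pos hlead,
          card_insert_of_notMem (by simp)]
      rw [hcard]
      push_cast
      linarith [ih' N le_rfl, hstep N (by omega)]
    · push Not at hlead
      obtain ⟨k, hk, hlt⟩ := hlead
      linarith [ih' k (by omega)]

theorem sum_range_sub_const_le_iff (a : ℕ → ℝ) (c : ℝ) {k p : ℕ} (h : k ≤ p) :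
    ∑ l ∈ range k, (a l - c) ≤ ∑ l ∈ range p, (a l - c) ↔
      ((p : ℝ) - k) * c ≤ ∑ l ∈ Ico k p, a l := by
  rw [← sub_nonneg, ← sum_Ico_eq_sub _ h, sum_sub_distrib, sum_const, Nat.card_Ico,
    nsmul_eq_mul, Nat.cast_sub h, sub_nonneg]

theorem statement1_general (N : ℕ) (a : ℕ → ℝ) (A δ δ' : ℝ)
    (hA : ∀ k < N, a k ≤ A) (hδ'δ : δ' < δ) (hδA : δ ≤ A)
    (hsum : (N : ℝ) * δ ≤ ∑ k ∈ Finset.range N, a k) :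
    (N : ℝ) * (δ - δ') / (A - δ') ≤
      (Nat.card {p : ℕ | 1 ≤ p ∧ p ≤ N ∧
        ∀ k < p, ((p : ℝ) - k) * δ' ≤ ∑ l ∈ Finset.Ico k p, a l} : ℝ) := by
  classical
  set S : ℕ → ℝ := fun n => ∑ l ∈ range n, (a l - δ') with hS
  have hleaders : {p : ℕ | 1 ≤ p ∧ p ≤ N ∧
      ∀ k < p, ((p : ℝ) - k) * δ' ≤ ∑ l ∈ Finset.Ico k p, a l} =
      ↑{p ∈ Icc 1 N | ∀ k < p, S k ≤ S p} := by
    ext p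
    simp only [coe_filter, mem_Icc, Set.mem_ofPred_eq, and_assoc]
    exact and_congr_right fun _ => and_congr_right fun _ =>
      forall₂_congr fun k hk => (sum_range_sub_const_le_iff a δ' hk.le).symm
  have hSN : N * (δ - δ') ≤ S N := by
    simp only [hS, sum_sub_distrib, sum_const, card_range, nsmul_eq_mul]
    linarith
  have hbound := le_mul_card_leaders (S := S) (sub_nonneg.2 (hδ'δ.le.trans hδA))
    (by simp [hS]) N (fun n hn => by simp only [hS, sum_range_succ]; linarith [hA n hn]) N le_rfl
  rw [hleaders, Nat.card_coe_set_eq, Set.ncard_coe_finset, div_le_iff₀ (by linarith)]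
  linarith

/-- Pliss lemma: if `a_k ≤ A` for `k < N`, `0 < δ' < δ ≤ A` and
`∑_{k<N} a_k ≥ δN`, then the number of `1 ≤ p ≤ N` such that
`∑_{k≤l<p} a_l ≥ (p−k)δ'` for all `0 ≤ k ≤ p−1` is at least `N(δ−δ')/(A−δ')`. -/
theorem statement1 (N : ℕ) (hN : 1 ≤ N) (a : ℕ → ℝ) (A δ δ' : ℝ)
    (hA : ∀ k < N, a k ≤ A) (hδ'pos : 0 < δ') (hδ'δ : δ' < δ) (hδA : δ ≤ A)
    (hsum : (N : ℝ) * δ ≤ ∑ k ∈ Finset.range N, a k) :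
    (N : ℝ) * (δ - δ') / (A - δ') ≤
      (Nat.card {p : ℕ | 1 ≤ p ∧ p ≤ N ∧
        ∀ k < p, ((p : ℝ) - k) * δ' ≤ ∑ l ∈ Finset.Ico k p, a l} : ℝ) :=
  statement1_general N a A δ δ' hA hδ'δ hδA hsum

end SRB
end
end

section
/- Let a = (a_n)_{n∈ℕ} be a bounded real sequence and let δ > 0. Then there exist α > 0 and M₀ ∈ ℕ, depending only on δ and ‖a‖_∞ := sup_n |a_n|, such that for every integer M ≥ M₀ one has d̄(G_a^{δ,M}) ≥ α · d̄(F_a^{δ,M}(M)). -/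
open MeasureTheory Filter Topology
open scoped ENNReal

noncomputable section

namespace SRB

open scoped Classical

/-- partial sums -/
private def Sb (a : ℕ → ℝ) (n : ℕ) : ℝ := ∑ l ∈ Finset.range n, a l

private lemma sum_Ico_eq_Sb (a : ℕ → ℝ) {k p : ℕ} (h : k ≤ p) :
    ∑ l ∈ Finset.Ico k p, a l = Sb a p - Sb a k :=
  Finset.sum_Ico_eq_sub a h

private lemma mem_E_of_F {a : ℕ → ℝ} {δ : ℝ} {M p : ℕ} (hp : p ∈ Fweak a δ M)
    {k : ℕ} (h1 : p - M ≤ k) (h2 : k < p) : k ∈ EM (Fweak a δ M) M := by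
  exact ⟨p - k, by omega, by omega, by
    have : k + (p - k) = p := by omega
    rw [this]; exact hp⟩

private lemma slope_of_F {a : ℕ → ℝ} {δ : ℝ} {M p : ℕ} (hp : p ∈ Fweak a δ M)
    {k : ℕ} (h1 : p - M ≤ k) (h2 : k < p) : ((p : ℝ) - k) * δ ≤ Sb a p - Sb a k := by
  have := hp.2 k h1 h2
  rwa [sum_Ico_eq_Sb a h2.le] at this

private lemma top_mem_F {a : ℕ → ℝ} {δ : ℝ} {M t : ℕ} (ht : t ∈ EM (Fweak a δ M) M)
    (ht' : t + 1 ∉ EM (Fweak a δ M) M) : t + 1 ∈ Fweak a δ M := by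
  obtain ⟨m, hm1, hmM, hF⟩ := ht
  rcases eq_or_lt_of_le hm1 with h | h
  · rwa [← h] at hF
  · exact absurd (mem_E_of_F hF (by omega) (by omega)) ht'

/-- the chain lemma: from any interval contained in `E` one can reach a weakly hyperbolic
time just above the interval, with `δ`-slope from every point of the interval. -/
private lemma chain_aux {a : ℕ → ℝ} {δ : ℝ} {M : ℕ} :
    ∀ d t k, t - k ≤ d → k ≤ t → (∀ r, k ≤ r → r ≤ t → r ∈ EM (Fweak a δ M) M) →
      ∃ p, t < p ∧ p ≤ t + M ∧ p ∈ Fweak a δ M ∧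
        ∀ q, k ≤ q → q < p → ((p : ℝ) - q) * δ ≤ Sb a p - Sb a q := by
  intro d
  induction d with
  | zero =>
    intro t k hd hkt hE
    have hk : k = t := by omega
    subst hk
    obtain ⟨m, hm1, hmM, hF⟩ := hE k le_rfl le_rfl
    refine ⟨k + m, by omega, by omega, hF, ?_⟩
    intro q hq hq'
    exact slope_of_F hF (by omega) hq'
  | succ d ih =>
    intro t k hd hkt hE
    obtain ⟨m, hm1, hmM, hF⟩ := hE k le_rfl hkt
    by_cases hcase : t < k + m
    · refine ⟨k + m, hcase, by omega, hF, ?_⟩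
      intro q hq hq'
      exact slope_of_F hF (by omega) hq'
    · push_neg at hcase
      obtain ⟨p, hp1, hp2, hpF, hps⟩ := ih t (k + m) (by omega) hcase
        (fun r hr hr' => hE r (by omega) hr')
      refine ⟨p, hp1, hp2, hpF, ?_⟩
      intro q hq hq'
      by_cases hq2 : k + m ≤ q
      · exact hps q hq2 hq'
      · push_neg at hq2
        have s1 : ((k + m : ℕ) - (q : ℝ)) * δ ≤ Sb a (k + m) - Sb a q :=
          slope_of_F hF (by omega) hq2
        have s2 : ((p : ℝ) - (k + m : ℕ)) * δ ≤ Sb a p - Sb a (k + m) :=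
          hps (k + m) le_rfl (by omega)
        nlinarith [s1, s2]

/-- Pliss-type record counting: the rise of `f` on `[s,u]` is at most the number of
record points times the maximal step. -/
private lemma pliss_records (f : ℕ → ℝ) (Cb : ℝ) (hCb : 0 < Cb)
    (hstep : ∀ u, f (u + 1) - f u ≤ Cb) (s : ℕ) :
    ∀ u, s ≤ u → ∀ q, s ≤ q → q ≤ u →
      f q - f s ≤ (((Finset.Ioc s u).filter
        (fun p => ∀ k, s ≤ k → k < p → f k ≤ f p)).card : ℝ) * Cb := by
  intro u hu
  induction u, hu using Nat.le_induction with
  | base =>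
    intro q hq hq'
    have hqs : q = s := le_antisymm hq' hq
    rw [hqs]
    have h0 : (0:ℝ) ≤ (((Finset.Ioc s s).filter
        (fun p => ∀ k, s ≤ k → k < p → f k ≤ f p)).card : ℝ) * Cb := by positivity
    linarith
  | succ u hu ih =>
    intro q hq hq'
    set R : Finset ℕ := (Finset.Ioc s u).filter
        (fun p => ∀ k, s ≤ k → k < p → f k ≤ f p) with hR
    set R' : Finset ℕ := (Finset.Ioc s (u+1)).filter
        (fun p => ∀ k, s ≤ k → k < p → f k ≤ f p) with hR'
    have hsub : R ⊆ R' :=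
      Finset.filter_subset_filter _ (Finset.Ioc_subset_Ioc_right (by omega))
    have hmono : (R.card : ℝ) ≤ R'.card := by
      exact_mod_cast Finset.card_le_card hsub
    rcases Nat.lt_succ_iff_lt_or_eq.mp (Nat.lt_succ_of_le hq') with h | h
    · calc f q - f s ≤ (R.card : ℝ) * Cb := ih q hq (by omega)
        _ ≤ (R'.card : ℝ) * Cb := by nlinarith
    · subst h
      by_cases hrec : ∀ k, s ≤ k → k < u + 1 → f k ≤ f (u + 1)
      · have hmem : u + 1 ∈ R' := by
          rw [hR', Finset.mem_filter]
          exact ⟨Finset.mem_Ioc.mpr ⟨by omega, le_rfl⟩, hrec⟩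
        have hsub2 : R ⊆ R'.erase (u + 1) := by
          intro x hx
          refine Finset.mem_erase.mpr ⟨?_, hsub hx⟩
          have := (Finset.mem_filter.mp hx).1
          have := Finset.mem_Ioc.mp this
          omega
        have hcard : R.card + 1 ≤ R'.card := by
          have h1 : R.card ≤ (R'.erase (u + 1)).card := Finset.card_le_card hsub2
          have h2 : (R'.erase (u + 1)).card = R'.card - 1 :=
            Finset.card_erase_of_mem hmem
          have h3 : 1 ≤ R'.card := Finset.card_pos.mpr ⟨u + 1, hmem⟩
          omega
        have hcardR : (R.card : ℝ) + 1 ≤ (R'.card : ℝ) := by exact_mod_cast hcard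
        have ihu : f u - f s ≤ (R.card : ℝ) * Cb := ih u hu le_rfl
        have hst := hstep u
        nlinarith
      · push_neg at hrec
        obtain ⟨k, hk1, hk2, hk3⟩ := hrec
        have hku : k ≤ u := by omega
        have ihk : f k - f s ≤ (R.card : ℝ) * Cb := ih k hk1 hku
        nlinarith

/-- mild-time count in a finite component `[s,t]` of `E`. -/
private lemma comp_count_fin {a : ℕ → ℝ} {δ : ℝ} {M : ℕ} (hδ : 0 < δ)
    {Cb : ℝ} (hCb : 0 < Cb) (hstepa : ∀ l, a l - δ / 2 ≤ Cb)
    {s t : ℕ} (hst : s ≤ t)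
    (hE : ∀ r, s ≤ r → r ≤ t → r ∈ EM (Fweak a δ M) M)
    (htop : t + 1 ∉ EM (Fweak a δ M) M)
    (hbot : s = 0 ∨ (s - 1) ∉ EM (Fweak a δ M) M) :
    (δ / 2) * ((t : ℝ) + 1 - s) ≤
      ((((Finset.Ioc s t).filter (· ∈ Gmild a δ M)).card : ℝ) + 1) * Cb := by
  obtain ⟨p, hp1, hp2, hpF, hps⟩ := chain_aux (t - s) t s le_rfl hst hE
  have hpt : p = t + 1 := by
    by_contra hne
    have hgt : t + 1 < p := by omega
    exact htop (mem_E_of_F hpF (by omega) hgt)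
  subst hpt
  set f : ℕ → ℝ := fun q => Sb a q - q * (δ / 2) with hf
  have hstep : ∀ u, f (u + 1) - f u ≤ Cb := by
    intro u
    have : Sb a (u + 1) = Sb a u + a u := Finset.sum_range_succ a u
    simp only [hf, this]
    push_cast
    have := hstepa u
    linarith
  have hpl := pliss_records f Cb hCb hstep s (t + 1) (by omega) (t + 1) (by omega) le_rfl
  have hslope : ((t : ℝ) + 1 - s) * δ ≤ Sb a (t + 1) - Sb a s := by
    have := hps s le_rfl (by omega)
    push_cast at this ⊢
    linarith
  have hrise : (δ / 2) * ((t : ℝ) + 1 - s) ≤ f (t + 1) - f s := by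
    simp only [hf]
    push_cast
    nlinarith
  set R : Finset ℕ := (Finset.Ioc s (t + 1)).filter
      (fun p => ∀ k, s ≤ k → k < p → f k ≤ f p) with hR
  have hsubG : R ⊆ insert (t + 1) ((Finset.Ioc s t).filter (· ∈ Gmild a δ M)) := by
    intro x hx
    obtain ⟨hx1, hx2⟩ := Finset.mem_filter.mp hx
    obtain ⟨hxs, hxt⟩ := Finset.mem_Ioc.mp hx1
    by_cases hxtop : x = t + 1
    · exact Finset.mem_insert.mpr (Or.inl hxtop)
    · refine Finset.mem_insert.mpr (Or.inr ?_)
      refine Finset.mem_filter.mpr ⟨Finset.mem_Ioc.mpr ⟨hxs, by omega⟩, ?_⟩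
      refine ⟨hE x (by omega) (by omega), ?_⟩
      intro k hk hklt
      obtain ⟨hkE, hintv⟩ := hk
      have hks : s ≤ k := by
        by_contra hks
        push_neg at hks
        rcases hbot with h0 | hsE
        · omega
        · exact hsE (hintv (s - 1) (by omega) (by omega))
      have hrec := hx2 k hks hklt
      rw [sum_Ico_eq_Sb a hklt.le]
      simp only [hf] at hrec
      have hcast : (k : ℝ) ≤ x := by exact_mod_cast hklt.le
      linarith
  have hcards : (R.card : ℝ) ≤
      (((Finset.Ioc s t).filter (· ∈ Gmild a δ M)).card : ℝ) + 1 := by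
    have h1 : R.card ≤ (insert (t + 1) ((Finset.Ioc s t).filter (· ∈ Gmild a δ M))).card :=
      Finset.card_le_card hsubG
    have h2 := Finset.card_insert_le (t + 1) ((Finset.Ioc s t).filter (· ∈ Gmild a δ M))
    exact_mod_cast le_trans h1 h2
  have hfin : (R.card : ℝ) * Cb ≤
      ((((Finset.Ioc s t).filter (· ∈ Gmild a δ M)).card : ℝ) + 1) * Cb :=
    mul_le_mul_of_nonneg_right hcards hCb.le
  exact le_trans (le_trans hrise hpl) hfin

/-- mild-time count in an infinite component `[s,∞)` of `E`. -/
private lemma comp_count_inf {a : ℕ → ℝ} {δ : ℝ} {M : ℕ} (hδ : 0 < δ)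
    {Cb : ℝ} (hCb : 0 < Cb) (hstepa : ∀ l, a l - δ / 2 ≤ Cb)
    {s : ℕ} (hE : ∀ r, s ≤ r → r ∈ EM (Fweak a δ M) M)
    (hbot : s = 0 ∨ (s - 1) ∉ EM (Fweak a δ M) M) :
    ∀ t, s ≤ t → ∃ p, t < p ∧
      (δ / 2) * ((p : ℝ) - s) ≤ (((Finset.Ioc s p).filter (· ∈ Gmild a δ M)).card : ℝ) * Cb := by
  intro t hst
  obtain ⟨p, hp1, hp2, hpF, hps⟩ := chain_aux (t - s) t s le_rfl hst (fun r hr _ => hE r hr)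
  refine ⟨p, hp1, ?_⟩
  set f : ℕ → ℝ := fun q => Sb a q - q * (δ / 2) with hf
  have hstep : ∀ u, f (u + 1) - f u ≤ Cb := by
    intro u
    have : Sb a (u + 1) = Sb a u + a u := Finset.sum_range_succ a u
    simp only [hf, this]
    push_cast
    have := hstepa u
    linarith
  have hsp : s < p := by omega
  have hpl := pliss_records f Cb hCb hstep s p (by omega) p (by omega) le_rfl
  have hslope : ((p : ℝ) - s) * δ ≤ Sb a p - Sb a s := hps s le_rfl hsp
  have hrise : (δ / 2) * ((p : ℝ) - s) ≤ f p - f s := by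
    simp only [hf]
    have hcast : (s : ℝ) ≤ p := by exact_mod_cast hsp.le
    nlinarith
  set R : Finset ℕ := (Finset.Ioc s p).filter
      (fun q => ∀ k, s ≤ k → k < q → f k ≤ f q) with hR
  have hsubG : R ⊆ (Finset.Ioc s p).filter (· ∈ Gmild a δ M) := by
    intro x hx
    obtain ⟨hx1, hx2⟩ := Finset.mem_filter.mp hx
    obtain ⟨hxs, hxp⟩ := Finset.mem_Ioc.mp hx1
    refine Finset.mem_filter.mpr ⟨hx1, ?_⟩
    refine ⟨hE x (by omega), ?_⟩
    intro k hk hklt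
    obtain ⟨hkE, hintv⟩ := hk
    have hks : s ≤ k := by
      by_contra hks
      push_neg at hks
      rcases hbot with h0 | hsE
      · omega
      · exact hsE (hintv (s - 1) (by omega) (by omega))
    have hrec := hx2 k hks hklt
    rw [sum_Ico_eq_Sb a hklt.le]
    simp only [hf] at hrec
    have hcast : (k : ℝ) ≤ x := by exact_mod_cast hklt.le
    linarith
  have hcards : (R.card : ℝ) ≤ (((Finset.Ioc s p).filter (· ∈ Gmild a δ M)).card : ℝ) := by
    exact_mod_cast Finset.card_le_card hsubG
  exact le_trans (le_trans hrise hpl) (mul_le_mul_of_nonneg_right hcards hCb.le)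

private lemma densN_eq (E : Set ℕ) (n : ℕ) :
    densN E n = (((Finset.Icc 1 n).filter (· ∈ E)).card : ℝ) / n := by
  unfold densN
  congr 2
  rw [Nat.card_coe_set_eq]
  have h : E ∩ Set.Icc 1 n = ↑((Finset.Icc 1 n).filter (· ∈ E)) := by
    ext x
    simp only [Set.mem_inter_iff, Finset.coe_filter, Set.mem_setOf_eq, Finset.mem_Icc,
      Set.mem_Icc]
    tauto
  rw [h, Set.ncard_coe_finset]

private lemma densN_nonneg (E : Set ℕ) (n : ℕ) : 0 ≤ densN E n := by
  rw [densN_eq]; positivity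

private lemma densN_le_one (E : Set ℕ) (n : ℕ) : densN E n ≤ 1 := by
  rcases Nat.eq_zero_or_pos n with h | h
  · subst h; rw [densN_eq]; simp
  · rw [densN_eq]
    rw [div_le_one (by exact_mod_cast h)]
    have h1 : ((Finset.Icc 1 n).filter (· ∈ E)).card ≤ (Finset.Icc 1 n).card :=
      Finset.card_filter_le _ _
    have h2 : (Finset.Icc 1 n).card = n := by rw [Nat.card_Icc]; omega
    exact_mod_cast h2 ▸ h1

private lemma arith_combine {δ Cb Mr A g T : ℝ} (hδ : 0 < δ) (hCb : 0 < Cb)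
    (hMbig : 1 / Mr ≤ δ / (4 * Cb)) (hA0 : 0 ≤ A)
    (hmain : δ / 2 * A ≤ Cb * g + Cb * T) (hT : T ≤ A / Mr + 1) :
    δ / (4 * Cb) * A - 1 ≤ g := by
  have h2 : A / Mr ≤ A * (δ / (4 * Cb)) := by
    calc A / Mr = A * (1 / Mr) := by ring
      _ ≤ A * (δ / (4 * Cb)) := mul_le_mul_of_nonneg_left hMbig hA0
  have h3 : Cb * T ≤ Cb * (A * (δ / (4 * Cb)) + 1) := by
    have h := le_trans hT (by linarith : A / Mr + 1 ≤ A * (δ / (4 * Cb)) + 1)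
    exact mul_le_mul_of_nonneg_left h hCb.le
  have h4 : Cb * (A * (δ / (4 * Cb))) = δ / 4 * A := by field_simp
  have h5 : δ / 4 * A ≤ Cb * g + Cb := by
    rw [mul_add, h4] at h3; linarith
  have h6 : δ / (4 * Cb) * A ≤ g + 1 := by
    rw [div_mul_eq_mul_div, div_le_iff₀ (by positivity : (0:ℝ) < 4 * Cb)]
    nlinarith
  linarith

private lemma arith_final {α nr Nr x A g : ℝ} (hα : 0 < α) (hn : 1 ≤ nr) (hnN : nr ≤ Nr)
    (hx0 : 0 ≤ x) (hxn : x ≤ nr) (hA : x + (Nr - nr) ≤ A) (hG : α * A - 1 ≤ g) :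
    α * (x / nr) - 1 / nr ≤ g / Nr := by
  have hnpos : (0:ℝ) < nr := by linarith
  have hNpos : (0:ℝ) < Nr := by linarith
  have hkey : α * x / nr ≤ α * (x + (Nr - nr)) / Nr := by
    rw [div_le_div_iff₀ hnpos hNpos]
    nlinarith [mul_nonneg (mul_nonneg hα.le (by linarith : (0:ℝ) ≤ Nr - nr))
      (by linarith : (0:ℝ) ≤ nr - x)]
  have h2a := mul_le_mul_of_nonneg_left hA hα.le
  have h2 : α * (x + (Nr - nr)) - 1 ≤ g := by linarith
  have h3 : (α * (x + (Nr - nr)) - 1) / Nr ≤ g / Nr := div_le_div_of_nonneg_right h2 hNpos.le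
  have h4 : (α * (x + (Nr - nr)) - 1) / Nr = α * (x + (Nr - nr)) / Nr - 1 / Nr := by ring
  have h5 : 1 / Nr ≤ 1 / nr := one_div_le_one_div_of_le hnpos hnN
  have h6 : α * (x / nr) = α * x / nr := by ring
  linarith

set_option maxHeartbeats 1000000 in
private lemma count_main {a : ℕ → ℝ} {δ : ℝ} {M : ℕ} (hδ : 0 < δ)
    {Cb : ℝ} (hCb : 0 < Cb) (hstepa : ∀ l, a l - δ / 2 ≤ Cb)
    (hM1 : 1 ≤ M) (hMbig : (1 : ℝ) / M ≤ δ / (4 * Cb))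
    (hfin : ∀ x, ∃ m, x ≤ m ∧ m ∉ EM (Fweak a δ M) M)
    {n : ℕ} (hn : 1 ≤ n) :
    ∃ N, n ≤ N ∧
      (δ / (4 * Cb)) * densN (EM (Fweak a δ M) M) n - 1 / n ≤ densN (Gmild a δ M) N := by
  set E : Set ℕ := EM (Fweak a δ M) M with hEdef
  set G : Set ℕ := Gmild a δ M with hGdef
  -- the "top" function
  have htopex : ∀ x : ℕ, ∃ m, x ≤ m ∧ m + 1 ∉ E := by
    intro x
    obtain ⟨m, hm1, hm2⟩ := hfin (x + 1)
    refine ⟨m - 1, by omega, ?_⟩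
    have h : m - 1 + 1 = m := by omega
    rw [h]
    exact hm2
  set tpf : ℕ → ℕ := fun x => Nat.find (htopex x) with htpf
  have htpf_le : ∀ x, x ≤ tpf x := fun x => (Nat.find_spec (htopex x)).1
  have htpf_top : ∀ x, tpf x + 1 ∉ E := fun x => (Nat.find_spec (htopex x)).2
  have htpf_min : ∀ x m, x ≤ m → m + 1 ∉ E → tpf x ≤ m := by
    intro x m h1 h2
    exact Nat.find_min' (htopex x) ⟨h1, h2⟩
  clear_value tpf
  have htpf_seg : ∀ x m, x ≤ m → m < tpf x → m + 1 ∈ E := by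
    intro x m h1 h2
    by_contra h3
    exact absurd (htpf_min x m h1 h3) (by omega)
  have hEtp : ∀ x, x ∈ E → ∀ r, x ≤ r → r ≤ tpf x → r ∈ E := by
    intro x hx r hr1
    induction r, hr1 using Nat.le_induction with
    | base => intro _; exact hx
    | succ r hr ih =>
      intro h2
      exact htpf_seg x r hr (by omega)
  -- choose N
  set N : ℕ := tpf n with hNdef
  have hnN : n ≤ N := htpf_le n
  have hNtop : N + 1 ∉ E := htpf_top n
  have hseg : ∀ m, n < m → m ≤ N → m ∈ E := by
    intro m h1 h2
    have h := htpf_seg n (m - 1) (by omega) (by omega)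
    have hm : m - 1 + 1 = m := by omega
    rwa [hm] at h
  clear_value N
  refine ⟨N, hnN, ?_⟩
  -- the bottom function
  have hQex : ∀ t, t ∈ E → ∃ s, ∀ r, s ≤ r → r ≤ t → r ∈ E := by
    intro t ht
    exact ⟨t, fun r h1 h2 => by have h : r = t := le_antisymm h2 h1; rwa [h]⟩
  set bot : ℕ → ℕ := fun t =>
    if h : ∃ s, ∀ r, s ≤ r → r ≤ t → r ∈ E then Nat.find h else 0 with hbotdef
  have hbotQ : ∀ t, t ∈ E → ∀ r, bot t ≤ r → r ≤ t → r ∈ E := by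
    intro t ht
    have h := hQex t ht
    simp only [hbotdef, dif_pos h]
    exact Nat.find_spec h
  have hbot_min : ∀ t, t ∈ E → ∀ s', (∀ r, s' ≤ r → r ≤ t → r ∈ E) → bot t ≤ s' := by
    intro t ht s' hs'
    have h := hQex t ht
    simp only [hbotdef, dif_pos h]
    exact Nat.find_min' h hs'
  clear_value bot
  have hbot_le : ∀ t, t ∈ E → bot t ≤ t := by
    intro t ht
    exact hbot_min t ht t (fun r h1 h2 => by have h : r = t := le_antisymm h2 h1; rwa [h])
  have hbot0 : ∀ t, t ∈ E → bot t = 0 ∨ (bot t - 1) ∉ E := by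
    intro t ht
    by_cases h0 : bot t = 0
    · exact Or.inl h0
    · refine Or.inr ?_
      intro hmem
      have hQ : ∀ r, bot t - 1 ≤ r → r ≤ t → r ∈ E := by
        intro r h1 h2
        rcases Nat.lt_or_ge r (bot t) with h | h
        · have hr : r = bot t - 1 := by omega
          rwa [hr]
        · exact hbotQ t ht r h h2
      have := hbot_min t ht (bot t - 1) hQ
      omega
  -- the counting sets
  set A : Finset ℕ := (Finset.Icc 1 N).filter (· ∈ E) with hA
  set An : Finset ℕ := (Finset.Icc 1 n).filter (· ∈ E) with hAn
  set GN : Finset ℕ := (Finset.Icc 1 N).filter (· ∈ G) with hGN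
  set Tops : Finset ℕ := A.filter (fun t => t + 1 ∉ E) with hTops
  set Gt : ℕ → Finset ℕ := fun t => (Finset.Ioc (bot t) t).filter (· ∈ G) with hGt
  set bigTops : Finset ℕ := Tops.filter (fun t => M ≤ t) with hbigTops
  -- density links
  have hdensE : densN E n = (An.card : ℝ) / n := by rw [hAn]; exact densN_eq E n
  have hdensG : densN G N = (GN.card : ℝ) / N := by rw [hGN]; exact densN_eq G N
  -- A contains An and the segment (n, N]
  have hAcard : An.card + (N - n) ≤ A.card := by
    have hsub : An ∪ Finset.Icc (n + 1) N ⊆ A := by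
      intro x hx
      rcases Finset.mem_union.mp hx with h | h
      · obtain ⟨h1, h2⟩ := Finset.mem_filter.mp h
        exact Finset.mem_filter.mpr ⟨Finset.mem_Icc.mpr
          ⟨(Finset.mem_Icc.mp h1).1, le_trans (Finset.mem_Icc.mp h1).2 hnN⟩, h2⟩
      · obtain ⟨h1, h2⟩ := Finset.mem_Icc.mp h
        exact Finset.mem_filter.mpr ⟨Finset.mem_Icc.mpr ⟨by omega, h2⟩,
          hseg x (by omega) h2⟩
    have hdisj : Disjoint An (Finset.Icc (n + 1) N) := by
      rw [Finset.disjoint_left]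
      intro x hx hx'
      have h1 := (Finset.mem_Icc.mp (Finset.mem_filter.mp hx).1).2
      have h2 := (Finset.mem_Icc.mp hx').1
      omega
    have h := Finset.card_le_card hsub
    rw [Finset.card_union_of_disjoint hdisj, Nat.card_Icc] at h
    omega
  have hxn : An.card ≤ n := by
    have h1 : An.card ≤ (Finset.Icc 1 n).card := by
      rw [hAn]; exact Finset.card_filter_le _ _
    rwa [Nat.card_Icc, Nat.add_sub_cancel] at h1
  -- membership facts for elements of Tops
  have hTopsE : ∀ t ∈ Tops, t ∈ E := fun t ht => (Finset.mem_filter.mp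
    (Finset.mem_filter.mp ht).1).2
  have hTopsN : ∀ t ∈ Tops, 1 ≤ t ∧ t ≤ N := fun t ht => Finset.mem_Icc.mp
    (Finset.mem_filter.mp (Finset.mem_filter.mp ht).1).1
  have hTopsT : ∀ t ∈ Tops, t + 1 ∉ E := fun t ht => (Finset.mem_filter.mp ht).2
  have hTopsbot : ∀ t ∈ Tops, bot t ≤ t := fun t ht => hbot_le t (hTopsE t ht)
  -- separation of components
  have hsep : ∀ t1 ∈ Tops, ∀ t2 ∈ Tops, t1 < t2 → t1 < bot t2 := by
    intro t1 ht1 t2 ht2 hlt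
    by_contra h
    push_neg at h
    exact hTopsT t1 ht1 (hbotQ t2 (hTopsE t2 ht2) (t1 + 1) (by omega) (by omega))
  -- the fiber map
  have hmap : ∀ x ∈ A, tpf x ∈ Tops := by
    intro x hx
    obtain ⟨hx1, hx2⟩ := Finset.mem_filter.mp hx
    obtain ⟨hx3, hx4⟩ := Finset.mem_Icc.mp hx1
    refine Finset.mem_filter.mpr ⟨Finset.mem_filter.mpr ⟨Finset.mem_Icc.mpr
      ⟨le_trans hx3 (htpf_le x), htpf_min x N hx4 hNtop⟩, ?_⟩, htpf_top x⟩
    exact hEtp x hx2 (tpf x) (htpf_le x) le_rfl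
  have hAsum : A.card = ∑ t ∈ Tops, (A.filter (fun x => tpf x = t)).card :=
    Finset.card_eq_sum_card_fiberwise hmap
  -- fibers are contained in components
  have hfib_bound : ∀ t ∈ Tops, (A.filter (fun x => tpf x = t)).card ≤ t + 1 - bot t := by
    intro t ht
    have hsub : A.filter (fun x => tpf x = t) ⊆ Finset.Icc (bot t) t := by
      intro x hx
      obtain ⟨hx1, hx2⟩ := Finset.mem_filter.mp hx
      obtain ⟨hx3, hx4⟩ := Finset.mem_filter.mp hx1
      refine Finset.mem_Icc.mpr ⟨?_, hx2 ▸ htpf_le x⟩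
      refine hbot_min t (hTopsE t ht) x ?_
      intro r h1 h2
      exact hEtp x hx4 r h1 (hx2 ▸ h2)
    have h := Finset.card_le_card hsub
    rwa [Nat.card_Icc] at h
  -- per-component count of mild times
  have hGcount : ∀ t ∈ Tops,
      (δ / 2) * ((t : ℝ) + 1 - bot t) ≤ (((Gt t).card : ℝ) + 1) * Cb := by
    intro t ht
    exact comp_count_fin hδ hCb hstepa (hbot_le t (hTopsE t ht))
      (hbotQ t (hTopsE t ht)) (hTopsT t ht) (hbot0 t (hTopsE t ht))
  -- the Gt are disjoint and contained in GN
  have hGdisj : ∀ t1 ∈ Tops, ∀ t2 ∈ Tops, t1 ≠ t2 → Disjoint (Gt t1) (Gt t2) := by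
    have key : ∀ t1 ∈ Tops, ∀ t2 ∈ Tops, t1 < t2 → Disjoint (Gt t1) (Gt t2) := by
      intro t1 ht1 t2 ht2 hlt
      rw [Finset.disjoint_left]
      intro x hx hx'
      have h1 := (Finset.mem_Ioc.mp (Finset.mem_filter.mp hx).1).2
      have h2 := (Finset.mem_Ioc.mp (Finset.mem_filter.mp hx').1).1
      have := hsep t1 ht1 t2 ht2 hlt
      omega
    intro t1 ht1 t2 ht2 hne
    rcases Nat.lt_or_ge t1 t2 with h | h
    · exact key t1 ht1 t2 ht2 h
    · exact (key t2 ht2 t1 ht1 (by omega)).symm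
  have hGsum : ∑ t ∈ Tops, (Gt t).card ≤ GN.card := by
    rw [← Finset.card_biUnion hGdisj]
    refine Finset.card_le_card ?_
    intro x hx
    obtain ⟨t, ht, hxt⟩ := Finset.mem_biUnion.mp hx
    obtain ⟨hx1, hx2⟩ := Finset.mem_filter.mp hxt
    obtain ⟨hx3, hx4⟩ := Finset.mem_Ioc.mp hx1
    exact Finset.mem_filter.mpr ⟨Finset.mem_Icc.mpr ⟨by omega,
      le_trans hx4 (hTopsN t ht).2⟩, hx2⟩
  -- counting the tops
  have hbig_fib : ∀ t ∈ bigTops, M ≤ (A.filter (fun x => tpf x = t)).card := by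
    intro t ht
    obtain ⟨htT, htM⟩ := Finset.mem_filter.mp ht
    have htE := hTopsE t htT
    have htF : t + 1 ∈ Fweak a δ M := top_mem_F htE (hTopsT t htT)
    have hbotM : bot t ≤ t + 1 - M := by
      refine hbot_min t htE (t + 1 - M) ?_
      intro r h1 h2
      exact mem_E_of_F htF (by omega) (by omega)
    have hsub : Finset.Icc (max (bot t) 1) t ⊆ A.filter (fun x => tpf x = t) := by
      intro x hx
      obtain ⟨hx1, hx2⟩ := Finset.mem_Icc.mp hx
      have hxE : x ∈ E := hbotQ t htE x (by omega) hx2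
      have htpx : tpf x = t := by
        have hle : tpf x ≤ t := htpf_min x t hx2 (hTopsT t htT)
        by_contra hne
        have hlt : tpf x < t := by omega
        exact htpf_top x (hbotQ t htE (tpf x + 1) (by have := htpf_le x; omega)
          (by omega))
      refine Finset.mem_filter.mpr ⟨Finset.mem_filter.mpr ⟨Finset.mem_Icc.mpr
        ⟨by omega, le_trans hx2 (hTopsN t htT).2⟩, hxE⟩, htpx⟩
    have hcard := Finset.card_le_card hsub
    rw [Nat.card_Icc] at hcard
    omega
  have hbig_count : M * bigTops.card ≤ A.card := by
    calc M * bigTops.card = ∑ _t ∈ bigTops, M := by rw [Finset.sum_const]; ring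
      _ ≤ ∑ t ∈ bigTops, (A.filter (fun x => tpf x = t)).card :=
          Finset.sum_le_sum hbig_fib
      _ ≤ ∑ t ∈ Tops, (A.filter (fun x => tpf x = t)).card := by
          rw [hbigTops]
          exact Finset.sum_le_sum_of_subset (Finset.filter_subset _ _)
      _ = A.card := hAsum.symm
  have hsplit : Tops.card = bigTops.card + (Tops.filter (fun t => ¬ M ≤ t)).card := by
    rw [hbigTops]
    exact (Finset.card_filter_add_card_filter_not _).symm
  have hsmall : (Tops.filter (fun t => ¬ M ≤ t)).card ≤ 1 := by
    refine Finset.card_le_one.mpr ?_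
    intro t1 ht1 t2 ht2
    obtain ⟨ht1T, ht1M⟩ := Finset.mem_filter.mp ht1
    obtain ⟨ht2T, ht2M⟩ := Finset.mem_filter.mp ht2
    by_contra hne
    have hbot_small : ∀ t ∈ Tops, ¬ M ≤ t → bot t = 0 := by
      intro t ht htM
      have htE := hTopsE t ht
      have htF : t + 1 ∈ Fweak a δ M := top_mem_F htE (hTopsT t ht)
      have hbotM : bot t ≤ t + 1 - M := by
        refine hbot_min t htE (t + 1 - M) ?_
        intro r h1 h2
        exact mem_E_of_F htF (by omega) (by omega)
      omega
    rcases Nat.lt_or_ge t1 t2 with h | h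
    · have e1 := hsep t1 ht1T t2 ht2T h
      have e2 := hbot_small t2 ht2T ht2M
      omega
    · have hlt : t2 < t1 := by omega
      have e1 := hsep t2 ht2T t1 ht1T hlt
      have e2 := hbot_small t1 ht1T ht1M
      omega
  -- make everything opaque before the real arithmetic
  clear_value A An GN Tops Gt bigTops
  rw [hdensE, hdensG]
  -- real versions
  have hMpos : (0 : ℝ) < M := by exact_mod_cast hM1
  have hnpos : (0 : ℝ) < n := by exact_mod_cast hn
  have hTR : (Tops.card : ℝ) ≤ (A.card : ℝ) / M + 1 := by
    have h1 : (bigTops.card : ℝ) ≤ (A.card : ℝ) / M := by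
      rw [le_div_iff₀ hMpos]
      calc (bigTops.card : ℝ) * M = ((M * bigTops.card : ℕ) : ℝ) := by push_cast; ring
        _ ≤ (A.card : ℝ) := by exact_mod_cast hbig_count
    have h2 : ((Tops.filter (fun t => ¬ M ≤ t)).card : ℝ) ≤ 1 := by
      exact_mod_cast hsmall
    have h3 : (Tops.card : ℝ) = (bigTops.card : ℝ) +
        ((Tops.filter (fun t => ¬ M ≤ t)).card : ℝ) := by exact_mod_cast hsplit
    linarith
  have hmainR : δ / 2 * (A.card : ℝ) ≤ Cb * (GN.card : ℝ) + Cb * (Tops.card : ℝ) := by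
    have hc1 : (A.card : ℝ) = ∑ t ∈ Tops, ((A.filter (fun x => tpf x = t)).card : ℝ) := by
      rw [hAsum]; push_cast; ring
    have hstep1 : δ / 2 * (A.card : ℝ) ≤ ∑ t ∈ Tops, (((Gt t).card : ℝ) + 1) * Cb := by
      rw [hc1, Finset.mul_sum]
      refine Finset.sum_le_sum ?_
      intro t ht
      have hf1 : ((A.filter (fun x => tpf x = t)).card : ℝ) ≤ (t : ℝ) + 1 - bot t := by
        have h1 := hfib_bound t ht
        have h2 := hTopsbot t ht
        have h3 : ((t + 1 - bot t : ℕ) : ℝ) = (t : ℝ) + 1 - bot t := by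
          have : bot t ≤ t + 1 := by omega
          push_cast [Nat.cast_sub this]
          ring
        calc ((A.filter (fun x => tpf x = t)).card : ℝ) ≤ ((t + 1 - bot t : ℕ) : ℝ) := by
              exact_mod_cast h1
          _ = (t : ℝ) + 1 - bot t := h3
      calc δ / 2 * ((A.filter (fun x => tpf x = t)).card : ℝ)
          ≤ δ / 2 * ((t : ℝ) + 1 - bot t) :=
            mul_le_mul_of_nonneg_left hf1 (by positivity)
        _ ≤ (((Gt t).card : ℝ) + 1) * Cb := hGcount t ht
    have hstep2 : ∑ t ∈ Tops, (((Gt t).card : ℝ) + 1) * Cb ≤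
        Cb * (GN.card : ℝ) + Cb * (Tops.card : ℝ) := by
      have he : ∀ t ∈ Tops, (((Gt t).card : ℝ) + 1) * Cb = Cb * ((Gt t).card : ℝ) + Cb :=
        fun t _ => by ring
      rw [Finset.sum_congr rfl he, Finset.sum_add_distrib, Finset.sum_const,
        ← Finset.mul_sum, nsmul_eq_mul]
      have hs : ∑ t ∈ Tops, ((Gt t).card : ℝ) ≤ (GN.card : ℝ) := by
        calc ∑ t ∈ Tops, ((Gt t).card : ℝ) = ((∑ t ∈ Tops, (Gt t).card : ℕ) : ℝ) := by
              push_cast; ring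
          _ ≤ (GN.card : ℝ) := by exact_mod_cast hGsum
      have := mul_le_mul_of_nonneg_left hs hCb.le
      linarith
    linarith
  have hG' : δ / (4 * Cb) * (A.card : ℝ) - 1 ≤ (GN.card : ℝ) :=
    arith_combine hδ hCb hMbig (Nat.cast_nonneg _) hmainR hTR
  have hA' : (An.card : ℝ) + ((N : ℝ) - n) ≤ (A.card : ℝ) := by
    have h : ((An.card + (N - n) : ℕ) : ℝ) = (An.card : ℝ) + ((N : ℝ) - n) := by
      push_cast [Nat.cast_sub hnN]
      ring
    rw [← h]
    exact_mod_cast hAcard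
  exact arith_final (by positivity) (by exact_mod_cast hn) (by exact_mod_cast hnN)
    (Nat.cast_nonneg _) (by exact_mod_cast hxn) hA' hG'


end SRB

namespace SRB

open scoped Classical

/-- for a bounded real sequence with `sup_n |a_n| ≤ C` and `δ > 0` there are
`α > 0` and `M₀`, depending only on `δ` and the bound `C`, such that for every `M ≥ M₀`,
`d̄(G_a^{δ,M}) ≥ α · d̄(F_a^{δ,M}(M))`. -/
theorem statement2 (δ C : ℝ) (hδ : 0 < δ) :
    ∃ α : ℝ, 0 < α ∧ ∃ M₀ : ℕ, ∀ a : ℕ → ℝ, (∀ n, |a n| ≤ C) →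
      ∀ M : ℕ, M₀ ≤ M →
        α * upperDens (EM (Fweak a δ M) M) ≤ upperDens (Gmild a δ M) := by
  obtain ⟨Cb, hCbdef⟩ : ∃ c : ℝ, c = max C δ - δ / 2 := ⟨_, rfl⟩
  have hCb : 0 < Cb := by
    have h1 : δ ≤ max C δ := le_max_right C δ
    rw [hCbdef]
    linarith
  obtain ⟨α, hαdef⟩ : ∃ x : ℝ, x = δ / (4 * Cb) := ⟨_, rfl⟩
  have hα : 0 < α := by rw [hαdef]; positivity
  refine ⟨α, hα, max 1 ⌈(4 * Cb) / δ⌉₊, ?_⟩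
  intro a hC M hM
  have hM1 : 1 ≤ M := le_trans (le_max_left _ _) hM
  have hMpos : (0 : ℝ) < M := by exact_mod_cast hM1
  have hstepa : ∀ l, a l - δ / 2 ≤ Cb := by
    intro l
    have h1 : a l ≤ |a l| := le_abs_self _
    have h2 : |a l| ≤ C := hC l
    have h3 : C ≤ max C δ := le_max_left C δ
    rw [hCbdef]
    linarith
  have hMbig : (1 : ℝ) / M ≤ δ / (4 * Cb) := by
    have h1 : ((⌈(4 * Cb) / δ⌉₊ : ℕ) : ℝ) ≤ M := by
      exact_mod_cast le_trans (le_max_right 1 _) hM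
    have h2 : (4 * Cb) / δ ≤ M := le_trans (Nat.le_ceil _) h1
    rw [div_le_div_iff₀ hMpos (by positivity : (0 : ℝ) < 4 * Cb)]
    have h3 := (div_le_iff₀ hδ).mp h2
    linarith
  -- boundedness facts
  have hbdd_v : IsBoundedUnder (· ≤ ·) atTop (fun n => densN (Gmild a δ M) n) :=
    isBoundedUnder_of ⟨1, fun n => densN_le_one (Gmild a δ M) n⟩
  have hbdd_u : IsBoundedUnder (· ≤ ·) atTop (fun n => densN (EM (Fweak a δ M) M) n) :=
    isBoundedUnder_of ⟨1, fun n => densN_le_one (EM (Fweak a δ M) M) n⟩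
  have hcobdd_u : IsCoboundedUnder (· ≤ ·) atTop (fun n => densN (EM (Fweak a δ M) M) n) :=
    isCoboundedUnder_le_of_le atTop (fun n => densN_nonneg (EM (Fweak a δ M) M) n)
  have hLu1 : upperDens (EM (Fweak a δ M) M) ≤ 1 := by
    refine limsup_le_of_le hcobdd_u ?_
    exact Eventually.of_forall (fun n => densN_le_one (EM (Fweak a δ M) M) n)
  have hLu0 : 0 ≤ upperDens (EM (Fweak a δ M) M) := by
    refine le_limsup_of_frequently_le ?_ hbdd_u
    exact Frequently.of_forall (fun n => densN_nonneg (EM (Fweak a δ M) M) n)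
  have hLv0 : 0 ≤ upperDens (Gmild a δ M) := by
    refine le_limsup_of_frequently_le ?_ hbdd_v
    exact Frequently.of_forall (fun n => densN_nonneg (Gmild a δ M) n)
  have hudE : upperDens (EM (Fweak a δ M) M) =
      Filter.atTop.limsup (fun n => densN (EM (Fweak a δ M) M) n) := rfl
  have hudG : upperDens (Gmild a δ M) =
      Filter.atTop.limsup (fun n => densN (Gmild a δ M) n) := rfl
  by_cases hinf : ∃ x, ∀ m, x ≤ m → m ∈ EM (Fweak a δ M) M
  · -- an infinite component exists: the upper density of G is at least α
    obtain ⟨x, hx⟩ := hinf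
    have hQex : ∃ s, ∀ r, s ≤ r → r ∈ EM (Fweak a δ M) M := ⟨x, hx⟩
    set s : ℕ := Nat.find hQex with hsdef
    have hsE : ∀ r, s ≤ r → r ∈ EM (Fweak a δ M) M := Nat.find_spec hQex
    have hs_min : ∀ s', (∀ r, s' ≤ r → r ∈ EM (Fweak a δ M) M) → s ≤ s' :=
      fun s' h => Nat.find_min' hQex h
    clear_value s
    have hbot : s = 0 ∨ (s - 1) ∉ EM (Fweak a δ M) M := by
      by_cases h0 : s = 0
      · exact Or.inl h0
      · refine Or.inr ?_
        intro hmem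
        have hQ : ∀ r, s - 1 ≤ r → r ∈ EM (Fweak a δ M) M := by
          intro r h1
          rcases Nat.lt_or_ge r s with h | h
          · have hr : r = s - 1 := by omega
            rwa [hr]
          · exact hsE r h
        have := hs_min (s - 1) hQ
        omega
    have hcc := comp_count_inf hδ hCb hstepa hsE hbot
    have hfreq : ∃ᶠ N in atTop, α ≤ densN (Gmild a δ M) N := by
      rw [frequently_atTop]
      intro m
      obtain ⟨p, hp1, hp2⟩ := hcc (m + 2 * s + s) (by omega)
      refine ⟨p, by omega, ?_⟩
      have hppos : (0 : ℝ) < p := by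
        have h : 1 ≤ p := by omega
        exact_mod_cast h
      have hsub : (Finset.Ioc s p).filter (· ∈ Gmild a δ M) ⊆
          (Finset.Icc 1 p).filter (· ∈ Gmild a δ M) := by
        apply Finset.filter_subset_filter
        intro y hy
        have h := Finset.mem_Ioc.mp hy
        exact Finset.mem_Icc.mpr ⟨by omega, h.2⟩
      have hcard : (((Finset.Ioc s p).filter (· ∈ Gmild a δ M)).card : ℝ) ≤
          (((Finset.Icc 1 p).filter (· ∈ Gmild a δ M)).card : ℝ) := by
        exact_mod_cast Finset.card_le_card hsub
      rw [densN_eq, le_div_iff₀ hppos]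
      have hps : 2 * (s : ℝ) ≤ p := by
        have h : 2 * s ≤ p := by omega
        exact_mod_cast h
      have hcount : (δ / (2 * Cb)) * ((p : ℝ) - s) ≤
          (((Finset.Ioc s p).filter (· ∈ Gmild a δ M)).card : ℝ) := by
        rw [div_mul_eq_mul_div, div_le_iff₀ (by positivity : (0 : ℝ) < 2 * Cb)]
        linarith
      have hαp : α * (p : ℝ) ≤ (δ / (2 * Cb)) * ((p : ℝ) - s) := by
        rw [hαdef, div_mul_eq_mul_div, div_mul_eq_mul_div,
          div_le_div_iff₀ (by positivity : (0:ℝ) < 4 * Cb) (by positivity : (0:ℝ) < 2 * Cb)]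
        nlinarith [mul_nonneg (mul_nonneg hδ.le hCb.le)
          (by linarith : (0:ℝ) ≤ (p : ℝ) - 2 * s)]
      linarith [hαp, hcount, hcard]
    have hLv : α ≤ upperDens (Gmild a δ M) := le_limsup_of_frequently_le hfreq hbdd_v
    calc α * upperDens (EM (Fweak a δ M) M) ≤ α * 1 :=
          mul_le_mul_of_nonneg_left hLu1 hα.le
      _ ≤ upperDens (Gmild a δ M) := by linarith
  · -- all components are finite
    push_neg at hinf
    have hclaim : ∀ n : ℕ, 1 ≤ n → ∃ N, n ≤ N ∧
        α * densN (EM (Fweak a δ M) M) n - 1 / n ≤ densN (Gmild a δ M) N := by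
      intro n hn
      rw [hαdef]
      exact count_main hδ hCb hstepa hM1 hMbig hinf hn
    have hmain : ∀ ε : ℝ, 0 < ε →
        α * upperDens (EM (Fweak a δ M) M) ≤ upperDens (Gmild a δ M) + ε := by
      intro ε hε
      have hfreq_u : ∃ᶠ n in atTop,
          upperDens (EM (Fweak a δ M) M) - ε / (2 * α) < densN (EM (Fweak a δ M) M) n := by
        apply frequently_lt_of_lt_limsup hcobdd_u
        rw [← hudE]
        have h : 0 < ε / (2 * α) := by positivity
        linarith
      have hfreq_v : ∃ᶠ N in atTop,
          α * upperDens (EM (Fweak a δ M) M) - ε ≤ densN (Gmild a δ M) N := by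
        rw [frequently_atTop]
        intro m
        obtain ⟨n, hn1, hn2⟩ := (frequently_atTop.mp hfreq_u) (max m (max 1 ⌈2 / ε⌉₊))
        have hn1' : 1 ≤ n :=
          le_trans (le_trans (le_max_left 1 _) (le_max_right m _)) hn1
        obtain ⟨N, hN1, hN2⟩ := hclaim n hn1'
        refine ⟨N, le_trans (le_trans (le_max_left m _) hn1) hN1, ?_⟩
        have hnpos : (0 : ℝ) < n := by exact_mod_cast hn1'
        have hn2ε : 1 / (n : ℝ) ≤ ε / 2 := by
          have h1 : ((⌈2 / ε⌉₊ : ℕ) : ℝ) ≤ n := by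
            exact_mod_cast le_trans (le_trans (le_max_right 1 _) (le_max_right m _)) hn1
          have h2 : 2 / ε ≤ n := le_trans (Nat.le_ceil _) h1
          rw [div_le_div_iff₀ hnpos (by positivity : (0 : ℝ) < 2)]
          have h3 := (div_le_iff₀ hε).mp h2
          linarith
        have hα_mul : α * (upperDens (EM (Fweak a δ M) M) - ε / (2 * α)) ≤
            α * densN (EM (Fweak a δ M) M) n :=
          mul_le_mul_of_nonneg_left hn2.le hα.le
        have hαε : α * (ε / (2 * α)) = ε / 2 := by field_simp
        nlinarith [hN2]
      have h := le_limsup_of_frequently_le hfreq_v hbdd_v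
      rw [← hudG] at h
      linarith
    by_contra hcon
    push_neg at hcon
    have h := hmain ((α * upperDens (EM (Fweak a δ M) M) - upperDens (Gmild a δ M)) / 2)
      (by linarith)
    linarith


end SRB
end
end

section
/- Let a = (a_n)_{n∈ℕ} be a bounded real sequence with ‖a‖_∞ := sup_n |a_n|, and let δ > 0. If k < l are consecutive elements of E_a^δ (i.e. k, l ∈ E_a^δ and no element of E_a^δ lies strictly between k and l), then 0 ≤ Σ_{k≤j<l} a_j − (l−k)δ ≤ ‖a‖_∞. -/
open MeasureTheory Filter Topology
open scoped ENNReal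

noncomputable section

/-
A non-hyperbolic time `t` has a block `[m, t)` whose sum falls short of `(t - m) δ`. Chaining
such blocks backwards from `l - 1` until they reach the hyperbolic time `k`, and using that the
blocks ending at `k` have sum at least `δ` times their length, one gets
`∑_{k ≤ j < l - 1} a_j ≤ (l - 1 - k) δ`; the last term `a_{l-1}` adds at most `‖a‖_∞`.
-/

namespace SRB

lemma le_sum_Ico_of_mem_Ehyp {a : ℕ → ℝ} {δ : ℝ} {p m : ℕ} (hp : p ∈ Ehyp a δ) (hm : m ≤ p) :
    ((p : ℝ) - m) * δ ≤ ∑ j ∈ Finset.Ico m p, a j := by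
  rcases hm.lt_or_eq with hm | rfl
  · exact hp.2 m hm
  · simp

lemma exists_sum_Ico_lt_of_notMem_Ehyp {a : ℕ → ℝ} {δ : ℝ} {p : ℕ} (hp : p ∉ Ehyp a δ)
    (hp₁ : 1 ≤ p) : ∃ m < p, ∑ j ∈ Finset.Ico m p, a j < ((p : ℝ) - m) * δ := by
  simpa [Ehyp, hp₁] using hp

lemma sum_Ico_le_of_forall_notMem_Ehyp {a : ℕ → ℝ} {δ : ℝ} {k t : ℕ} (hk : k ∈ Ehyp a δ)
    (hkt : k ≤ t) (hgap : ∀ j, k < j → j ≤ t → j ∉ Ehyp a δ) :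
    ∑ j ∈ Finset.Ico k t, a j ≤ ((t : ℝ) - k) * δ := by
  induction t using Nat.strong_induction_on with
  | _ t ih =>
    rcases hkt.eq_or_lt with rfl | hkt
    · simp
    obtain ⟨m, hmt, hm⟩ := exists_sum_Ico_lt_of_notMem_Ehyp (hgap t hkt le_rfl) (by omega)
    rcases le_or_gt m k with hmk | hkm
    · have hmk_sum := le_sum_Ico_of_mem_Ehyp hk hmk
      rw [← Finset.sum_Ico_consecutive a hmk hkt.le] at hm
      linarith
    · have ihm := ih m hmt hkm.le fun j hkj hjm => hgap j hkj (hjm.trans hmt.le)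
      rw [← Finset.sum_Ico_consecutive a hkm.le hmt.le]
      linarith

/-- if `a` is bounded with `‖a‖_∞ = sup_n |a_n|`, `δ > 0` and `k < l` are
consecutive elements of `E_a^δ`, then `0 ≤ ∑_{k≤j<l} a_j − (l−k)δ ≤ ‖a‖_∞`. -/
theorem statement4 (a : ℕ → ℝ) (hbdd : BddAbove (Set.range fun n => |a n|))
    (δ : ℝ) (hδ : 0 < δ) (k l : ℕ)
    (hk : k ∈ Ehyp a δ) (hl : l ∈ Ehyp a δ) (hkl : k < l)
    (hcons : ∀ j, k < j → j < l → j ∉ Ehyp a δ) :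
    0 ≤ (∑ j ∈ Finset.Ico k l, a j) - ((l : ℝ) - k) * δ ∧
      (∑ j ∈ Finset.Ico k l, a j) - ((l : ℝ) - k) * δ ≤ ⨆ n, |a n| := by
  refine ⟨sub_nonneg.mpr (hl.2 k hkl), ?_⟩
  obtain ⟨t, rfl⟩ : ∃ t, l = t + 1 := ⟨l - 1, by omega⟩
  have hkt : k ≤ t := Nat.lt_succ_iff.mp hkl
  have hhead := sum_Ico_le_of_forall_notMem_Ehyp hk hkt fun j hkj hjt => hcons j hkj (by omega)
  have hlast : a t ≤ ⨆ n, |a n| := (le_abs_self _).trans (le_ciSup hbdd t)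
  rw [Finset.sum_Ico_succ_top hkt]
  push_cast
  linarith

end SRB
end
end

section
/- Let μ be a Borel probability measure on X, let P be a finite Borel partition of X, let F be a nonempty finite subset of ℕ, and let m ≥ 1 be an integer. Set μ^F := (1/#F)·Σ_{k∈F} (T^k)_*μ. Then (1/m)·H_{μ^F}(P^m) ≥ (1/#F)·H_μ(P^F) − 3m·log(#P)·(#∂F/#F). -/
open MeasureTheory Filter Topology
open scoped ENNReal

noncomputable section

namespace SRB


set_option linter.unusedSectionVars false

section AuxEntropy

variable {Ω : Type*} [MetricSpace Ω] [CompactSpace Ω] [MeasurableSpace Ω] [BorelSpace Ω]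

lemma Hstat_eq {ι : Type*} [Fintype ι] (μ : Measure Ω) (q : Ω → ι) :
    Hstat μ q = ∑ i : ι, Real.negMulLog ((μ (q ⁻¹' {i})).toReal) := by
  simp [Hstat, Real.negMulLog_eq_neg, ← Finset.sum_neg_distrib]

lemma sum_toReal_fibers_eq_one {ι : Type*} [Fintype ι] (μ : Measure Ω) [IsProbabilityMeasure μ]
    (q : Ω → ι) (hq : ∀ i, MeasurableSet (q ⁻¹' {i})) :
    ∑ i : ι, (μ (q ⁻¹' {i})).toReal = 1 := by
  classical
  have hdisj : Set.PairwiseDisjoint ↑(Finset.univ : Finset ι) (fun i => q ⁻¹' {i}) := by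
    intro i _ j _ hij
    exact Set.disjoint_left.mpr fun ω hi hj => hij (hi.symm.trans hj)
  have h1 := measure_biUnion_finset (μ := μ) hdisj (fun i _ => hq i)
  have hcov : ⋃ i ∈ (Finset.univ : Finset ι), q ⁻¹' {i} = Set.univ := by
    ext ω; simp
  rw [hcov, measure_univ] at h1
  rw [← ENNReal.toReal_sum (fun i _ => measure_ne_top μ _), ← h1, ENNReal.toReal_one]

lemma negMulLog_sum_le {α : Type*} (s : Finset α) (x : α → ℝ) (hx : ∀ i ∈ s, 0 ≤ x i) :
    Real.negMulLog (∑ i ∈ s, x i) ≤ ∑ i ∈ s, Real.negMulLog (x i) := by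
  have h1 : Real.negMulLog (∑ i ∈ s, x i)
      = ∑ i ∈ s, -(x i * Real.log (∑ j ∈ s, x j)) := by
    simp only [Real.negMulLog_eq_neg]
    rw [Finset.sum_neg_distrib, ← Finset.sum_mul]
  rw [h1]
  refine Finset.sum_le_sum fun i hi => ?_
  rw [Real.negMulLog_eq_neg, neg_le_neg_iff]
  rcases eq_or_lt_of_le (hx i hi) with h0 | h0
  · simp [← h0]
  · refine mul_le_mul_of_nonneg_left ?_ (hx i hi)
    exact Real.log_le_log h0 (Finset.single_le_sum hx hi)

lemma Hstat_comp_le {ι κ : Type*} [Fintype ι] [Fintype κ] (μ : Measure Ω)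
    [IsFiniteMeasure μ] (q : Ω → ι) (hq : ∀ i, MeasurableSet (q ⁻¹' {i})) (f : ι → κ) :
    Hstat μ (f ∘ q) ≤ Hstat μ q := by
  classical
  rw [Hstat_eq, Hstat_eq]
  have hdisj : ∀ j : κ, Set.PairwiseDisjoint
      ↑(Finset.univ.filter fun i => f i = j) (fun i => q ⁻¹' {i}) := by
    intro j i _ i' _ hij
    exact Set.disjoint_left.mpr fun ω hi hj => hij (hi.symm.trans hj)
  have key : ∀ j : κ, ((μ ((f ∘ q) ⁻¹' {j})).toReal)
      = ∑ i ∈ Finset.univ.filter fun i => f i = j, (μ (q ⁻¹' {i})).toReal := by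
    intro j
    have hset : (f ∘ q) ⁻¹' {j} = ⋃ i ∈ Finset.univ.filter fun i => f i = j, q ⁻¹' {i} := by
      ext ω
      simp [eq_comm]
    rw [hset, measure_biUnion_finset (hdisj j) (fun i _ => hq i),
      ENNReal.toReal_sum (fun i _ => measure_ne_top μ _)]
  calc ∑ j : κ, Real.negMulLog (μ ((f ∘ q) ⁻¹' {j})).toReal
      ≤ ∑ j : κ, ∑ i ∈ Finset.univ.filter fun i => f i = j,
          Real.negMulLog (μ (q ⁻¹' {i})).toReal := by
        refine Finset.sum_le_sum fun j _ => ?_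
        rw [key j]
        exact negMulLog_sum_le _ _ (fun i _ => ENNReal.toReal_nonneg)
    _ = ∑ i : ι, Real.negMulLog (μ (q ⁻¹' {i})).toReal := by
        exact Finset.sum_fiberwise _ _ _

lemma Hstat_comp_inj {ι κ : Type*} [Fintype ι] [Fintype κ] (μ : Measure Ω)
    (q : Ω → ι) {g : ι → κ} (hg : Function.Injective g) :
    Hstat μ (g ∘ q) = Hstat μ q := by
  classical
  rw [Hstat_eq, Hstat_eq]
  have h1 : ∑ j : κ, Real.negMulLog (μ ((g ∘ q) ⁻¹' {j})).toReal
      = ∑ j ∈ Finset.univ.image g, Real.negMulLog (μ ((g ∘ q) ⁻¹' {j})).toReal := by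
    refine (Finset.sum_subset (Finset.subset_univ _) fun j _ hj => ?_).symm
    have : (g ∘ q) ⁻¹' {j} = ∅ := by
      ext ω
      simp only [Set.mem_preimage, Set.mem_singleton_iff, Set.mem_empty_iff_false, iff_false]
      intro h
      exact hj (Finset.mem_image.mpr ⟨q ω, Finset.mem_univ _, h⟩)
    simp [this]
  rw [h1, Finset.sum_image (fun i _ j _ h => hg h)]
  refine Finset.sum_congr rfl fun i _ => ?_
  have : (g ∘ q) ⁻¹' {g i} = q ⁻¹' {i} := by
    ext ω; simp [hg.eq_iff]
  rw [this]

lemma Hstat_pair_le {ι κ : Type*} [Fintype ι] [Fintype κ] (μ : Measure Ω)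
    [IsProbabilityMeasure μ]
    (q : Ω → ι) (hq : ∀ i, MeasurableSet (q ⁻¹' {i}))
    (r : Ω → κ) (hr : ∀ j, MeasurableSet (r ⁻¹' {j})) :
    Hstat μ (fun ω => (q ω, r ω)) ≤ Hstat μ q + Hstat μ r := by
  classical
  set P : ι → κ → ℝ := fun i j => (μ (q ⁻¹' {i} ∩ r ⁻¹' {j})).toReal with hP
  set A : ι → ℝ := fun i => (μ (q ⁻¹' {i})).toReal with hA
  set B : κ → ℝ := fun j => (μ (r ⁻¹' {j})).toReal with hB
  have hPnn : ∀ i j, 0 ≤ P i j := fun i j => ENNReal.toReal_nonneg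
  have hfib : ∀ i j, ((fun ω => (q ω, r ω)) ⁻¹' {(i, j)}) = q ⁻¹' {i} ∩ r ⁻¹' {j} := by
    intro i j; ext ω; simp [Prod.ext_iff]
  -- marginals
  have hqm : ∀ i, A i = ∑ j : κ, P i j := by
    intro i
    show (μ (q ⁻¹' {i})).toReal = ∑ j : κ, P i j
    have hdisj : Set.PairwiseDisjoint ↑(Finset.univ : Finset κ)
        (fun j => q ⁻¹' {i} ∩ r ⁻¹' {j}) := by
      intro a _ b _ hab
      exact Set.disjoint_left.mpr fun ω ha hb => hab (ha.2.symm.trans hb.2)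
    have hset : q ⁻¹' {i} = ⋃ j ∈ (Finset.univ : Finset κ), q ⁻¹' {i} ∩ r ⁻¹' {j} := by
      ext ω; simp
    rw [hset, measure_biUnion_finset hdisj (fun j _ => (hq i).inter (hr j)),
      ENNReal.toReal_sum (fun j _ => measure_ne_top μ _)]
  have hrm : ∀ j, B j = ∑ i : ι, P i j := by
    intro j
    show (μ (r ⁻¹' {j})).toReal = ∑ i : ι, P i j
    have hdisj : Set.PairwiseDisjoint ↑(Finset.univ : Finset ι)
        (fun i => q ⁻¹' {i} ∩ r ⁻¹' {j}) := by
      intro a _ b _ hab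
      exact Set.disjoint_left.mpr fun ω ha hb => hab (ha.1.symm.trans hb.1)
    have hset : r ⁻¹' {j} = ⋃ i ∈ (Finset.univ : Finset ι), q ⁻¹' {i} ∩ r ⁻¹' {j} := by
      ext ω; simp
    rw [hset, measure_biUnion_finset hdisj (fun i _ => (hq i).inter (hr j)),
      ENNReal.toReal_sum (fun i _ => measure_ne_top μ _)]
  have hPle1 : ∀ i j, P i j ≤ A i :=
    fun i j => ENNReal.toReal_mono (measure_ne_top μ _) (measure_mono Set.inter_subset_left)
  have hPle2 : ∀ i j, P i j ≤ B j :=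
    fun i j => ENNReal.toReal_mono (measure_ne_top μ _) (measure_mono Set.inter_subset_right)
  -- key Gibbs-type estimate
  have key : ∀ i j, P i j * Real.log (A i * B j)
      - P i j * Real.log (P i j)
      ≤ A i * B j - P i j := by
    intro i j
    set a := A i
    set b := B j
    rcases eq_or_lt_of_le (hPnn i j) with h0 | h0
    · simp only [← h0, zero_mul, sub_zero, mul_zero, sub_self]
      positivity
    · have ha : 0 < a := lt_of_lt_of_le h0 (hPle1 i j)
      have hb : 0 < b := lt_of_lt_of_le h0 (hPle2 i j)
      have hab : 0 < a * b / P i j := by positivity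
      have := Real.log_le_sub_one_of_pos hab
      have hlog : Real.log (a * b / P i j) = Real.log (a * b) - Real.log (P i j) :=
        Real.log_div (by positivity) (ne_of_gt h0)
      rw [hlog] at this
      have := mul_le_mul_of_nonneg_left this (le_of_lt h0)
      calc P i j * Real.log (a * b) - P i j * Real.log (P i j)
          = P i j * (Real.log (a * b) - Real.log (P i j)) := by ring
        _ ≤ P i j * (a * b / P i j - 1) := this
        _ = a * b - P i j := by field_simp
  have hsum1 : ∑ i : ι, A i = 1 := sum_toReal_fibers_eq_one μ q hq
  have hsum2 : ∑ j : κ, B j = 1 := sum_toReal_fibers_eq_one μ r hr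
  have hPsum : ∑ i : ι, ∑ j : κ, P i j = 1 := by
    rw [← hsum1]
    exact Finset.sum_congr rfl fun i _ => (hqm i).symm
  have hAB : ∑ i : ι, ∑ j : κ, A i * B j = 1 := by
    simp only [← Finset.mul_sum, hsum2, mul_one, hsum1]
  have hbig : ∑ i : ι, ∑ j : κ, (P i j * Real.log (A i * B j) - P i j * Real.log (P i j))
      ≤ 0 := by
    calc ∑ i : ι, ∑ j : κ, (P i j * Real.log (A i * B j) - P i j * Real.log (P i j))
        ≤ ∑ i : ι, ∑ j : κ, (A i * B j - P i j) :=
          Finset.sum_le_sum fun i _ => Finset.sum_le_sum fun j _ => key i j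
      _ = 0 := by
          simp only [Finset.sum_sub_distrib, hAB, hPsum, sub_self]
  have e4 : ∀ i j, Real.negMulLog (P i j)
      = P i j * Real.log (A i * B j) - P i j * Real.log (P i j)
        - P i j * Real.log (A i) - P i j * Real.log (B j) := by
    intro i j
    rcases eq_or_lt_of_le (hPnn i j) with h0 | h0
    · simp [← h0]
    · have ha : 0 < A i := lt_of_lt_of_le h0 (hPle1 i j)
      have hb : 0 < B j := lt_of_lt_of_le h0 (hPle2 i j)
      rw [Real.log_mul (ne_of_gt ha) (ne_of_gt hb), Real.negMulLog]
      ring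
  have e1 : ∑ i : ι, Real.negMulLog (A i) = -∑ i : ι, ∑ j : κ, P i j * Real.log (A i) := by
    rw [← Finset.sum_neg_distrib]
    refine Finset.sum_congr rfl fun i _ => ?_
    rw [← Finset.sum_mul, ← hqm i, Real.negMulLog]
    ring
  have e2 : ∑ j : κ, Real.negMulLog (B j) = -∑ i : ι, ∑ j : κ, P i j * Real.log (B j) := by
    rw [Finset.sum_comm, ← Finset.sum_neg_distrib]
    refine Finset.sum_congr rfl fun j _ => ?_
    rw [← Finset.sum_mul, ← hrm j, Real.negMulLog]
    ring
  have epair : Hstat μ (fun ω => (q ω, r ω))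
      = ∑ i : ι, ∑ j : κ, Real.negMulLog (P i j) := by
    rw [Hstat_eq, Fintype.sum_prod_type]
    exact Finset.sum_congr rfl fun i _ => Finset.sum_congr rfl fun j _ => by rw [hfib i j]
  rw [epair, Hstat_eq, Hstat_eq, e1, e2]
  have : ∑ i : ι, ∑ j : κ, Real.negMulLog (P i j)
      = ∑ i : ι, ∑ j : κ, (P i j * Real.log (A i * B j) - P i j * Real.log (P i j))
        - ∑ i : ι, ∑ j : κ, P i j * Real.log (A i)
        - ∑ i : ι, ∑ j : κ, P i j * Real.log (B j) := by
    simp only [← Finset.sum_sub_distrib]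
    exact Finset.sum_congr rfl fun i _ => Finset.sum_congr rfl fun j _ => e4 i j
  rw [this]
  linarith [hbig]

lemma Hstat_le_log_card {ι : Type*} [Fintype ι] (μ : Measure Ω) [IsProbabilityMeasure μ]
    (q : Ω → ι) (hq : ∀ i, MeasurableSet (q ⁻¹' {i})) :
    Hstat μ q ≤ Real.log (Fintype.card ι) := by
  rcases isEmpty_or_nonempty ι with h | h
  · simp [Hstat_eq, Fintype.card_eq_zero]
  · have hn : 0 < (Fintype.card ι : ℝ) := by exact_mod_cast Fintype.card_pos
    set n : ℝ := (Fintype.card ι : ℝ) with hn'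
    have jensen := Real.concaveOn_negMulLog.le_map_sum
      (t := (Finset.univ : Finset ι)) (w := fun _ : ι => n⁻¹)
      (p := fun i => (μ (q ⁻¹' {i})).toReal)
      (fun i _ => by positivity)
      (by rw [Finset.sum_const, Finset.card_univ, nsmul_eq_mul]; field_simp; exact hn'.symm)
      (fun i _ => ENNReal.toReal_nonneg)
    have hsum : ∑ i : ι, n⁻¹ • (μ (q ⁻¹' {i})).toReal = n⁻¹ := by
      simp only [smul_eq_mul]
      rw [← Finset.mul_sum, sum_toReal_fibers_eq_one μ q hq, mul_one]
    rw [hsum] at jensen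
    have h2 : Real.negMulLog n⁻¹ = n⁻¹ * Real.log n := by
      rw [Real.negMulLog, Real.log_inv]; ring
    rw [h2] at jensen
    -- jensen : ∑ i, n⁻¹ • negMulLog (x i) ≤ n⁻¹ * log n
    rw [Hstat_eq]
    have h3 : ∑ i : ι, n⁻¹ • Real.negMulLog ((μ (q ⁻¹' {i})).toReal)
        = n⁻¹ * ∑ i : ι, Real.negMulLog ((μ (q ⁻¹' {i})).toReal) := by
      rw [Finset.mul_sum]; rfl
    rw [h3] at jensen
    calc ∑ i : ι, Real.negMulLog ((μ (q ⁻¹' {i})).toReal)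
        = n * (n⁻¹ * ∑ i : ι, Real.negMulLog ((μ (q ⁻¹' {i})).toReal)) := by
          field_simp
      _ ≤ n * (n⁻¹ * Real.log n) := by
          apply mul_le_mul_of_nonneg_left jensen (le_of_lt hn)
      _ = Real.log n := by field_simp

lemma le_Hstat_avg {ι : Type*} [Fintype ι] (F : Finset ℕ) (hF : F.Nonempty)
    (μs : ℕ → Measure Ω) [∀ k, IsProbabilityMeasure (μs k)]
    (q : Ω → ι) :
    (1 / (F.card : ℝ)) * ∑ k ∈ F, Hstat (μs k) q
      ≤ Hstat ((F.card : ℝ≥0∞)⁻¹ • ∑ k ∈ F, μs k) q := by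
  have hn : 0 < (F.card : ℝ) := by exact_mod_cast Finset.card_pos.mpr hF
  set n : ℝ := (F.card : ℝ) with hn'
  have happly : ∀ s : Set Ω, (((F.card : ℝ≥0∞)⁻¹ • ∑ k ∈ F, μs k) s).toReal
      = ∑ k ∈ F, n⁻¹ • (μs k s).toReal := by
    intro s
    rw [Measure.smul_apply, smul_eq_mul, ENNReal.toReal_mul]
    have : ((∑ k ∈ F, μs k) s) = ∑ k ∈ F, μs k s := by
      rw [Measure.coe_finset_sum, Finset.sum_apply]
    rw [this, ENNReal.toReal_sum (fun k _ => measure_ne_top _ _), ENNReal.toReal_inv,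
      Finset.mul_sum]
    simp [hn']
  rw [Hstat_eq]
  have jensen : ∀ i : ι, ∑ k ∈ F, n⁻¹ • Real.negMulLog ((μs k (q ⁻¹' {i})).toReal)
      ≤ Real.negMulLog (∑ k ∈ F, n⁻¹ • (μs k (q ⁻¹' {i})).toReal) := by
    intro i
    refine Real.concaveOn_negMulLog.le_map_sum (fun k _ => by positivity) ?_
      (fun k _ => ENNReal.toReal_nonneg)
    rw [Finset.sum_const, nsmul_eq_mul]
    field_simp
    exact hn'.symm
  calc (1 / n) * ∑ k ∈ F, Hstat (μs k) q
      = ∑ i : ι, ∑ k ∈ F, n⁻¹ • Real.negMulLog ((μs k (q ⁻¹' {i})).toReal) := by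
        rw [Finset.sum_comm]
        rw [one_div, Finset.mul_sum]
        refine Finset.sum_congr rfl fun k _ => ?_
        rw [Hstat_eq, Finset.mul_sum]
        rfl
    _ ≤ ∑ i : ι, Real.negMulLog (∑ k ∈ F, n⁻¹ • (μs k (q ⁻¹' {i})).toReal) :=
        Finset.sum_le_sum fun i _ => jensen i
    _ = ∑ i : ι, Real.negMulLog ((((F.card : ℝ≥0∞)⁻¹ • ∑ k ∈ F, μs k) (q ⁻¹' {i})).toReal) := by
        refine Finset.sum_congr rfl fun i _ => ?_
        rw [happly]

lemma Hstat_map {ι : Type*} [Fintype ι] {Ω' : Type*} [MeasurableSpace Ω'] (μ : Measure Ω)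
    (f : Ω → Ω') (hf : Measurable f) (q : Ω' → ι) (hq : ∀ i, MeasurableSet (q ⁻¹' {i})) :
    Hstat (Measure.map f μ) q = Hstat μ (q ∘ f) := by
  have : ∀ i : ι, (q ∘ f) ⁻¹' {i} = f ⁻¹' (q ⁻¹' {i}) := fun i => rfl
  simp only [Hstat, this, Measure.map_apply hf (hq _)]


end AuxEntropy

section Code

variable {X : Type*} [MetricSpace X] [CompactSpace X] [MeasurableSpace X] [BorelSpace X]
  {ι : Type*} [Fintype ι]

lemma measurable_iterT (T : X ≃ₜ X) (k : ℕ) : Measurable ((⇑T)^[k]) :=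
  T.continuous.measurable.iterate k

lemma codeIter_fiber_meas (T : X ≃ₜ X) (p : X → ι) (hp : ∀ i, MeasurableSet (p ⁻¹' {i}))
    (S : Finset ℕ) (u : S → ι) : MeasurableSet (codeIter T p S ⁻¹' {u}) := by
  have : codeIter T p S ⁻¹' {u} = ⋂ k : S, (⇑T)^[(k : ℕ)] ⁻¹' (p ⁻¹' {u k}) := by
    ext x
    simp only [Set.mem_preimage, Set.mem_singleton_iff, Set.mem_iInter, funext_iff]
    rfl
  rw [this]
  exact MeasurableSet.iInter fun k => measurable_iterT T _ (hp _)

lemma Hstat_codeIter_mono (T : X ≃ₜ X) (p : X → ι) (hp : ∀ i, MeasurableSet (p ⁻¹' {i}))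
    (μ : Measure X) [IsProbabilityMeasure μ] {S S' : Finset ℕ} (h : S ⊆ S') :
    Hstat μ (codeIter T p S) ≤ Hstat μ (codeIter T p S') := by
  have heq : codeIter T p S
      = (fun u : (S' → ι) => fun k : S => u ⟨k, h k.2⟩) ∘ codeIter T p S' := rfl
  rw [heq]
  exact Hstat_comp_le μ _ (codeIter_fiber_meas T p hp S') _

lemma Hstat_codeIter_union (T : X ≃ₜ X) (p : X → ι) (hp : ∀ i, MeasurableSet (p ⁻¹' {i}))
    (μ : Measure X) [IsProbabilityMeasure μ] (S S' : Finset ℕ) :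
    Hstat μ (codeIter T p (S ∪ S'))
      ≤ Hstat μ (codeIter T p S) + Hstat μ (codeIter T p S') := by
  classical
  set f : ((S → ι) × (S' → ι)) → ((S ∪ S' : Finset ℕ) → ι) := fun uv k =>
    if h : (k : ℕ) ∈ S then uv.1 ⟨k, h⟩ else uv.2 ⟨k, by
      rcases Finset.mem_union.mp k.2 with h' | h'
      · exact absurd h' h
      · exact h'⟩ with hf
  have heq : codeIter T p (S ∪ S')
      = f ∘ (fun x => (codeIter T p S x, codeIter T p S' x)) := by
    funext x
    funext k
    by_cases h : (k : ℕ) ∈ S <;> simp [hf, codeIter, h]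
  have hpairmeas : ∀ z : (S → ι) × (S' → ι),
      MeasurableSet ((fun x => (codeIter T p S x, codeIter T p S' x)) ⁻¹' {z}) := by
    intro z
    have : (fun x => (codeIter T p S x, codeIter T p S' x)) ⁻¹' {z}
        = codeIter T p S ⁻¹' {z.1} ∩ codeIter T p S' ⁻¹' {z.2} := by
      ext x; simp [Prod.ext_iff]
    rw [this]
    exact (codeIter_fiber_meas T p hp S _).inter (codeIter_fiber_meas T p hp S' _)
  rw [heq]
  calc Hstat μ (f ∘ fun x => (codeIter T p S x, codeIter T p S' x))
      ≤ Hstat μ (fun x => (codeIter T p S x, codeIter T p S' x)) :=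
        Hstat_comp_le μ _ hpairmeas f
    _ ≤ _ := Hstat_pair_le μ _ (codeIter_fiber_meas T p hp S) _ (codeIter_fiber_meas T p hp S')

lemma Hstat_codeIter_empty_le (T : X ≃ₜ X) (p : X → ι) (hp : ∀ i, MeasurableSet (p ⁻¹' {i}))
    (μ : Measure X) [IsProbabilityMeasure μ] :
    Hstat μ (codeIter T p (∅ : Finset ℕ)) ≤ 0 := by
  have h := Hstat_le_log_card μ (codeIter T p ∅) (codeIter_fiber_meas T p hp ∅)
  have hcard : Fintype.card (((∅ : Finset ℕ) : Finset ℕ) → ι) = 1 := by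
    simp [Fintype.card_fun]
  rw [hcard] at h
  simpa using h

lemma Hstat_codeIter_biUnion (T : X ≃ₜ X) (p : X → ι) (hp : ∀ i, MeasurableSet (p ⁻¹' {i}))
    (μ : Measure X) [IsProbabilityMeasure μ] (A : Finset ℕ) (G : ℕ → Finset ℕ) :
    Hstat μ (codeIter T p (A.biUnion G)) ≤ ∑ t ∈ A, Hstat μ (codeIter T p (G t)) := by
  classical
  induction A using Finset.induction with
  | empty =>
    simp only [Finset.biUnion_empty, Finset.sum_empty]
    refine (Hstat_le_log_card μ _ (codeIter_fiber_meas T p hp _)).trans ?_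
    refine Real.log_nonpos (Nat.cast_nonneg _) ?_
    rw [Nat.cast_le_one]
    exact Fintype.card_le_one_iff_subsingleton.mpr ⟨fun f g => funext fun k => (Finset.notMem_empty _ k.2).elim⟩
  | @insert a A ha ih =>
      rw [Finset.biUnion_insert, Finset.sum_insert ha]
      calc Hstat μ (codeIter T p (G a ∪ A.biUnion G))
          ≤ Hstat μ (codeIter T p (G a)) + Hstat μ (codeIter T p (A.biUnion G)) :=
            Hstat_codeIter_union T p hp μ _ _
        _ ≤ _ := by linarith

lemma Hstat_codeIter_shift (T : X ≃ₜ X) (p : X → ι) (hp : ∀ i, MeasurableSet (p ⁻¹' {i}))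
    (μ : Measure X) [IsProbabilityMeasure μ] (k m : ℕ) :
    Hstat (Measure.map ((⇑T)^[k]) μ) (codeIter T p (Finset.range m))
      = Hstat μ (codeIter T p (Finset.Ico k (k + m))) := by
  rw [Hstat_map μ _ (measurable_iterT T k) _ (codeIter_fiber_meas T p hp _)]
  set g : (↥(Finset.Ico k (k + m)) → ι) → (↥(Finset.range m) → ι) :=
    fun u j => u ⟨(j : ℕ) + k, by
      have := Finset.mem_range.mp j.2
      exact Finset.mem_Ico.mpr ⟨Nat.le_add_left _ _, by omega⟩⟩ with hg'
  have hg : Function.Injective g := by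
    intro u v h
    funext i
    have hi := Finset.mem_Ico.mp i.2
    set j : ↥(Finset.range m) := ⟨(i : ℕ) - k, Finset.mem_range.mpr (by omega)⟩
    have h2 := congrFun h j
    have hidx : (⟨(j : ℕ) + k, by have := Finset.mem_range.mp j.2; exact Finset.mem_Ico.mpr ⟨Nat.le_add_left _ _, by omega⟩⟩ : ↥(Finset.Ico k (k + m))) = i := by
      exact Subtype.ext (by simp [j]; omega)
    simpa [hg', hidx] using h2
  have hcomp : codeIter T p (Finset.range m) ∘ (⇑T)^[k]
      = g ∘ codeIter T p (Finset.Ico k (k + m)) := by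
    funext x
    funext j
    simp only [Function.comp_apply, codeIter, hg']
    rw [Function.iterate_add_apply]
  rw [hcomp, Hstat_comp_inj μ _ hg]

lemma Hstat_codeIter_card_le (T : X ≃ₜ X) (p : X → ι) (hp : ∀ i, MeasurableSet (p ⁻¹' {i}))
    (μ : Measure X) [IsProbabilityMeasure μ] (S : Finset ℕ) :
    Hstat μ (codeIter T p S) ≤ (S.card : ℝ) * Real.log (Fintype.card ι) := by
  have h := Hstat_le_log_card μ (codeIter T p S) (codeIter_fiber_meas T p hp S)
  have hcard : Fintype.card (↥S → ι) = Fintype.card ι ^ S.card := by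
    simp [Fintype.card_fun]
  rw [hcard] at h
  calc Hstat μ (codeIter T p S) ≤ Real.log ((Fintype.card ι ^ S.card : ℕ) : ℝ) := h
    _ = (S.card : ℝ) * Real.log (Fintype.card ι) := by
        rw [Nat.cast_pow, Real.log_pow]

end Code

/-- for a Borel probability measure `μ`, a finite Borel partition `P`
(given as the fibers of a surjective map `p : X → ι` with Borel fibers), a nonempty finite
set `F ⊆ ℕ` and `m ≥ 1`, setting `μ^F = (1/#F)·∑_{k∈F} (T^k)_*μ`, one has
`(1/m)·H_{μ^F}(P^m) ≥ (1/#F)·H_μ(P^F) − 3m·log(#P)·(#∂F/#F)`. -/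
theorem statement6 {X : Type*} [MetricSpace X] [CompactSpace X]
    [MeasurableSpace X] [BorelSpace X] (T : X ≃ₜ X)
    {ι : Type*} [Fintype ι] (p : X → ι)
    (hpBorel : ∀ i : ι, MeasurableSet (p ⁻¹' {i})) (hpsurj : Function.Surjective p)
    (μ : Measure X) [IsProbabilityMeasure μ]
    (F : Finset ℕ) (hF : F.Nonempty) (m : ℕ) (hm : 1 ≤ m) :
    (1 / (m : ℝ)) *
        Hstat ((F.card : ℝ≥0∞)⁻¹ • ∑ k ∈ F, Measure.map ((⇑T)^[k]) μ)
          (codeIter T p (Finset.range m))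
      ≥ (1 / (F.card : ℝ)) * Hstat μ (codeIter T p F)
        - 3 * m * Real.log (Fintype.card ι) *
            ((symmDiff F (F.image (· + 1))).card / (F.card : ℝ)) := by
  classical
  have hX : Nonempty X := by
    by_contra h
    have h0 : (Set.univ : Set X) = ∅ := Set.univ_eq_empty_iff.mpr (not_nonempty_iff.mp h)
    have := measure_univ (μ := μ)
    rw [h0] at this
    simp at this
  have hι : Nonempty ι := ⟨p (Classical.arbitrary X)⟩
  set L : ℝ := Real.log (Fintype.card ι) with hL'
  have hL : 0 ≤ L := Real.log_nonneg (by exact_mod_cast Fintype.card_pos)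
  have hn0 : 0 < F.card := Finset.card_pos.mpr hF
  have hN : 0 < (F.card : ℝ) := by exact_mod_cast hn0
  have hM : 0 < (m : ℝ) := by exact_mod_cast hm
  have hm0 : 0 < m := hm
  -- probability instances for pushforwards
  have : ∀ k : ℕ, IsProbabilityMeasure (Measure.map ((⇑T)^[k]) μ) :=
    fun k => Measure.isProbabilityMeasure_map (measurable_iterT T k).aemeasurable
  -- boundary set
  set B : Finset ℕ := F \ F.image (· + 1) with hB'
  have hBsub : B ⊆ symmDiff F (F.image (· + 1)) := by
    rw [symmDiff_def]
    exact Finset.subset_union_left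
  have hbb : (B.card : ℝ) ≤ ((symmDiff F (F.image (· + 1))).card : ℝ) := by
    exact_mod_cast Finset.card_le_card hBsub
  -- Step 1 : concavity
  have hconc := le_Hstat_avg (Ω := X) F hF (fun k => Measure.map ((⇑T)^[k]) μ)
    (codeIter T p (Finset.range m))
  have hshift : ∑ k ∈ F, Hstat (Measure.map ((⇑T)^[k]) μ) (codeIter T p (Finset.range m))
      = ∑ k ∈ F, Hstat μ (codeIter T p (Finset.Ico k (k + m))) :=
    Finset.sum_congr rfl fun k _ => Hstat_codeIter_shift T p hpBorel μ k m
  rw [hshift] at hconc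
  set Sm : ℝ := ∑ k ∈ F, Hstat μ (codeIter T p (Finset.Ico k (k + m))) with hSm'
  set Hν : ℝ := Hstat ((F.card : ℝ≥0∞)⁻¹ • ∑ k ∈ F, Measure.map ((⇑T)^[k]) μ)
    (codeIter T p (Finset.range m)) with hHν'
  set H : ℝ := Hstat μ (codeIter T p F) with hH'
  -- Step 2 : per shift-class estimate
  set Rj : ℕ → Finset ℕ := fun j => F.filter (fun l => l < j ∨ l - (l - j) % m ∉ F) with hRj'
  have step2 : ∀ j ∈ Finset.range m,
      H ≤ (∑ k ∈ F.filter (fun k => k % m = j), Hstat μ (codeIter T p (Finset.Ico k (k + m))))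
        + ((Rj j).card : ℝ) * L := by
    intro j hj
    have hjm : j < m := Finset.mem_range.mp hj
    have hcov : F ⊆ ((F.filter (fun k => k % m = j)).biUnion (fun k => Finset.Ico k (k + m)))
        ∪ ((Rj j).biUnion (fun l => {l})) := by
      intro l hl
      rcases Decidable.em (l < j ∨ l - (l - j) % m ∉ F) with hcase | hcase
      · refine Finset.mem_union_right _ (Finset.mem_biUnion.mpr ⟨l, ?_, ?_⟩)
        · exact Finset.mem_filter.mpr ⟨hl, hcase⟩
        · exact Finset.mem_singleton_self l
      · push_neg at hcase
        obtain ⟨hjl, hkF⟩ := hcase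
        have hjl' : j ≤ l := hjl
        set d : ℕ := l - j with hd'
        have hdm := Nat.div_add_mod d m
        have hmod : d % m < m := Nat.mod_lt _ hm0
        have hkeq : l - d % m = j + m * (d / m) := by omega
        refine Finset.mem_union_left _ (Finset.mem_biUnion.mpr ⟨l - d % m, ?_, ?_⟩)
        · refine Finset.mem_filter.mpr ⟨hkF, ?_⟩
          rw [hkeq, Nat.add_mul_mod_self_left, Nat.mod_eq_of_lt hjm]
        · exact Finset.mem_Ico.mpr ⟨by omega, by omega⟩
    calc H ≤ Hstat μ (codeIter T p
          (((F.filter (fun k => k % m = j)).biUnion (fun k => Finset.Ico k (k + m)))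
            ∪ ((Rj j).biUnion (fun l => {l})))) :=
            Hstat_codeIter_mono T p hpBorel μ hcov
      _ ≤ Hstat μ (codeIter T p
            ((F.filter (fun k => k % m = j)).biUnion (fun k => Finset.Ico k (k + m))))
          + Hstat μ (codeIter T p ((Rj j).biUnion (fun l => {l}))) :=
            Hstat_codeIter_union T p hpBorel μ _ _
      _ ≤ (∑ k ∈ F.filter (fun k => k % m = j), Hstat μ (codeIter T p (Finset.Ico k (k + m))))
          + ∑ l ∈ Rj j, Hstat μ (codeIter T p {l}) := by
            have h1 := Hstat_codeIter_biUnion T p hpBorel μ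
              (F.filter (fun k => k % m = j)) (fun k => Finset.Ico k (k + m))
            have h2 := Hstat_codeIter_biUnion T p hpBorel μ (Rj j) (fun l => {l})
            exact add_le_add h1 h2
      _ ≤ _ := by
            refine add_le_add le_rfl ?_
            calc ∑ l ∈ Rj j, Hstat μ (codeIter T p {l})
                ≤ ∑ l ∈ Rj j, L := by
                  refine Finset.sum_le_sum fun l _ => ?_
                  have := Hstat_codeIter_card_le T p hpBorel μ {l}
                  simpa using this
              _ = ((Rj j).card : ℝ) * L := by
                  rw [Finset.sum_const, nsmul_eq_mul]
    -- end step2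
  -- Step 3 : sum over j
  have hsum2 : (m : ℝ) * H ≤ Sm + ((∑ j ∈ Finset.range m, (Rj j).card : ℕ) : ℝ) * L := by
    have hs := Finset.sum_le_sum step2
    rw [Finset.sum_const, Finset.card_range, nsmul_eq_mul] at hs
    have hfib : ∑ j ∈ Finset.range m, ∑ k ∈ F.filter (fun k => k % m = j),
        Hstat μ (codeIter T p (Finset.Ico k (k + m))) = Sm := by
      rw [hSm']
      exact Finset.sum_fiberwise_of_maps_to (fun k _ => Finset.mem_range.mpr (Nat.mod_lt _ hm0)) _
    calc (m : ℝ) * H ≤ ∑ j ∈ Finset.range m,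
          ((∑ k ∈ F.filter (fun k => k % m = j), Hstat μ (codeIter T p (Finset.Ico k (k + m))))
            + ((Rj j).card : ℝ) * L) := hs
      _ = Sm + ((∑ j ∈ Finset.range m, (Rj j).card : ℕ) : ℝ) * L := by
          rw [Finset.sum_add_distrib, hfib, ← Finset.sum_mul, Nat.cast_sum]
  -- Step 4 : counting the bad sets
  have hRsub : ∀ j ∈ Finset.range m, Rj j ⊆ B.biUnion (fun r => Finset.Ico r (r + m)) := by
    intro j hj l hl
    have hjm : j < m := Finset.mem_range.mp hj
    obtain ⟨hlF, hcase⟩ := Finset.mem_filter.mp hl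
    rcases hcase with hlt | hkF
    · -- l < j : use the minimum of F
      refine Finset.mem_biUnion.mpr ⟨F.min' hF, ?_, ?_⟩
      · refine Finset.mem_sdiff.mpr ⟨F.min'_mem hF, fun hmem => ?_⟩
        obtain ⟨a, haF, ha⟩ := Finset.mem_image.mp hmem
        have := F.min'_le a haF
        omega
      · have h1 := F.min'_le l hlF
        exact Finset.mem_Ico.mpr ⟨h1, by omega⟩
    · -- the covering time is not in F
      set k : ℕ := l - (l - j) % m with hk'
      have hx1 : (l - j) % m < m := Nat.mod_lt _ hm0
      have hx2 : (l - j) % m ≤ l - j := Nat.mod_le _ _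
      have hkl : k < l := by
        rcases Nat.lt_or_ge l 1 with h | h
        · exfalso
          interval_cases l
          · simp [hk'] at hkF
            exact hkF hlF
        · rcases Nat.eq_or_lt_of_le (Nat.sub_le l ((l - j) % m)) with he | hlt'
          · exfalso
            rw [hk'] at hkF
            rw [he] at hkF
            exact hkF hlF
          · omega
      set s : Finset ℕ := F.filter (fun t => k < t ∧ t ≤ l) with hs'
      have hls : l ∈ s := Finset.mem_filter.mpr ⟨hlF, hkl, le_refl l⟩
      have hsne : s.Nonempty := ⟨l, hls⟩
      set r : ℕ := s.min' hsne with hr'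
      have hrs := s.min'_mem hsne
      obtain ⟨hrF, hkr, hrl⟩ : r ∈ F ∧ k < r ∧ r ≤ l := by
        have := Finset.mem_filter.mp hrs
        exact ⟨this.1, this.2.1, this.2.2⟩
      refine Finset.mem_biUnion.mpr ⟨r, ?_, ?_⟩
      · refine Finset.mem_sdiff.mpr ⟨hrF, fun hmem => ?_⟩
        obtain ⟨a, haF, ha⟩ := Finset.mem_image.mp hmem
        -- a + 1 = r
        have hak : k ≤ a := by omega
        rcases Nat.eq_or_lt_of_le hak with he | hlt'
        · rw [← he] at haF
          exact hkF haF
        · have : a ∈ s := Finset.mem_filter.mpr ⟨haF, hlt', by omega⟩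
          have := s.min'_le a this
          omega
      · exact Finset.mem_Ico.mpr ⟨hrl, by omega⟩
  have hRcard : (∑ j ∈ Finset.range m, (Rj j).card) ≤ m * (B.card * m) := by
    calc ∑ j ∈ Finset.range m, (Rj j).card
        ≤ ∑ j ∈ Finset.range m, (B.biUnion (fun r => Finset.Ico r (r + m))).card :=
          Finset.sum_le_sum fun j hj => Finset.card_le_card (hRsub j hj)
      _ ≤ ∑ j ∈ Finset.range m, (B.card * m) := by
          refine Finset.sum_le_sum fun j _ => ?_
          calc (B.biUnion (fun r => Finset.Ico r (r + m))).card
              ≤ ∑ r ∈ B, (Finset.Ico r (r + m)).card := Finset.card_biUnion_le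
            _ = B.card * m := by
                rw [Finset.sum_congr rfl fun r _ => Nat.card_Ico r (r + m)]
                simp [Finset.sum_const, Nat.add_sub_cancel_left, mul_comm]
      _ = m * (B.card * m) := by rw [Finset.sum_const, Finset.card_range, smul_eq_mul]
  -- Step 5 : put everything together
  have k1 : Sm ≤ (F.card : ℝ) * Hν := by
    rw [one_div] at hconc
    exact (inv_mul_le_iff₀ hN).mp hconc
  have k3 : ((∑ j ∈ Finset.range m, (Rj j).card : ℕ) : ℝ) * L
      ≤ 3 * (m : ℝ) * (m : ℝ) * ((symmDiff F (F.image (· + 1))).card : ℝ) * L := by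
    refine mul_le_mul_of_nonneg_right ?_ hL
    have h1 : ((∑ j ∈ Finset.range m, (Rj j).card : ℕ) : ℝ) ≤ (m : ℝ) * ((B.card : ℝ) * m) := by
      exact_mod_cast hRcard
    have h2 : (m : ℝ) * (m : ℝ) * (B.card : ℝ)
        ≤ (m : ℝ) * (m : ℝ) * ((symmDiff F (F.image (· + 1))).card : ℝ) :=
      mul_le_mul_of_nonneg_left hbb (by positivity)
    have h3 : 0 ≤ (m : ℝ) * (m : ℝ) * ((symmDiff F (F.image (· + 1))).card : ℝ) := by positivity
    linarith [h1, h2, h3]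
  have key : (m : ℝ) * H
      - 3 * (m : ℝ) * (m : ℝ) * ((symmDiff F (F.image (· + 1))).card : ℝ) * L
      ≤ (F.card : ℝ) * Hν := by linarith
  have expand : (1 / (m : ℝ)) * Hν
      - ((1 / (F.card : ℝ)) * H
        - 3 * (m : ℝ) * L * (((symmDiff F (F.image (· + 1))).card : ℝ) / (F.card : ℝ)))
      = (1 / ((m : ℝ) * (F.card : ℝ)))
        * (((F.card : ℝ) * Hν)
          - ((m : ℝ) * H
            - 3 * (m : ℝ) * (m : ℝ) * ((symmDiff F (F.image (· + 1))).card : ℝ) * L)) := by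
    field_simp
  rw [ge_iff_le, ← sub_nonneg, expand]
  have hpos : 0 < 1 / ((m : ℝ) * (F.card : ℝ)) := by positivity
  have hnn : 0 ≤ ((F.card : ℝ) * Hν)
      - ((m : ℝ) * H
        - 3 * (m : ℝ) * (m : ℝ) * ((symmDiff F (F.image (· + 1))).card : ℝ) * L) := by
    linarith
  positivity


end SRB
end
end

section
/- Let μ be a Borel probability measure on X, let P be a finite Borel partition of X, and let m ≥ 1 be an integer. Let F be a Borel measurable map from X to the finite subsets of ℕ taking at most countably many values, with 0 < ∫ #F(x) dμ(x) < ∞, and define the Borel probability measure μ^F := (∫ Σ_{k∈F(x)} δ_{T^k x} dμ(x)) / (∫ #F(x) dμ(x)). Then ((∫ #F(x) dμ(x))/m)·H_{μ^F}(P^m) ≥ ∫ −log μ(P^{F(x)}(x)) dμ(x) − H_μ(F) − 3m·log(#P)·∫ #∂F(x) dμ(x), where H_μ(F) := −Σ_E μ({x : F(x) = E})·log μ({x : F(x) = E}), the sum ranging over the finite sets E ⊆ ℕ in the range of F (this entropy may be +∞), and with the convention P^∅(x) = X. -/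
open MeasureTheory Filter Topology
open scoped ENNReal

noncomputable section

namespace SRB7


/-- Gibbs' inequality for finite sums. -/
lemma gibbs {κ : Type*} (s : Finset κ) (f g : κ → ℝ)
    (hf : ∀ i ∈ s, 0 ≤ f i) (hg : ∀ i ∈ s, 0 ≤ g i)
    (heq : ∑ i ∈ s, f i = ∑ i ∈ s, g i)
    (hz : ∀ i ∈ s, g i = 0 → f i = 0) :
    ∑ i ∈ s, f i * (-Real.log (f i)) ≤ ∑ i ∈ s, f i * (-Real.log (g i)) := by
  have key : ∀ i ∈ s, f i * (-Real.log (f i)) - f i * (-Real.log (g i)) ≤ g i - f i := by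
    intro i hi
    rcases eq_or_lt_of_le (hf i hi) with h0 | h0
    · simp [← h0]; exact hg i hi
    · have hgpos : 0 < g i := by
        rcases eq_or_lt_of_le (hg i hi) with h0' | h0'
        · exact absurd (hz i hi h0'.symm) (by positivity)
        · exact h0'
      have hlog : Real.log (g i / f i) ≤ g i / f i - 1 :=
        Real.log_le_sub_one_of_pos (by positivity)
      rw [Real.log_div hgpos.ne' h0.ne'] at hlog
      have h1 := mul_le_mul_of_nonneg_left hlog h0.le
      have h2 : f i * (g i / f i) = g i := by field_simp
      nlinarith [h1, h2]
  have := Finset.sum_le_sum key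
  rw [Finset.sum_sub_distrib, Finset.sum_sub_distrib] at this
  linarith [heq]

section Ent
variable {α : Type*} [MeasurableSpace α] {κ : Type*} [Fintype κ] {κ' : Type*} [Fintype κ']

/-- entropy of a finite-valued map w.r.t. a measure. -/
def ent (ρ : Measure α) (r : α → κ) : ℝ :=
  ∑ i : κ, (ρ (r ⁻¹' {i})).toReal * (-Real.log (ρ (r ⁻¹' {i})).toReal)

variable {ρ : Measure α}

lemma fiber_ne_top (huniv : ρ Set.univ = 1) (s : Set α) : ρ s ≠ ∞ :=
  ((measure_mono (Set.subset_univ s)).trans_lt (by simp [huniv])).ne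

lemma fiber_le_one (huniv : ρ Set.univ = 1) (s : Set α) : (ρ s).toReal ≤ 1 := by
  have h := measure_mono (Set.subset_univ s) (μ := ρ)
  rw [huniv] at h
  simpa using ENNReal.toReal_mono (by simp) h

lemma sum_fibers {r : α → κ} (hr : ∀ i, MeasurableSet (r ⁻¹' {i})) :
    ∑ i : κ, ρ (r ⁻¹' {i}) = ρ Set.univ := by
  have := sum_measure_preimage_singleton (μ := ρ) (Finset.univ : Finset κ)
    (f := r) (fun y _ => hr y)
  simpa using this

lemma sum_toReal_fibers (huniv : ρ Set.univ = 1) {r : α → κ}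
    (hr : ∀ i, MeasurableSet (r ⁻¹' {i})) :
    ∑ i : κ, (ρ (r ⁻¹' {i})).toReal = 1 := by
  rw [← ENNReal.toReal_sum (fun a _ => fiber_ne_top huniv _), sum_fibers hr, huniv,
    ENNReal.toReal_one]

lemma ent_term_nonneg (huniv : ρ Set.univ = 1) (s : Set α) :
    0 ≤ (ρ s).toReal * (-Real.log (ρ s).toReal) := by
  apply mul_nonneg ENNReal.toReal_nonneg
  simpa using Real.log_nonpos ENNReal.toReal_nonneg (fiber_le_one huniv s)

lemma ent_nonneg (huniv : ρ Set.univ = 1) (r : α → κ) : 0 ≤ ent ρ r :=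
  Finset.sum_nonneg fun i _ => ent_term_nonneg huniv _

lemma ent_le_log_card (huniv : ρ Set.univ = 1) [Nonempty κ] {r : α → κ}
    (hr : ∀ i, MeasurableSet (r ⁻¹' {i})) :
    ent ρ r ≤ Real.log (Fintype.card κ) := by
  have hcard : (0:ℝ) < (Fintype.card κ : ℝ) := by
    exact_mod_cast Fintype.card_pos
  have := gibbs (Finset.univ : Finset κ) (fun i => (ρ (r ⁻¹' {i})).toReal)
    (fun _ => ((Fintype.card κ : ℝ))⁻¹)
    (fun i _ => ENNReal.toReal_nonneg) (fun i _ => by positivity)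
    (by rw [sum_toReal_fibers huniv hr, Finset.sum_const, Finset.card_univ, nsmul_eq_mul,
          mul_inv_cancel₀ hcard.ne'])
    (fun i _ h => absurd h (by positivity))
  refine (this.trans_eq ?_)
  rw [← Finset.sum_mul, sum_toReal_fibers huniv hr, Real.log_inv]
  ring

lemma ent_comp_le (huniv : ρ Set.univ = 1) {r : α → κ} (f : κ → κ')
    (hr : ∀ i, MeasurableSet (r ⁻¹' {i})) :
    ent ρ (fun x => f (r x)) ≤ ent ρ r := by
  classical
  have hfib : ∀ j : κ', ρ ((fun x => f (r x)) ⁻¹' {j})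
      = ∑ i ∈ Finset.univ.filter (fun i => f i = j), ρ (r ⁻¹' {i}) := by
    intro j
    rw [sum_measure_preimage_singleton _ (fun y _ => hr y)]
    congr 1
    ext x
    simp [Set.mem_preimage, Finset.mem_coe, Finset.mem_filter]
  have hmono : ∀ i : κ, (ρ (r ⁻¹' {i})).toReal
      * (-Real.log (ρ ((fun x => f (r x)) ⁻¹' {f i})).toReal)
      ≤ (ρ (r ⁻¹' {i})).toReal * (-Real.log (ρ (r ⁻¹' {i})).toReal) := by
    intro i
    rcases eq_or_lt_of_le (ENNReal.toReal_nonneg (a := ρ (r ⁻¹' {i}))) with h0 | h0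
    · rw [← h0]; simp
    · apply mul_le_mul_of_nonneg_left _ ENNReal.toReal_nonneg
      apply neg_le_neg
      apply Real.log_le_log h0
      apply ENNReal.toReal_mono (fiber_ne_top huniv _)
      exact measure_mono (fun x hx => by simp only [Set.mem_preimage, Set.mem_singleton_iff] at hx ⊢; rw [hx])
  calc ent ρ (fun x => f (r x))
      = ∑ j : κ', ∑ i ∈ Finset.univ.filter (fun i => f i = j),
          (ρ (r ⁻¹' {i})).toReal * (-Real.log (ρ ((fun x => f (r x)) ⁻¹' {j})).toReal) := by
        unfold ent
        refine Finset.sum_congr rfl fun j _ => ?_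
        rw [← Finset.sum_mul, ← ENNReal.toReal_sum (fun a _ => fiber_ne_top huniv _), ← hfib]
    _ = ∑ i : κ, (ρ (r ⁻¹' {i})).toReal
          * (-Real.log (ρ ((fun x => f (r x)) ⁻¹' {f i})).toReal) := by
        rw [← Finset.sum_fiberwise_of_maps_to (fun i _ => Finset.mem_univ (f i))]
        refine Finset.sum_congr rfl fun j _ => Finset.sum_congr rfl fun i hi => ?_
        rw [(Finset.mem_filter.1 hi).2]
    _ ≤ ent ρ r := Finset.sum_le_sum fun i _ => hmono i

lemma ent_pair_le (huniv : ρ Set.univ = 1) {r : α → κ} {s : α → κ'}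
    (hr : ∀ i, MeasurableSet (r ⁻¹' {i})) (hs : ∀ j, MeasurableSet (s ⁻¹' {j})) :
    ent ρ (fun x => (r x, s x)) ≤ ent ρ r + ent ρ s := by
  classical
  have hfst : ∀ (x : κ) (y : κ'), ((x, y).1) = x := fun _ _ => rfl
  have hsnd : ∀ (x : κ) (y : κ'), ((x, y).2) = y := fun _ _ => rfl
  set P := fun x => (r x, s x) with hP
  have hPfib : ∀ ij : κ × κ', P ⁻¹' {ij} = r ⁻¹' {ij.1} ∩ s ⁻¹' {ij.2} := by
    intro ij; ext x; simp [hP, Prod.ext_iff]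
  have hPmeas : ∀ ij : κ × κ', MeasurableSet (P ⁻¹' {ij}) := by
    intro ij; rw [hPfib]; exact (hr _).inter (hs _)
  -- marginals
  have hmarg1 : ∀ i : κ, ∑ j : κ', (ρ (P ⁻¹' {(i,j)})).toReal = (ρ (r ⁻¹' {i})).toReal := by
    intro i
    rw [← ENNReal.toReal_sum (fun a _ => fiber_ne_top huniv _)]
    congr 1
    have : ∀ j : κ', ρ (P ⁻¹' {(i,j)}) = ρ.restrict (r ⁻¹' {i}) (s ⁻¹' {j}) := by
      intro j; rw [Measure.restrict_apply (hs j), hPfib, Set.inter_comm]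
    simp_rw [this]
    rw [sum_fibers (ρ := ρ.restrict (r ⁻¹' {i})) hs, Measure.restrict_apply_univ]
  have hmarg2 : ∀ j : κ', ∑ i : κ, (ρ (P ⁻¹' {(i,j)})).toReal = (ρ (s ⁻¹' {j})).toReal := by
    intro j
    rw [← ENNReal.toReal_sum (fun a _ => fiber_ne_top huniv _)]
    congr 1
    have : ∀ i : κ, ρ (P ⁻¹' {(i,j)}) = ρ.restrict (s ⁻¹' {j}) (r ⁻¹' {i}) := by
      intro i; rw [Measure.restrict_apply (hr i), hPfib]
    simp_rw [this]
    rw [sum_fibers (ρ := ρ.restrict (s ⁻¹' {j})) hr, Measure.restrict_apply_univ]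
  have hgibbs := gibbs (Finset.univ : Finset (κ × κ'))
    (fun ij => (ρ (P ⁻¹' {ij})).toReal)
    (fun ij => (ρ (r ⁻¹' {ij.1})).toReal * (ρ (s ⁻¹' {ij.2})).toReal)
    (fun _ _ => ENNReal.toReal_nonneg)
    (fun _ _ => mul_nonneg ENNReal.toReal_nonneg ENNReal.toReal_nonneg)
    (by
      rw [sum_toReal_fibers huniv hPmeas, Fintype.sum_prod_type]
      simp_rw [← Finset.mul_sum, sum_toReal_fibers huniv hs, mul_one,
        sum_toReal_fibers huniv hr])
    (by
      intro ij _ h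
      rcases mul_eq_zero.1 h with h | h
      · have : ρ (P ⁻¹' {ij}) ≤ ρ (r ⁻¹' {ij.1}) := by
          rw [hPfib]; exact measure_mono Set.inter_subset_left
        have h' : ρ (r ⁻¹' {ij.1}) = 0 := by
          have := fiber_ne_top huniv (ρ := ρ) (r ⁻¹' {ij.1})
          exact (ENNReal.toReal_eq_zero_iff _).1 h |>.resolve_right this
        simp [le_antisymm (h' ▸ this) (zero_le)]
      · have : ρ (P ⁻¹' {ij}) ≤ ρ (s ⁻¹' {ij.2}) := by
          rw [hPfib]; exact measure_mono Set.inter_subset_right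
        have h' : ρ (s ⁻¹' {ij.2}) = 0 := by
          have := fiber_ne_top huniv (ρ := ρ) (s ⁻¹' {ij.2})
          exact (ENNReal.toReal_eq_zero_iff _).1 h |>.resolve_right this
        simp [le_antisymm (h' ▸ this) (zero_le)])
  refine le_trans hgibbs (le_of_eq ?_)
  have hsplit : ∀ ij : κ × κ', (ρ (P ⁻¹' {ij})).toReal
      * (-Real.log ((ρ (r ⁻¹' {ij.1})).toReal * (ρ (s ⁻¹' {ij.2})).toReal))
      = (ρ (P ⁻¹' {ij})).toReal * (-Real.log (ρ (r ⁻¹' {ij.1})).toReal)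
        + (ρ (P ⁻¹' {ij})).toReal * (-Real.log (ρ (s ⁻¹' {ij.2})).toReal) := by
    intro ij
    rcases eq_or_ne ((ρ (P ⁻¹' {ij})).toReal) 0 with h0 | h0
    · simp [h0]
    · have h1 : (ρ (r ⁻¹' {ij.1})).toReal ≠ 0 := by
        intro h
        apply h0
        have : ρ (P ⁻¹' {ij}) ≤ ρ (r ⁻¹' {ij.1}) := by
          rw [hPfib]; exact measure_mono Set.inter_subset_left
        have h' : ρ (r ⁻¹' {ij.1}) = 0 :=
          (ENNReal.toReal_eq_zero_iff _).1 h |>.resolve_right (fiber_ne_top huniv _)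
        simp [le_antisymm (h' ▸ this) (zero_le)]
      have h2 : (ρ (s ⁻¹' {ij.2})).toReal ≠ 0 := by
        intro h
        apply h0
        have : ρ (P ⁻¹' {ij}) ≤ ρ (s ⁻¹' {ij.2}) := by
          rw [hPfib]; exact measure_mono Set.inter_subset_right
        have h' : ρ (s ⁻¹' {ij.2}) = 0 :=
          (ENNReal.toReal_eq_zero_iff _).1 h |>.resolve_right (fiber_ne_top huniv _)
        simp [le_antisymm (h' ▸ this) (zero_le)]
      rw [Real.log_mul h1 h2]
      ring
  calc ∑ ij : κ × κ', (ρ (P ⁻¹' {ij})).toReal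
        * (-Real.log ((ρ (r ⁻¹' {ij.1})).toReal * (ρ (s ⁻¹' {ij.2})).toReal))
      = ∑ ij : κ × κ', ((ρ (P ⁻¹' {ij})).toReal * (-Real.log (ρ (r ⁻¹' {ij.1})).toReal)
        + (ρ (P ⁻¹' {ij})).toReal * (-Real.log (ρ (s ⁻¹' {ij.2})).toReal)) :=
        Finset.sum_congr rfl fun ij _ => hsplit ij
    _ = ent ρ r + ent ρ s := by
        rw [Finset.sum_add_distrib]
        congr 1
        · rw [Fintype.sum_prod_type]
          unfold ent
          refine Finset.sum_congr rfl fun i _ => ?_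
          simp only [hfst]
          rw [← Finset.sum_mul, hmarg1]
        · rw [Fintype.sum_prod_type_right]
          unfold ent
          refine Finset.sum_congr rfl fun j _ => ?_
          simp only [hsnd]
          rw [← Finset.sum_mul, hmarg2]

end Ent

/-- block starts of a finite set of naturals -/
def bs (E : Finset ℕ) : Finset ℕ := E \ E.image (· + 1)

lemma bs_subset_symmDiff (E : Finset ℕ) : bs E ⊆ symmDiff E (E.image (· + 1)) := by
  intro k hk
  rw [Finset.mem_symmDiff]
  exact Or.inl (Finset.mem_sdiff.1 hk |> fun h => ⟨h.1, h.2⟩)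

open scoped Classical in
lemma exists_window (E : Finset ℕ) {m : ℕ} (hm : 1 ≤ m) {j r : ℕ} (hj : j ∈ E) (hr : r < m) :
    ∃ k ∈ (E.filter (fun k => k % m = r)) ∪ bs E, k ≤ j ∧ j < k + m := by
  classical
  have hex : ∃ a, a ≤ j ∧ ∀ i, a ≤ i → i ≤ j → i ∈ E := by
    refine ⟨j, le_rfl, fun i h1 h2 => ?_⟩
    have : i = j := le_antisymm h2 h1
    rwa [this]
  set a := Nat.find hex with ha_def
  have ha : a ≤ j ∧ ∀ i, a ≤ i → i ≤ j → i ∈ E := Nat.find_spec hex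
  have haE : a ∈ E := ha.2 a le_rfl ha.1
  have habs : a ∈ bs E := by
    rw [bs, Finset.mem_sdiff]
    refine ⟨haE, fun hmem => ?_⟩
    obtain ⟨b, hbE, hb⟩ := Finset.mem_image.1 hmem
    have hba : b < a := by omega
    refine Nat.find_min hex hba ⟨by omega, fun i h1 h2 => ?_⟩
    rcases eq_or_lt_of_le h1 with h | h
    · rwa [← h]
    · exact ha.2 i (by omega) h2
  by_cases hcase : j < a + m
  · exact ⟨a, Finset.mem_union_right _ habs, ha.1, hcase⟩
  · push_neg at hcase
    set k := r + m * ((j - r) / m) with hk_def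
    have hrj : r ≤ j := by omega
    have hdm := Nat.div_add_mod (j - r) m
    have hmod : (j - r) % m < m := Nat.mod_lt _ (show 0 < m by omega)
    have hk_le : k ≤ j := by omega
    have hj_lt : j < k + m := by omega
    have hka : a + 1 ≤ k := by omega
    have hkE : k ∈ E := ha.2 k (by omega) hk_le
    have hkr : k % m = r := by
      rw [hk_def, Nat.add_mul_mod_self_left, Nat.mod_eq_of_lt hr]
    exact ⟨k, Finset.mem_union_left _ (Finset.mem_filter.2 ⟨hkE, hkr⟩), hk_le, hj_lt⟩

lemma sum_filter_mod {M : Type*} [AddCommMonoid M] (E : Finset ℕ) {m : ℕ} (hm : 1 ≤ m)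
    (f : ℕ → M) :
    ∑ r ∈ Finset.range m, ∑ k ∈ E.filter (fun k => k % m = r), f k = ∑ k ∈ E, f k := by
  classical
  exact Finset.sum_fiberwise_of_maps_to (fun k _ => Finset.mem_range.2 (Nat.mod_lt _ hm)) f


set_option maxHeartbeats 1000000
section Code
variable {X : Type*} [MeasurableSpace X] {ι : Type*} [Fintype ι]
variable {f : X → X} {p : X → ι}

lemma measSet_codeFiber {β : Type*} {D : Finset ℕ} (q₀ : X → β)
    (hq : ∀ b, MeasurableSet (q₀ ⁻¹' {b})) (hf : ∀ k : ℕ, Measurable (f^[k]))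
    (τ : ↥D → ℕ) (g : ↥D → β) :
    MeasurableSet ((fun y (k : ↥D) => q₀ (f^[τ k] y)) ⁻¹' {g}) := by
  have hset : (fun y (k : ↥D) => q₀ (f^[τ k] y)) ⁻¹' {g}
      = ⋂ k : ↥D, (f^[τ k]) ⁻¹' (q₀ ⁻¹' {g k}) := by
    ext y
    simp [funext_iff]
  rw [hset]
  exact MeasurableSet.iInter fun k => (hf (τ k)) (hq (g k))

lemma ent_cjoint_le {κq : Type*} [Fintype κq] (ρ : Measure X) (huniv : ρ Set.univ = 1)
    (q : X → κq) (hq : ∀ b, MeasurableSet (q ⁻¹' {b})) (hf : ∀ k : ℕ, Measurable (f^[k]))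
    (D : Finset ℕ) :
    ent ρ (fun y (k : ↥D) => q (f^[(k : ℕ)] y)) ≤ ∑ k ∈ D, ent ρ (fun y => q (f^[k] y)) := by
  classical
  induction D using Finset.induction with
  | empty =>
    haveI : IsEmpty (↥(∅ : Finset ℕ)) := ⟨fun k => (Finset.notMem_empty _ k.2)⟩
    haveI hne : Nonempty (↥(∅ : Finset ℕ) → κq) := ⟨fun k => absurd k.2 (Finset.notMem_empty _)⟩
    have hcard : Fintype.card (↥(∅ : Finset ℕ) → κq) = 1 := by
      rw [Fintype.card_fun]
      simp
    have h := ent_le_log_card huniv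
      (r := fun y (k : ↥(∅ : Finset ℕ)) => q (f^[(k : ℕ)] y))
      (fun i => measSet_codeFiber q hq hf (fun k => (k : ℕ)) i)
    rw [hcard] at h
    simpa using h
  | @insert a D ha ih =>
    set r : X → κq × (↥D → κq) :=
      fun y => (q (f^[a] y), fun k : ↥D => q (f^[(k : ℕ)] y)) with hr_def
    have hr : ∀ ij : κq × (↥D → κq), MeasurableSet (r ⁻¹' {ij}) := by
      intro ij
      have : r ⁻¹' {ij} = (f^[a] ⁻¹' (q ⁻¹' {ij.1}))
          ∩ ((fun y (k : ↥D) => q (f^[(k : ℕ)] y)) ⁻¹' {ij.2}) := by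
        ext y
        simp [hr_def, Prod.ext_iff]
      rw [this]
      exact ((hf a) (hq _)).inter (measSet_codeFiber q hq hf (fun k => (k : ℕ)) _)
    set G : κq × (↥D → κq) → (↥(insert a D) → κq) :=
      fun u k => if h : (k : ℕ) ∈ D then u.2 ⟨k, h⟩ else u.1 with hG_def
    have hdet : (fun y (k : ↥(insert a D)) => q (f^[(k : ℕ)] y)) = fun y => G (r y) := by
      funext y
      funext k
      by_cases h : (k : ℕ) ∈ D
      · simp [hG_def, h, hr_def]
      · have hk : (k : ℕ) = a := (Finset.mem_insert.1 k.2).resolve_right h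
        simp [hG_def, h, hr_def, hk]
    calc ent ρ (fun y (k : ↥(insert a D)) => q (f^[(k : ℕ)] y))
        = ent ρ (fun y => G (r y)) := by rw [hdet]
      _ ≤ ent ρ r := ent_comp_le huniv G hr
      _ ≤ ent ρ (fun y => q (f^[a] y)) + ent ρ (fun y (k : ↥D) => q (f^[(k : ℕ)] y)) := by
          refine ent_pair_le huniv (fun i => ?_) (fun g => measSet_codeFiber q hq hf (fun k => (k : ℕ)) g)
          exact (hf a) (hq i)
      _ ≤ ent ρ (fun y => q (f^[a] y)) + ∑ k ∈ D, ent ρ (fun y => q (f^[k] y)) := by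
          linarith [ih]
      _ = ∑ k ∈ insert a D, ent ρ (fun y => q (f^[k] y)) := by rw [Finset.sum_insert ha]

lemma ent_codeOn_le [Nonempty ι] (ρ : Measure X) (huniv : ρ Set.univ = 1)
    (hp : ∀ i, MeasurableSet (p ⁻¹' {i})) (hf : ∀ k : ℕ, Measurable (f^[k]))
    {m : ℕ} (hm : 1 ≤ m) (E : Finset ℕ) :
    ent ρ (fun y (k : ↥E) => p (f^[(k : ℕ)] y))
      ≤ (m : ℝ)⁻¹ * ∑ k ∈ E,
          ent ρ (fun y (j : ↥(Finset.range m)) => p (f^[(j : ℕ)] (f^[k] y)))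
        + ((bs E).card : ℝ) * ((m : ℝ) * Real.log (Fintype.card ι)) := by
  classical
  set q : X → (↥(Finset.range m) → ι) := fun y j => p (f^[(j : ℕ)] y) with hq_def
  have hq : ∀ b, MeasurableSet (q ⁻¹' {b}) := fun b => measSet_codeFiber p hp hf (fun j => (j : ℕ)) b
  haveI : Nonempty (↥(Finset.range m) → ι) := ⟨fun _ => Classical.arbitrary ι⟩
  have hqcard : (Fintype.card (↥(Finset.range m) → ι) : ℝ) = (Fintype.card ι : ℝ) ^ m := by
    rw [Fintype.card_fun, Fintype.card_coe, Finset.card_range]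
    push_cast
    ring
  have hwind : ∀ k : ℕ, ent ρ (fun y => q (f^[k] y)) ≤ (m : ℝ) * Real.log (Fintype.card ι) := by
    intro k
    have h := ent_le_log_card huniv (r := fun y => q (f^[k] y)) (fun i => by
      have : (fun y => q (f^[k] y)) ⁻¹' {i} = f^[k] ⁻¹' (q ⁻¹' {i}) := rfl
      rw [this]
      exact (hf k) (hq i))
    rwa [hqcard, Real.log_pow] at h
  have hbs : ∑ k ∈ bs E, ent ρ (fun y => q (f^[k] y))
      ≤ ((bs E).card : ℝ) * ((m : ℝ) * Real.log (Fintype.card ι)) := by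
    have := Finset.sum_le_card_nsmul (bs E) (fun k => ent ρ (fun y => q (f^[k] y)))
      ((m : ℝ) * Real.log (Fintype.card ι)) (fun k _ => hwind k)
    simpa [nsmul_eq_mul] using this
  have hper : ∀ r ∈ Finset.range m, ent ρ (fun y (k : ↥E) => p (f^[(k : ℕ)] y))
      ≤ ∑ k ∈ E.filter (fun k => k % m = r), ent ρ (fun y => q (f^[k] y))
        + ((bs E).card : ℝ) * ((m : ℝ) * Real.log (Fintype.card ι)) := by
    intro r hr
    obtain ⟨D, hD_def⟩ : ∃ D : Finset ℕ, D = E.filter (fun k => k % m = r) ∪ bs E := ⟨_, rfl⟩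
    have hcov : ∀ j : ↥E, ∃ k, k ∈ D ∧ k ≤ (j : ℕ) ∧ (j : ℕ) < k + m := by
      intro j
      obtain ⟨k, hk, h1, h2⟩ := exists_window E hm j.2 (Finset.mem_range.1 hr)
      exact ⟨k, hD_def ▸ hk, h1, h2⟩
    choose χ hχD hχ1 hχ2 using hcov
    have hjr : ∀ j : ↥E, (j : ℕ) - χ j ∈ Finset.range m := by
      intro j
      have h1 := hχ1 j
      have h2 := hχ2 j
      exact Finset.mem_range.2 (by omega)
    obtain ⟨G, hG⟩ : ∃ G : (↥D → (↥(Finset.range m) → ι)) → (↥E → ι),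
        ∀ t (j : ↥E), G t j = t ⟨χ j, hχD j⟩ ⟨(j : ℕ) - χ j, hjr j⟩ :=
      ⟨fun t j => t ⟨χ j, hχD j⟩ ⟨(j : ℕ) - χ j, hjr j⟩, fun _ _ => rfl⟩
    have hdet : (fun y (k : ↥E) => p (f^[(k : ℕ)] y))
        = fun y => G ((fun y (k : ↥D) => q (f^[(k : ℕ)] y)) y) := by
      funext y
      funext j
      rw [hG]
      show p (f^[(j : ℕ)] y) = p (f^[((j : ℕ) - χ j)] (f^[χ j] y))
      rw [← Function.iterate_add_apply, Nat.sub_add_cancel (hχ1 j)]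
    calc ent ρ (fun y (k : ↥E) => p (f^[(k : ℕ)] y))
        ≤ ent ρ (fun y (k : ↥D) => q (f^[(k : ℕ)] y)) := by
          rw [hdet]
          exact ent_comp_le huniv G (fun g => measSet_codeFiber q hq hf (fun k => (k : ℕ)) g)
      _ ≤ ∑ k ∈ D, ent ρ (fun y => q (f^[k] y)) := ent_cjoint_le ρ huniv q hq hf D
      _ ≤ ∑ k ∈ E.filter (fun k => k % m = r), ent ρ (fun y => q (f^[k] y))
            + ∑ k ∈ bs E, ent ρ (fun y => q (f^[k] y)) := by
          rw [hD_def]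
          classical
          have h := Finset.sum_union_inter (s₁ := E.filter (fun k => k % m = r)) (s₂ := bs E)
            (f := fun k => ent ρ (fun y => q (f^[k] y)))
          have hnn : 0 ≤ ∑ k ∈ E.filter (fun k => k % m = r) ∩ bs E,
              ent ρ (fun y => q (f^[k] y)) :=
            Finset.sum_nonneg fun k _ => ent_nonneg huniv _
          linarith
      _ ≤ _ := by linarith [hbs]
  have hsum := Finset.sum_le_sum hper
  rw [Finset.sum_const, Finset.card_range, nsmul_eq_mul] at hsum
  rw [Finset.sum_add_distrib, sum_filter_mod E hm] at hsum
  have hmpos : (0 : ℝ) < (m : ℝ) := by exact_mod_cast hm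
  rw [← mul_le_mul_iff_right₀ hmpos]
  calc (m : ℝ) * ent ρ (fun y (k : ↥E) => p (f^[(k : ℕ)] y))
      ≤ ∑ k ∈ E, ent ρ (fun y => q (f^[k] y))
        + (m : ℝ) * (((bs E).card : ℝ) * ((m : ℝ) * Real.log (Fintype.card ι))) := by
        simp only [Finset.sum_const, Finset.card_range, nsmul_eq_mul] at hsum
        linarith [hsum]
    _ = (m : ℝ) * ((m : ℝ)⁻¹ * ∑ k ∈ E, ent ρ (fun y => q (f^[k] y))
        + ((bs E).card : ℝ) * ((m : ℝ) * Real.log (Fintype.card ι))) := by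
        field_simp
    _ = _ := by simp only [hq_def]

end Code

section Main
variable {X : Type*} [MeasurableSpace X] {ι : Type*} [Fintype ι]
variable (T : X → X) (p : X → ι) (F : X → Finset ℕ) (μ : Measure X)

/-- the atom of `P^E` with code `h` -/
def CC (E : Finset ℕ) (h : ↥E → ι) : Set X := (fun y (k : ↥E) => p (T^[(k : ℕ)] y)) ⁻¹' {h}

/-- the measure of `{F = E} ∩ CC E h` -/
def ww (E : Finset ℕ) (h : ↥E → ι) : ℝ≥0∞ := μ ({x | F x = E} ∩ CC T p E h)

/-- conditional entropy contribution of `E` -/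
def HcE (E : Finset ℕ) : ℝ := ∑ h : ↥E → ι, (ww T p F μ E h).toReal *
  (-Real.log ((ww T p F μ E h).toReal / (μ {x | F x = E}).toReal))

variable [IsProbabilityMeasure μ]

lemma HcE_nonneg (E : Finset ℕ) : 0 ≤ HcE T p F μ E := by
  refine Finset.sum_nonneg fun h _ => ?_
  by_cases hw0 : (ww T p F μ E h).toReal = 0
  · simp [hw0]
  · have hwpos : 0 < (ww T p F μ E h).toReal :=
      lt_of_le_of_ne ENNReal.toReal_nonneg (Ne.symm hw0)
    have hple : (ww T p F μ E h).toReal ≤ (μ {x | F x = E}).toReal :=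
      ENNReal.toReal_mono (measure_ne_top μ _) (measure_mono Set.inter_subset_left)
    have hppos : 0 < (μ {x | F x = E}).toReal := lt_of_lt_of_le hwpos hple
    apply mul_nonneg hwpos.le
    simpa using Real.log_nonpos (by positivity) ((div_le_one hppos).2 hple)

lemma stepB (hp : ∀ i, MeasurableSet (p ⁻¹' {i})) (hT : ∀ k : ℕ, Measurable (T^[k]))
    (E : Finset ℕ) :
    ∑ h : ↥E → ι, ww T p F μ E h * ENNReal.ofReal (-Real.log (ww T p F μ E h).toReal)
      = ENNReal.ofReal (-(μ {x | F x = E}).toReal * Real.log ((μ {x | F x = E}).toReal))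
        + ENNReal.ofReal (HcE T p F μ E) := by
  classical
  have hCCm : ∀ h : ↥E → ι, MeasurableSet (CC T p E h) :=
    fun h => measSet_codeFiber p hp hT _ h
  have hw_le : ∀ h, ww T p F μ E h ≤ μ {x | F x = E} :=
    fun h => measure_mono Set.inter_subset_left
  have hw_ne : ∀ h, ww T p F μ E h ≠ ⊤ := fun h => measure_ne_top μ _
  have hp_ne : μ {x | F x = E} ≠ ⊤ := measure_ne_top μ _
  have hw_le1 : ∀ h, (ww T p F μ E h).toReal ≤ 1 := fun h => by
    have := fiber_le_one (ρ := μ) (by simp) ({x | F x = E} ∩ CC T p E h)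
    exact this
  have hsum_w : ∑ h : ↥E → ι, (ww T p F μ E h).toReal = (μ {x | F x = E}).toReal := by
    rw [← ENNReal.toReal_sum (fun h _ => hw_ne h)]
    congr 1
    have hrw : ∀ h : ↥E → ι, ww T p F μ E h = μ.restrict {x | F x = E} (CC T p E h) := by
      intro h
      rw [Measure.restrict_apply (hCCm h), Set.inter_comm]
      rfl
    simp_rw [hrw]
    have := sum_fibers (ρ := μ.restrict {x | F x = E})
      (r := fun y (k : ↥E) => p (T^[(k : ℕ)] y)) hCCm
    rw [show (∑ h : ↥E → ι, μ.restrict {x | F x = E} (CC T p E h))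
        = ∑ h : ↥E → ι, μ.restrict {x | F x = E}
          ((fun y (k : ↥E) => p (T^[(k : ℕ)] y)) ⁻¹' {h}) from rfl, this,
      Measure.restrict_apply_univ]
  have hterm : ∀ h : ↥E → ι, (ww T p F μ E h).toReal * (-Real.log (ww T p F μ E h).toReal)
      = (ww T p F μ E h).toReal * (-Real.log ((μ {x | F x = E}).toReal))
        + (ww T p F μ E h).toReal
          * (-Real.log ((ww T p F μ E h).toReal / (μ {x | F x = E}).toReal)) := by
    intro h
    by_cases hw0 : (ww T p F μ E h).toReal = 0
    · simp [hw0]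
    · have hwpos : 0 < (ww T p F μ E h).toReal :=
        lt_of_le_of_ne ENNReal.toReal_nonneg (Ne.symm hw0)
      have hple : (ww T p F μ E h).toReal ≤ (μ {x | F x = E}).toReal :=
        ENNReal.toReal_mono hp_ne (hw_le h)
      have hp0 : (μ {x | F x = E}).toReal ≠ 0 := (lt_of_lt_of_le hwpos hple).ne'
      rw [Real.log_div hw0 hp0]
      ring
  calc ∑ h : ↥E → ι, ww T p F μ E h * ENNReal.ofReal (-Real.log (ww T p F μ E h).toReal)
      = ∑ h : ↥E → ι, ENNReal.ofReal
          ((ww T p F μ E h).toReal * (-Real.log (ww T p F μ E h).toReal)) := by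
        refine Finset.sum_congr rfl fun h _ => ?_
        rw [ENNReal.ofReal_mul ENNReal.toReal_nonneg, ENNReal.ofReal_toReal (hw_ne h)]
    _ = ENNReal.ofReal (∑ h : ↥E → ι,
          (ww T p F μ E h).toReal * (-Real.log (ww T p F μ E h).toReal)) := by
        rw [ENNReal.ofReal_sum_of_nonneg (fun h _ => ?_)]
        apply mul_nonneg ENNReal.toReal_nonneg
        simpa using Real.log_nonpos ENNReal.toReal_nonneg (hw_le1 h)
    _ = ENNReal.ofReal ((μ {x | F x = E}).toReal * (-Real.log ((μ {x | F x = E}).toReal))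
          + HcE T p F μ E) := by
        congr 1
        rw [Finset.sum_congr rfl (fun h _ => hterm h), Finset.sum_add_distrib,
          ← Finset.sum_mul, hsum_w]
        rfl
    _ = ENNReal.ofReal (-(μ {x | F x = E}).toReal * Real.log ((μ {x | F x = E}).toReal))
        + ENNReal.ofReal (HcE T p F μ E) := by
        rw [ENNReal.ofReal_add ?h1 (HcE_nonneg T p F μ E)]
        · congr 1
          ring
        · apply mul_nonneg ENNReal.toReal_nonneg
          simpa using Real.log_nonpos ENNReal.toReal_nonneg
            (fiber_le_one (ρ := μ) (by simp) _)

lemma stepC [Nonempty ι]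
    (hp : ∀ i, MeasurableSet (p ⁻¹' {i})) (hT : ∀ k : ℕ, Measurable (T^[k]))
    {m : ℕ} (hm : 1 ≤ m) (ν : Measure X) (hν : ν Set.univ = 1) (E : Finset ℕ)
    (habs : ∀ (i : ↥(Finset.range m) → ι) (k : ℕ), k ∈ E →
      ν ((fun y (j : ↥(Finset.range m)) => p (T^[(j : ℕ)] y)) ⁻¹' {i}) = 0 →
      μ ({x | F x = E} ∩ T^[k] ⁻¹'
        ((fun y (j : ↥(Finset.range m)) => p (T^[(j : ℕ)] y)) ⁻¹' {i})) = 0) :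
    HcE T p F μ E ≤ (m : ℝ)⁻¹ * ∑ k ∈ E, ∑ i : ↥(Finset.range m) → ι,
        (μ ({x | F x = E} ∩ T^[k] ⁻¹'
          ((fun y (j : ↥(Finset.range m)) => p (T^[(j : ℕ)] y)) ⁻¹' {i}))).toReal
          * (-Real.log ((ν ((fun y (j : ↥(Finset.range m)) => p (T^[(j : ℕ)] y)) ⁻¹' {i})).toReal))
      + (μ {x | F x = E}).toReal * ((bs E).card : ℝ)
          * ((m : ℝ) * Real.log (Fintype.card ι)) := by
  classical
  have hq : ∀ i : ↥(Finset.range m) → ι,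
      MeasurableSet ((fun y (j : ↥(Finset.range m)) => p (T^[(j : ℕ)] y)) ⁻¹' {i}) :=
    fun i => measSet_codeFiber p hp hT _ i
  have hν_fib_le : ∀ i : ↥(Finset.range m) → ι,
      (ν ((fun y (j : ↥(Finset.range m)) => p (T^[(j : ℕ)] y)) ⁻¹' {i})).toReal ≤ 1 :=
    fun i => fiber_le_one hν _
  have hℓ0 : ∀ i : ↥(Finset.range m) → ι,
      0 ≤ -Real.log ((ν ((fun y (j : ↥(Finset.range m)) => p (T^[(j : ℕ)] y)) ⁻¹' {i})).toReal) :=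
    fun i => by simpa using Real.log_nonpos ENNReal.toReal_nonneg (hν_fib_le i)
  have hlogι : 0 ≤ Real.log (Fintype.card ι) :=
    Real.log_nonneg (by exact_mod_cast Fintype.card_pos)
  by_cases hpE : μ {x | F x = E} = 0
  · have hw0 : ∀ h : ↥E → ι, ww T p F μ E h = 0 := fun h =>
      le_antisymm (hpE ▸ measure_mono Set.inter_subset_left) (zero_le)
    have hHc0 : HcE T p F μ E = 0 := by
      refine Finset.sum_eq_zero fun h _ => ?_
      rw [hw0 h]
      simp
    rw [hHc0]
    apply add_nonneg
    · apply mul_nonneg (by positivity)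
      refine Finset.sum_nonneg fun k _ => Finset.sum_nonneg fun i _ => ?_
      exact mul_nonneg ENNReal.toReal_nonneg (hℓ0 i)
    · apply mul_nonneg (mul_nonneg ENNReal.toReal_nonneg (by positivity))
      positivity
  · have hpne : μ {x | F x = E} ≠ ⊤ := measure_ne_top μ _
    set ρ : Measure X := (μ {x | F x = E})⁻¹ • μ.restrict {x | F x = E} with hρ_def
    have hρuniv : ρ Set.univ = 1 := by
      rw [hρ_def, Measure.smul_apply, smul_eq_mul, Measure.restrict_apply_univ,
        ENNReal.inv_mul_cancel hpE hpne]
    have hpRpos : 0 < (μ {x | F x = E}).toReal := ENNReal.toReal_pos hpE hpne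
    have hρ_toReal : ∀ s : Set X, MeasurableSet s →
        (ρ s).toReal = (μ ({x | F x = E} ∩ s)).toReal / (μ {x | F x = E}).toReal := by
      intro s hs
      rw [hρ_def, Measure.smul_apply, smul_eq_mul, Measure.restrict_apply hs, Set.inter_comm,
        ENNReal.toReal_mul, ENNReal.toReal_inv, div_eq_inv_mul]
    have hHcE : HcE T p F μ E
        = (μ {x | F x = E}).toReal * ent ρ (fun y (k : ↥E) => p (T^[(k : ℕ)] y)) := by
      rw [ent, Finset.mul_sum]
      refine Finset.sum_congr rfl fun h _ => ?_
      rw [hρ_toReal _ (measSet_codeFiber p hp hT _ h)]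
      have hww : μ ({x | F x = E} ∩ (fun y (k : ↥E) => p (T^[(k : ℕ)] y)) ⁻¹' {h})
          = ww T p F μ E h := rfl
      rw [hww]
      rw [show (μ {x | F x = E}).toReal
          * ((ww T p F μ E h).toReal / (μ {x | F x = E}).toReal
            * (-Real.log ((ww T p F μ E h).toReal / (μ {x | F x = E}).toReal)))
          = ((ww T p F μ E h).toReal / (μ {x | F x = E}).toReal * (μ {x | F x = E}).toReal)
            * (-Real.log ((ww T p F μ E h).toReal / (μ {x | F x = E}).toReal)) from by ring,
        div_mul_cancel₀ _ hpRpos.ne']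
    have hcode := ent_codeOn_le (f := T) (p := p) ρ hρuniv hp hT hm E
    have hwin : ∀ k ∈ E, (μ {x | F x = E}).toReal
        * ent ρ (fun y (j : ↥(Finset.range m)) => p (T^[(j : ℕ)] (T^[k] y)))
        ≤ ∑ i : ↥(Finset.range m) → ι,
          (μ ({x | F x = E} ∩ T^[k] ⁻¹'
            ((fun y (j : ↥(Finset.range m)) => p (T^[(j : ℕ)] y)) ⁻¹' {i}))).toReal
          * (-Real.log ((ν ((fun y (j : ↥(Finset.range m)) => p (T^[(j : ℕ)] y)) ⁻¹' {i})).toReal)) := by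
      intro k hk
      have hfibm : ∀ i : ↥(Finset.range m) → ι, MeasurableSet
          ((fun y => (fun y' (j : ↥(Finset.range m)) => p (T^[(j : ℕ)] y')) (T^[k] y)) ⁻¹' {i}) :=
        fun i => (hT k) (hq i)
      have hgibbs := gibbs (Finset.univ : Finset (↥(Finset.range m) → ι))
        (fun i => (ρ ((fun y => (fun y' (j : ↥(Finset.range m)) => p (T^[(j : ℕ)] y')) (T^[k] y)) ⁻¹' {i})).toReal)
        (fun i => (ν ((fun y (j : ↥(Finset.range m)) => p (T^[(j : ℕ)] y)) ⁻¹' {i})).toReal)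
        (fun _ _ => ENNReal.toReal_nonneg) (fun _ _ => ENNReal.toReal_nonneg)
        (by rw [sum_toReal_fibers hρuniv hfibm, sum_toReal_fibers hν hq])
        (by
          intro i _ h0
          have hν0 : ν ((fun y (j : ↥(Finset.range m)) => p (T^[(j : ℕ)] y)) ⁻¹' {i}) = 0 :=
            (ENNReal.toReal_eq_zero_iff _).1 h0 |>.resolve_right (fiber_ne_top hν _)
          have hμ0 := habs i k hk hν0
          show (ρ ((fun y => (fun y' (j : ↥(Finset.range m)) =>
            p (T^[(j : ℕ)] y')) (T^[k] y)) ⁻¹' {i})).toReal = 0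
          rw [hρ_toReal _ (hfibm i)]
          rw [show ({x | F x = E} ∩ (fun y => (fun y' (j : ↥(Finset.range m)) =>
              p (T^[(j : ℕ)] y')) (T^[k] y)) ⁻¹' {i})
            = ({x | F x = E} ∩ T^[k] ⁻¹'
              ((fun y (j : ↥(Finset.range m)) => p (T^[(j : ℕ)] y)) ⁻¹' {i})) from rfl, hμ0]
          simp)
      have hgoal : ent ρ (fun y (j : ↥(Finset.range m)) => p (T^[(j : ℕ)] (T^[k] y)))
          ≤ ∑ i : ↥(Finset.range m) → ι,
            (ρ ((fun y => (fun y' (j : ↥(Finset.range m)) => p (T^[(j : ℕ)] y')) (T^[k] y)) ⁻¹' {i})).toReal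
            * (-Real.log ((ν ((fun y (j : ↥(Finset.range m)) => p (T^[(j : ℕ)] y)) ⁻¹' {i})).toReal)) :=
        hgibbs
      calc (μ {x | F x = E}).toReal
          * ent ρ (fun y (j : ↥(Finset.range m)) => p (T^[(j : ℕ)] (T^[k] y)))
          ≤ (μ {x | F x = E}).toReal * ∑ i : ↥(Finset.range m) → ι,
            (ρ ((fun y => (fun y' (j : ↥(Finset.range m)) => p (T^[(j : ℕ)] y')) (T^[k] y)) ⁻¹' {i})).toReal
            * (-Real.log ((ν ((fun y (j : ↥(Finset.range m)) => p (T^[(j : ℕ)] y)) ⁻¹' {i})).toReal)) :=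
            mul_le_mul_of_nonneg_left hgoal hpRpos.le
        _ = _ := by
            rw [Finset.mul_sum]
            refine Finset.sum_congr rfl fun i _ => ?_
            rw [hρ_toReal _ (hfibm i)]
            rw [show ({x | F x = E} ∩ (fun y => (fun y' (j : ↥(Finset.range m)) =>
                p (T^[(j : ℕ)] y')) (T^[k] y)) ⁻¹' {i})
              = ({x | F x = E} ∩ T^[k] ⁻¹'
                ((fun y (j : ↥(Finset.range m)) => p (T^[(j : ℕ)] y)) ⁻¹' {i})) from rfl]
            rw [show (μ {x | F x = E}).toReal
                * ((μ ({x | F x = E} ∩ T^[k] ⁻¹'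
                  ((fun y (j : ↥(Finset.range m)) => p (T^[(j : ℕ)] y)) ⁻¹' {i}))).toReal
                  / (μ {x | F x = E}).toReal * (-Real.log ((ν ((fun y (j : ↥(Finset.range m)) => p (T^[(j : ℕ)] y)) ⁻¹' {i})).toReal))) = ((μ ({x | F x = E} ∩ T^[k] ⁻¹'
                  ((fun y (j : ↥(Finset.range m)) => p (T^[(j : ℕ)] y)) ⁻¹' {i}))).toReal
                  / (μ {x | F x = E}).toReal * (μ {x | F x = E}).toReal) * (-Real.log ((ν ((fun y (j : ↥(Finset.range m)) => p (T^[(j : ℕ)] y)) ⁻¹' {i})).toReal)) from by ring,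
              div_mul_cancel₀ _ hpRpos.ne']
    calc HcE T p F μ E
        = (μ {x | F x = E}).toReal * ent ρ (fun y (k : ↥E) => p (T^[(k : ℕ)] y)) := hHcE
      _ ≤ (μ {x | F x = E}).toReal * ((m : ℝ)⁻¹ * ∑ k ∈ E,
            ent ρ (fun y (j : ↥(Finset.range m)) => p (T^[(j : ℕ)] (T^[k] y)))
            + ((bs E).card : ℝ) * ((m : ℝ) * Real.log (Fintype.card ι))) :=
          mul_le_mul_of_nonneg_left hcode hpRpos.le
      _ = (m : ℝ)⁻¹ * ∑ k ∈ E, (μ {x | F x = E}).toReal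
            * ent ρ (fun y (j : ↥(Finset.range m)) => p (T^[(j : ℕ)] (T^[k] y)))
          + (μ {x | F x = E}).toReal * ((bs E).card : ℝ)
            * ((m : ℝ) * Real.log (Fintype.card ι)) := by
          rw [show ((m : ℝ)⁻¹ * ∑ k ∈ E, (μ {x | F x = E}).toReal
              * ent ρ (fun y (j : ↥(Finset.range m)) => p (T^[(j : ℕ)] (T^[k] y))))
            = ((m : ℝ)⁻¹ * ((μ {x | F x = E}).toReal * ∑ k ∈ E,
              ent ρ (fun y (j : ↥(Finset.range m)) => p (T^[(j : ℕ)] (T^[k] y))))) from by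
            congr 1
            rw [Finset.mul_sum]]
          ring
      _ ≤ _ := by
          have := Finset.sum_le_sum hwin
          have h2 := mul_le_mul_of_nonneg_left this (by positivity : (0:ℝ) ≤ (m : ℝ)⁻¹)
          linarith [h2]

end Main

end SRB7

namespace SRB

set_option maxHeartbeats 1000000 in
/-- set-valued version of the Misiurewicz estimate. `F : X → Finset ℕ` is a
measurable finite-set-valued map (its range is automatically countable), with
`0 < ∫ #F dμ < ∞`, and `μ^F := (∫ ∑_{k∈F(x)} δ_{T^k x} dμ(x)) / (∫ #F dμ)`. Then
`((∫ #F dμ)/m)·H_{μ^F}(P^m) ≥ ∫ −log μ(P^{F(x)}(x)) dμ − H_μ(F) − 3m log(#P)·∫ #∂F dμ`,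
stated in `ℝ≥0∞` (so that it holds also when `H_μ(F) = +∞`), with the convention
`P^∅(x) = X`; here the atom `P^{F(x)}(x)` is `{y | ∀ k ∈ F(x), p(T^k y) = p(T^k x)}`. -/
theorem statement7 {X : Type*} [MetricSpace X] [CompactSpace X]
    [MeasurableSpace X] [BorelSpace X] (T : X ≃ₜ X)
    {ι : Type*} [Fintype ι] (p : X → ι)
    (hpBorel : ∀ i : ι, MeasurableSet (p ⁻¹' {i})) (hpsurj : Function.Surjective p)
    (μ : Measure X) [IsProbabilityMeasure μ] (m : ℕ) (hm : 1 ≤ m)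
    (F : X → Finset ℕ) (hFmeas : ∀ E : Finset ℕ, MeasurableSet {x | F x = E})
    (hpos : 0 < ∫⁻ x, ((F x).card : ℝ≥0∞) ∂μ)
    (hfin : ∫⁻ x, ((F x).card : ℝ≥0∞) ∂μ < ⊤) :
    ∫⁻ x, ENNReal.ofReal
        (-Real.log ((μ {y | ∀ k ∈ F x, p ((⇑T)^[k] y) = p ((⇑T)^[k] x)}).toReal)) ∂μ
      ≤ ENNReal.ofReal
          (((∫⁻ x, ((F x).card : ℝ≥0∞) ∂μ).toReal / m) *
            Hstat ((∫⁻ x, ((F x).card : ℝ≥0∞) ∂μ)⁻¹ •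
                μ.bind (fun x => ∑ k ∈ F x, Measure.dirac ((⇑T)^[k] x)))
              (codeIter T p (Finset.range m)))
        + (∑' E : Finset ℕ,
            ENNReal.ofReal
              (-(μ {x | F x = E}).toReal * Real.log ((μ {x | F x = E}).toReal)))
        + ENNReal.ofReal (3 * m * Real.log (Fintype.card ι)) *
            ∫⁻ x, ((symmDiff (F x) ((F x).image (· + 1))).card : ℝ≥0∞) ∂μ := by
  classical
  -- basic facts
  have hTk : ∀ k : ℕ, Measurable ((⇑T)^[k]) := by
    intro k
    induction k with
    | zero => simpa using measurable_id
    | succ n ih =>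
      rw [Function.iterate_succ]
      exact ih.comp T.continuous.measurable
  have hXne : Nonempty X := by
    by_contra h
    have h1 : (Set.univ : Set X) = ∅ := Set.univ_eq_empty_iff.2 (not_nonempty_iff.1 h)
    have h2 := measure_univ (μ := μ)
    rw [h1] at h2
    simp at h2
  haveI hιne : Nonempty ι := ⟨p (Classical.arbitrary X)⟩
  have hlogι : 0 ≤ Real.log (Fintype.card ι) :=
    Real.log_nonneg (by exact_mod_cast Fintype.card_pos)
  set c := ∫⁻ x, ((F x).card : ℝ≥0∞) ∂μ with hc_def
  have hc0 : c ≠ 0 := hpos.ne'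
  have hcT : c ≠ ⊤ := hfin.ne
  set κF : X → Measure X := fun x => ∑ k ∈ F x, Measure.dirac ((⇑T)^[k] x) with hκF_def
  -- coding map fibers
  have hq_fib : ∀ i : ↥(Finset.range m) → ι,
      MeasurableSet ((fun y (j : ↥(Finset.range m)) => p ((⇑T)^[(j : ℕ)] y)) ⁻¹' {i}) :=
    fun i => SRB7.measSet_codeFiber p hpBorel hTk (fun j => (j : ℕ)) i
  -- partition infrastructure
  have hFdisj : Pairwise (Function.onFun Disjoint fun E : Finset ℕ => {x | F x = E}) := by
    intro E E' hne
    rw [Function.onFun, Set.disjoint_left]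
    rintro x (hx : F x = E) (hx' : F x = E')
    exact hne (hx ▸ hx')
  have hFunion : (⋃ E : Finset ℕ, {x | F x = E}) = Set.univ := by
    ext x
    simp
  have lint_part : ∀ g : X → ℝ≥0∞,
      ∫⁻ x, g x ∂μ = ∑' E : Finset ℕ, ∫⁻ x in {x | F x = E}, g x ∂μ := by
    intro g
    rw [← setLIntegral_univ, ← hFunion, lintegral_iUnion hFmeas hFdisj]
  -- kernel measurability
  have hκF_meas : Measurable κF := by
    apply Measure.measurable_of_measurable_coe
    intro t ht
    have hrw : (fun x => κF x t) = fun x => ∑' E : Finset ℕ,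
        Set.indicator {x' | F x' = E}
          (fun x' => ∑ k ∈ E, (((⇑T)^[k]) ⁻¹' t).indicator 1 x') x := by
      funext x
      have hsingle : (∑' E : Finset ℕ, Set.indicator {x' | F x' = E}
            (fun x' => ∑ k ∈ E, (((⇑T)^[k]) ⁻¹' t).indicator (1 : X → ℝ≥0∞) x') x)
          = Set.indicator {x' | F x' = F x}
            (fun x' => ∑ k ∈ F x, (((⇑T)^[k]) ⁻¹' t).indicator (1 : X → ℝ≥0∞) x') x :=
        tsum_eq_single (F x) (fun E' hne =>
          Set.indicator_of_notMem
            (show x ∉ {x' | F x' = E'} from fun hx => hne (Eq.symm hx)) _)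
      rw [hsingle, Set.indicator_of_mem (show x ∈ {x' | F x' = F x} from rfl)]
      rw [hκF_def]
      rw [Measure.finset_sum_apply]
      refine Finset.sum_congr rfl fun k _ => ?_
      rw [Measure.dirac_apply' _ ht]
      simp [Set.indicator_apply]
    rw [hrw]
    exact Measurable.ennreal_tsum fun E =>
      (Finset.measurable_sum _ fun k _ => measurable_one.indicator ((hTk k) ht)).indicator
        (hFmeas E)
  -- the bind identity
  have KI : ∀ t : Set X, MeasurableSet t → μ.bind κF t
      = ∑' E : Finset ℕ, ∑ k ∈ E, μ ({x | F x = E} ∩ (⇑T)^[k] ⁻¹' t) := by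
    intro t ht
    rw [Measure.bind_apply ht hκF_meas.aemeasurable]
    rw [lint_part (fun x => κF x t)]
    refine tsum_congr fun E => ?_
    have hcong : ∀ x ∈ {x' | F x' = E},
        κF x t = ∑ k ∈ E, (((⇑T)^[k]) ⁻¹' t).indicator 1 x := by
      intro x hx
      have hxE : F x = E := hx
      rw [hκF_def]
      rw [Measure.finset_sum_apply, hxE]
      refine Finset.sum_congr rfl fun k _ => ?_
      rw [Measure.dirac_apply' _ ht]
      simp [Set.indicator_apply]
    rw [setLIntegral_congr_fun (hFmeas E) hcong]
    rw [lintegral_finset_sum _ (fun k _ => measurable_one.indicator ((hTk k) ht))]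
    refine Finset.sum_congr rfl fun k _ => ?_
    rw [lintegral_indicator_one ((hTk k) ht),
      Measure.restrict_apply ((hTk k) ht), Set.inter_comm]
  -- c as a sum
  have hc_sum : c = ∑' E : Finset ℕ, (E.card : ℝ≥0∞) * μ {x | F x = E} := by
    rw [hc_def, lint_part (fun x => ((F x).card : ℝ≥0∞))]
    refine tsum_congr fun E => ?_
    rw [setLIntegral_congr_fun (hFmeas E)
      (fun x hx => by rw [show F x = E from hx]),
      setLIntegral_const]
  have hbind_univ : μ.bind κF Set.univ = c := by
    rw [KI Set.univ MeasurableSet.univ, hc_sum]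
    refine tsum_congr fun E => ?_
    simp [Finset.sum_const, nsmul_eq_mul]
  set ν := c⁻¹ • μ.bind κF with hν_def
  have hν_univ : ν Set.univ = 1 := by
    rw [hν_def, Measure.smul_apply, smul_eq_mul, hbind_univ,
      ENNReal.inv_mul_cancel hc0 hcT]
  have hν_ne_top : ∀ s : Set X, ν s ≠ ⊤ := fun s => SRB7.fiber_ne_top hν_univ s
  -- absolute continuity input for stepC
  have habs : ∀ (E : Finset ℕ) (i : ↥(Finset.range m) → ι) (k : ℕ), k ∈ E →
      ν ((fun y (j : ↥(Finset.range m)) => p ((⇑T)^[(j : ℕ)] y)) ⁻¹' {i}) = 0 →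
      μ ({x | F x = E} ∩ (⇑T)^[k] ⁻¹'
        ((fun y (j : ↥(Finset.range m)) => p ((⇑T)^[(j : ℕ)] y)) ⁻¹' {i})) = 0 := by
    intro E i k hk hν0
    have hbind0 : μ.bind κF
        ((fun y (j : ↥(Finset.range m)) => p ((⇑T)^[(j : ℕ)] y)) ⁻¹' {i}) = 0 := by
      rw [hν_def, Measure.smul_apply, smul_eq_mul] at hν0
      rcases mul_eq_zero.1 hν0 with h | h
      · exact absurd h (ENNReal.inv_ne_zero.2 hcT)
      · exact h
    rw [KI _ (hq_fib i)] at hbind0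
    have hE0 := (ENNReal.tsum_eq_zero.1 hbind0) E
    exact (Finset.sum_eq_zero_iff.1 hE0) k hk
  -- STEP A
  have stepA : ∫⁻ x, ENNReal.ofReal
      (-Real.log ((μ {y | ∀ k ∈ F x, p ((⇑T)^[k] y) = p ((⇑T)^[k] x)}).toReal)) ∂μ
      ≤ ∑' E : Finset ℕ, ∑ h : ↥E → ι, SRB7.ww (⇑T) p F μ E h
          * ENNReal.ofReal (-Real.log (SRB7.ww (⇑T) p F μ E h).toReal) := by
    set s : (Σ E : Finset ℕ, (↥E → ι)) → Set X :=
      fun σ => {x | F x = σ.1} ∩ SRB7.CC (⇑T) p σ.1 σ.2 with hs_def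
    have hCC_meas : ∀ (E : Finset ℕ) (h : ↥E → ι), MeasurableSet (SRB7.CC (⇑T) p E h) :=
      fun E h => SRB7.measSet_codeFiber p hpBorel hTk _ h
    have hs_meas : ∀ σ, MeasurableSet (s σ) := fun σ => (hFmeas σ.1).inter (hCC_meas σ.1 σ.2)
    have hs_disj : Pairwise (Function.onFun Disjoint s) := by
      rintro ⟨E, h⟩ ⟨E', h'⟩ hne
      rw [Function.onFun, Set.disjoint_left]
      rintro x ⟨hx1, hx2⟩ ⟨hx1', hx2'⟩
      have hEE : E = E' := by
        have h1 : F x = E := hx1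
        have h2 : F x = E' := hx1'
        rw [← h1, ← h2]
      subst hEE
      apply hne
      have hhh : h = h' := by
        have e2 : (fun k : ↥E => p ((⇑T)^[(k : ℕ)] x)) = h := hx2
        have e2' : (fun k : ↥E => p ((⇑T)^[(k : ℕ)] x)) = h' := hx2'
        rw [← e2, e2']
      rw [hhh]
    have hs_union : (⋃ σ, s σ) = Set.univ := by
      ext x
      simp only [Set.mem_iUnion, Set.mem_univ, iff_true]
      exact ⟨⟨F x, fun k => p ((⇑T)^[(k : ℕ)] x)⟩, rfl, rfl⟩
    calc ∫⁻ x, ENNReal.ofReal (-Real.log ((μ {y | ∀ k ∈ F x, p ((⇑T)^[k] y) = p ((⇑T)^[k] x)}).toReal)) ∂μ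
        = ∑' σ : Σ E : Finset ℕ, (↥E → ι), ∫⁻ x in s σ, ENNReal.ofReal (-Real.log ((μ {y | ∀ k ∈ F x, p ((⇑T)^[k] y) = p ((⇑T)^[k] x)}).toReal)) ∂μ := by
          rw [← setLIntegral_univ, ← hs_union, lintegral_iUnion hs_meas hs_disj]
      _ ≤ ∑' σ : Σ E : Finset ℕ, (↥E → ι), SRB7.ww (⇑T) p F μ σ.1 σ.2
            * ENNReal.ofReal (-Real.log (SRB7.ww (⇑T) p F μ σ.1 σ.2).toReal) := by
          refine Summable.tsum_le_tsum (fun σ => ?_) ENNReal.summable ENNReal.summable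
          obtain ⟨E, h⟩ := σ
          have hae : ∀ x ∈ s ⟨E, h⟩, ENNReal.ofReal
              (-Real.log ((μ {y | ∀ k ∈ F x, p ((⇑T)^[k] y) = p ((⇑T)^[k] x)}).toReal))
              = ENNReal.ofReal (-Real.log ((μ (SRB7.CC (⇑T) p E h)).toReal)) := by
            rintro x ⟨hx1, hx2⟩
            have hxE : F x = E := hx1
            have hxC : (fun k : ↥E => p ((⇑T)^[(k : ℕ)] x)) = h := hx2
            have hAtom : {y | ∀ k ∈ F x, p ((⇑T)^[k] y) = p ((⇑T)^[k] x)}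
                = SRB7.CC (⇑T) p E h := by
              ext y
              simp only [Set.mem_setOf_eq, SRB7.CC, Set.mem_preimage,
                Set.mem_singleton_iff, funext_iff]
              constructor
              · intro hy k
                rw [← congr_fun hxC k]
                exact hy k (by rw [hxE]; exact k.2)
              · intro hy k hk
                have hk' : k ∈ E := by rw [← hxE]; exact hk
                have h1 := hy ⟨k, hk'⟩
                have h2 := congr_fun hxC ⟨k, hk'⟩
                exact h1.trans h2.symm
            rw [hAtom]
          rw [setLIntegral_congr_fun (hs_meas ⟨E, h⟩) hae,
            lintegral_const, Measure.restrict_apply_univ]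
          have hsw : μ (s ⟨E, h⟩) = SRB7.ww (⇑T) p F μ E h := rfl
          rw [hsw, mul_comm]
          by_cases hw0 : SRB7.ww (⇑T) p F μ E h = 0
          · rw [hw0]
            simp
          · refine mul_le_mul_right (ENNReal.ofReal_le_ofReal ?_) _
            have h1 : 0 < (SRB7.ww (⇑T) p F μ E h).toReal :=
              ENNReal.toReal_pos hw0 (measure_ne_top μ _)
            have h2 : (SRB7.ww (⇑T) p F μ E h).toReal ≤ (μ (SRB7.CC (⇑T) p E h)).toReal :=
              ENNReal.toReal_mono (measure_ne_top μ _) (measure_mono Set.inter_subset_right)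
            simpa using Real.log_le_log h1 h2
      _ = ∑' E : Finset ℕ, ∑ h : ↥E → ι, SRB7.ww (⇑T) p F μ E h
            * ENNReal.ofReal (-Real.log (SRB7.ww (⇑T) p F μ E h).toReal) := by
          rw [ENNReal.tsum_sigma']
          exact tsum_congr fun E => tsum_fintype _
  -- abbreviations for per-E step C bounds
  set CA : Finset ℕ → ℝ := fun E => (m : ℝ)⁻¹ * ∑ k ∈ E, ∑ i : ↥(Finset.range m) → ι,
      (μ ({x | F x = E} ∩ (⇑T)^[k] ⁻¹'
        ((fun y (j : ↥(Finset.range m)) => p ((⇑T)^[(j : ℕ)] y)) ⁻¹' {i}))).toReal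
      * (-Real.log ((ν ((fun y (j : ↥(Finset.range m)) =>
          p ((⇑T)^[(j : ℕ)] y)) ⁻¹' {i})).toReal)) with hCA_def
  set CB : Finset ℕ → ℝ := fun E => (μ {x | F x = E}).toReal * ((SRB7.bs E).card : ℝ)
      * ((m : ℝ) * Real.log (Fintype.card ι)) with hCB_def
  have hℓ0 : ∀ i : ↥(Finset.range m) → ι,
      0 ≤ -Real.log ((ν ((fun y (j : ↥(Finset.range m)) =>
        p ((⇑T)^[(j : ℕ)] y)) ⁻¹' {i})).toReal) :=
    fun i => by simpa using Real.log_nonpos ENNReal.toReal_nonneg (SRB7.fiber_le_one hν_univ _)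
  have hCA0 : ∀ E, 0 ≤ CA E := by
    intro E
    rw [hCA_def]
    apply mul_nonneg (by positivity)
    exact Finset.sum_nonneg fun k _ => Finset.sum_nonneg fun i _ =>
      mul_nonneg ENNReal.toReal_nonneg (hℓ0 i)
  have hCB0 : ∀ E, 0 ≤ CB E := by
    intro E
    rw [hCB_def]
    apply mul_nonneg (mul_nonneg ENNReal.toReal_nonneg (by positivity))
    positivity
  have stepC : ∀ E : Finset ℕ, SRB7.HcE (⇑T) p F μ E ≤ CA E + CB E := by
    intro E
    rw [hCA_def, hCB_def]
    exact SRB7.stepC (⇑T) p F μ hpBorel hTk hm ν hν_univ E (habs E)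
  -- STEP D : the main entropy identity
  have hTA : ∑' E : Finset ℕ, ENNReal.ofReal (CA E)
      = ENNReal.ofReal ((c.toReal / m) * Hstat ν (codeIter T p (Finset.range m))) := by
    have hper : ∀ E : Finset ℕ, ENNReal.ofReal (CA E)
        = ENNReal.ofReal ((m : ℝ)⁻¹) * ∑ k ∈ E, ∑ i : ↥(Finset.range m) → ι,
          μ ({x | F x = E} ∩ (⇑T)^[k] ⁻¹'
            ((fun y (j : ↥(Finset.range m)) => p ((⇑T)^[(j : ℕ)] y)) ⁻¹' {i}))
          * ENNReal.ofReal (-Real.log ((ν ((fun y (j : ↥(Finset.range m)) =>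
              p ((⇑T)^[(j : ℕ)] y)) ⁻¹' {i})).toReal)) := by
      intro E
      rw [hCA_def, ENNReal.ofReal_mul (by positivity)]
      congr 1
      rw [ENNReal.ofReal_sum_of_nonneg (fun k _ => Finset.sum_nonneg fun i _ =>
        mul_nonneg ENNReal.toReal_nonneg (hℓ0 i))]
      refine Finset.sum_congr rfl fun k _ => ?_
      rw [ENNReal.ofReal_sum_of_nonneg (fun i _ => mul_nonneg ENNReal.toReal_nonneg (hℓ0 i))]
      refine Finset.sum_congr rfl fun i _ => ?_
      rw [ENNReal.ofReal_mul ENNReal.toReal_nonneg, ENNReal.ofReal_toReal (measure_ne_top μ _)]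
    calc ∑' E : Finset ℕ, ENNReal.ofReal (CA E)
        = ENNReal.ofReal ((m : ℝ)⁻¹) * ∑' E : Finset ℕ, ∑ k ∈ E,
            ∑ i : ↥(Finset.range m) → ι,
            μ ({x | F x = E} ∩ (⇑T)^[k] ⁻¹'
              ((fun y (j : ↥(Finset.range m)) => p ((⇑T)^[(j : ℕ)] y)) ⁻¹' {i}))
            * ENNReal.ofReal (-Real.log ((ν ((fun y (j : ↥(Finset.range m)) =>
                p ((⇑T)^[(j : ℕ)] y)) ⁻¹' {i})).toReal)) := by
          rw [← ENNReal.tsum_mul_left]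
          exact tsum_congr hper
      _ = ENNReal.ofReal ((m : ℝ)⁻¹) * ∑ i : ↥(Finset.range m) → ι,
            (∑' E : Finset ℕ, ∑ k ∈ E, μ ({x | F x = E} ∩ (⇑T)^[k] ⁻¹'
              ((fun y (j : ↥(Finset.range m)) => p ((⇑T)^[(j : ℕ)] y)) ⁻¹' {i})))
            * ENNReal.ofReal (-Real.log ((ν ((fun y (j : ↥(Finset.range m)) =>
                p ((⇑T)^[(j : ℕ)] y)) ⁻¹' {i})).toReal)) := by
          congr 1
          calc ∑' E : Finset ℕ, ∑ k ∈ E, ∑ i : ↥(Finset.range m) → ι,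
              μ ({x | F x = E} ∩ (⇑T)^[k] ⁻¹'
                ((fun y (j : ↥(Finset.range m)) => p ((⇑T)^[(j : ℕ)] y)) ⁻¹' {i}))
              * ENNReal.ofReal (-Real.log ((ν ((fun y (j : ↥(Finset.range m)) =>
                  p ((⇑T)^[(j : ℕ)] y)) ⁻¹' {i})).toReal))
              = ∑' E : Finset ℕ, ∑ i : ↥(Finset.range m) → ι, ∑ k ∈ E,
                μ ({x | F x = E} ∩ (⇑T)^[k] ⁻¹'
                  ((fun y (j : ↥(Finset.range m)) => p ((⇑T)^[(j : ℕ)] y)) ⁻¹' {i}))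
                * ENNReal.ofReal (-Real.log ((ν ((fun y (j : ↥(Finset.range m)) =>
                    p ((⇑T)^[(j : ℕ)] y)) ⁻¹' {i})).toReal)) :=
                tsum_congr fun E => Finset.sum_comm
            _ = ∑ i : ↥(Finset.range m) → ι, ∑' E : Finset ℕ, ∑ k ∈ E,
                μ ({x | F x = E} ∩ (⇑T)^[k] ⁻¹'
                  ((fun y (j : ↥(Finset.range m)) => p ((⇑T)^[(j : ℕ)] y)) ⁻¹' {i}))
                * ENNReal.ofReal (-Real.log ((ν ((fun y (j : ↥(Finset.range m)) =>
                    p ((⇑T)^[(j : ℕ)] y)) ⁻¹' {i})).toReal)) :=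
                Summable.tsum_finsetSum (fun _ _ => ENNReal.summable)
            _ = ∑ i : ↥(Finset.range m) → ι,
                (∑' E : Finset ℕ, ∑ k ∈ E, μ ({x | F x = E} ∩ (⇑T)^[k] ⁻¹'
                  ((fun y (j : ↥(Finset.range m)) => p ((⇑T)^[(j : ℕ)] y)) ⁻¹' {i})))
                * ENNReal.ofReal (-Real.log ((ν ((fun y (j : ↥(Finset.range m)) =>
                    p ((⇑T)^[(j : ℕ)] y)) ⁻¹' {i})).toReal)) := by
                refine Finset.sum_congr rfl fun i _ => ?_
                rw [← ENNReal.tsum_mul_right]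
                exact tsum_congr fun E => (Finset.sum_mul _ _ _).symm
      _ = ENNReal.ofReal ((m : ℝ)⁻¹) * ∑ i : ↥(Finset.range m) → ι,
            (c * ν ((fun y (j : ↥(Finset.range m)) => p ((⇑T)^[(j : ℕ)] y)) ⁻¹' {i}))
            * ENNReal.ofReal (-Real.log ((ν ((fun y (j : ↥(Finset.range m)) =>
                p ((⇑T)^[(j : ℕ)] y)) ⁻¹' {i})).toReal)) := by
          congr 1
          refine Finset.sum_congr rfl fun i _ => ?_
          congr 1
          rw [← KI _ (hq_fib i), hν_def, Measure.smul_apply, smul_eq_mul, ← mul_assoc,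
            ENNReal.mul_inv_cancel hc0 hcT, one_mul]
      _ = ENNReal.ofReal ((c.toReal / m) * Hstat ν (codeIter T p (Finset.range m))) := by
          have hterm : ∀ i : ↥(Finset.range m) → ι,
              (c * ν ((fun y (j : ↥(Finset.range m)) => p ((⇑T)^[(j : ℕ)] y)) ⁻¹' {i}))
              * ENNReal.ofReal (-Real.log ((ν ((fun y (j : ↥(Finset.range m)) =>
                  p ((⇑T)^[(j : ℕ)] y)) ⁻¹' {i})).toReal))
              = ENNReal.ofReal (c.toReal
                * (ν ((fun y (j : ↥(Finset.range m)) => p ((⇑T)^[(j : ℕ)] y)) ⁻¹' {i})).toReal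
                * (-Real.log ((ν ((fun y (j : ↥(Finset.range m)) =>
                    p ((⇑T)^[(j : ℕ)] y)) ⁻¹' {i})).toReal))) := by
            intro i
            rw [ENNReal.ofReal_mul (by positivity), ENNReal.ofReal_mul ENNReal.toReal_nonneg,
              ENNReal.ofReal_toReal hcT, ENNReal.ofReal_toReal (hν_ne_top _)]
          rw [Finset.sum_congr rfl (fun i _ => hterm i),
            ← ENNReal.ofReal_sum_of_nonneg (fun i _ => mul_nonneg
              (mul_nonneg ENNReal.toReal_nonneg ENNReal.toReal_nonneg) (hℓ0 i)),
            ← ENNReal.ofReal_mul (by positivity)]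
          congr 1
          have hHstat : Hstat ν (codeIter T p (Finset.range m))
              = ∑ i : ↥(Finset.range m) → ι,
                (ν ((fun y (j : ↥(Finset.range m)) => p ((⇑T)^[(j : ℕ)] y)) ⁻¹' {i})).toReal
                * (-Real.log ((ν ((fun y (j : ↥(Finset.range m)) =>
                    p ((⇑T)^[(j : ℕ)] y)) ⁻¹' {i})).toReal)) := by
            have hcode_eq : codeIter T p (Finset.range m)
                = fun y (j : ↥(Finset.range m)) => p ((⇑T)^[(j : ℕ)] y) := rfl
            rw [Hstat, hcode_eq, ← Finset.sum_neg_distrib]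
            exact Finset.sum_congr rfl fun i _ => by ring
          rw [hHstat, Finset.mul_sum, Finset.mul_sum]
          exact Finset.sum_congr rfl fun i _ => by ring
  -- STEP E
  have hTB : ∑' E : Finset ℕ, ENNReal.ofReal (CB E)
      ≤ ENNReal.ofReal (3 * m * Real.log (Fintype.card ι)) *
          ∫⁻ x, ((symmDiff (F x) ((F x).image (· + 1))).card : ℝ≥0∞) ∂μ := by
    have hlint : ∫⁻ x, ((symmDiff (F x) ((F x).image (· + 1))).card : ℝ≥0∞) ∂μ
        = ∑' E : Finset ℕ,
          ((symmDiff E (E.image (· + 1))).card : ℝ≥0∞) * μ {x | F x = E} := by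
      rw [lint_part]
      refine tsum_congr fun E => ?_
      rw [setLIntegral_congr_fun (hFmeas E)
        (fun x hx => by rw [show F x = E from hx]),
        setLIntegral_const]
    rw [hlint, ← ENNReal.tsum_mul_left]
    refine Summable.tsum_le_tsum (fun E => ?_) ENNReal.summable ENNReal.summable
    rw [hCB_def]
    calc ENNReal.ofReal ((μ {x | F x = E}).toReal * ((SRB7.bs E).card : ℝ)
          * ((m : ℝ) * Real.log (Fintype.card ι)))
        = ENNReal.ofReal ((m : ℝ) * Real.log (Fintype.card ι))
            * (μ {x | F x = E} * ((SRB7.bs E).card : ℝ≥0∞)) := by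
          rw [ENNReal.ofReal_mul (mul_nonneg ENNReal.toReal_nonneg (by positivity)),
            ENNReal.ofReal_mul ENNReal.toReal_nonneg, ENNReal.ofReal_toReal (measure_ne_top μ _),
            ENNReal.ofReal_natCast]
          ring
      _ ≤ ENNReal.ofReal (3 * m * Real.log (Fintype.card ι))
            * (((symmDiff E (E.image (· + 1))).card : ℝ≥0∞) * μ {x | F x = E}) := by
          refine mul_le_mul' (ENNReal.ofReal_le_ofReal ?_) ?_
          · nlinarith [hlogι, (show (0:ℝ) ≤ m by positivity)]
          · rw [mul_comm]
            refine mul_le_mul_left ?_ _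
            exact_mod_cast Finset.card_le_card (SRB7.bs_subset_symmDiff E)
  -- final assembly
  calc ∫⁻ x, ENNReal.ofReal (-Real.log ((μ {y | ∀ k ∈ F x, p ((⇑T)^[k] y) = p ((⇑T)^[k] x)}).toReal)) ∂μ
      ≤ ∑' E : Finset ℕ, ∑ h : ↥E → ι, SRB7.ww (⇑T) p F μ E h
          * ENNReal.ofReal (-Real.log (SRB7.ww (⇑T) p F μ E h).toReal) := stepA
    _ = ∑' E : Finset ℕ,
        (ENNReal.ofReal (-(μ {x | F x = E}).toReal * Real.log ((μ {x | F x = E}).toReal))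
          + ENNReal.ofReal (SRB7.HcE (⇑T) p F μ E)) :=
        tsum_congr fun E => SRB7.stepB (⇑T) p F μ hpBorel hTk E
    _ = (∑' E : Finset ℕ,
          ENNReal.ofReal (-(μ {x | F x = E}).toReal * Real.log ((μ {x | F x = E}).toReal)))
        + ∑' E : Finset ℕ, ENNReal.ofReal (SRB7.HcE (⇑T) p F μ E) := ENNReal.tsum_add
    _ ≤ (∑' E : Finset ℕ,
          ENNReal.ofReal (-(μ {x | F x = E}).toReal * Real.log ((μ {x | F x = E}).toReal)))
        + (ENNReal.ofReal ((c.toReal / m) * Hstat ν (codeIter T p (Finset.range m)))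
          + ENNReal.ofReal (3 * m * Real.log (Fintype.card ι)) *
            ∫⁻ x, ((symmDiff (F x) ((F x).image (· + 1))).card : ℝ≥0∞) ∂μ) := by
        refine add_le_add_right ?_ _
        calc ∑' E : Finset ℕ, ENNReal.ofReal (SRB7.HcE (⇑T) p F μ E)
            ≤ ∑' E : Finset ℕ, (ENNReal.ofReal (CA E) + ENNReal.ofReal (CB E)) := by
              refine Summable.tsum_le_tsum (fun E => ?_) ENNReal.summable ENNReal.summable
              rw [← ENNReal.ofReal_add (hCA0 E) (hCB0 E)]
              exact ENNReal.ofReal_le_ofReal (stepC E)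
          _ = (∑' E : Finset ℕ, ENNReal.ofReal (CA E))
              + ∑' E : Finset ℕ, ENNReal.ofReal (CB E) := ENNReal.tsum_add
          _ ≤ ENNReal.ofReal ((c.toReal / m) * Hstat ν (codeIter T p (Finset.range m)))
              + ENNReal.ofReal (3 * m * Real.log (Fintype.card ι)) *
                ∫⁻ x, ((symmDiff (F x) ((F x).image (· + 1))).card : ℝ≥0∞) ∂μ :=
              add_le_add (le_of_eq hTA) hTB
    _ = ENNReal.ofReal ((c.toReal / m) * Hstat ν (codeIter T p (Finset.range m)))
        + (∑' E : Finset ℕ,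
          ENNReal.ofReal (-(μ {x | F x = E}).toReal * Real.log ((μ {x | F x = E}).toReal)))
        + ENNReal.ofReal (3 * m * Real.log (Fintype.card ι)) *
            ∫⁻ x, ((symmDiff (F x) ((F x).image (· + 1))).card : ℝ≥0∞) ∂μ := by
        ring

end SRB
end
end
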